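/- arXiv:1501.03016 — 6 statements merged into one kernel-verified Lean document; each statement's English description precedes it below -/
import Mathlib

section
/- There exists an absolute constant C (one may take C = 11) such that for every odd integer n, there exists a bijection ψ : {0,1}^n → {0,1}^n that is a mapping from Majority to Dictator (i.e., Majority(z) = Dictator(ψ(z)) for every z ∈ {0,1}^n) and is C-Lipschitz, i.e., dist(ψ(x), ψ(y)) ≤ C · dist(x, y) for all x, y ∈ {0,1}^n. -/
/-- `Dictator(x) = x_1`, the first coordinate. -/
def dictator {n : ℕ} (x : Fin n → Bool) : Bool :=
  if h : 0 < n then x ⟨0, h⟩ else false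

/-- `Majority(x) = 1` iff the number of coordinates equal to `1` exceeds `n/2`. -/
def majority {n : ℕ} (x : Fin n → Bool) : Bool :=
  decide (n < 2 * (Finset.univ.filter (fun i => x i = true)).card)

namespace MajDict

/-- number of `true`s among the first `i` entries -/
def o (T : ℕ → Bool) (i : ℕ) : ℕ := ((Finset.range i).filter (fun p => T p = true)).card

/-- walk: #false − #true among first `i` entries -/
def g (T : ℕ → Bool) (i : ℕ) : ℤ := (i : ℤ) - 2 * o T i

lemma g_zero (T : ℕ → Bool) : g T 0 = 0 := by simp [g, o]

lemma o_succ (T : ℕ → Bool) (i : ℕ) :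
    o T (i+1) = o T i + (if T i then 1 else 0) := by
  unfold o
  rw [Finset.range_add_one, Finset.filter_insert]
  by_cases h : T i = true
  · rw [if_pos h, Finset.card_insert_of_notMem (by simp)]
    simp [h]
  · rw [if_neg h]
    simp [h]

lemma g_succ (T : ℕ → Bool) (i : ℕ) :
    g T (i+1) = g T i + (if T i then -1 else 1) := by
  unfold g
  rw [o_succ]
  by_cases h : T i <;> simp [h] <;> ring

lemma g_succ_true {T : ℕ → Bool} {i : ℕ} (h : T i = true) : g T (i+1) = g T i - 1 := by
  rw [g_succ, if_pos h]; ring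

lemma g_succ_false {T : ℕ → Bool} {i : ℕ} (h : T i = false) : g T (i+1) = g T i + 1 := by
  rw [g_succ, if_neg (by simp [h])]

/-- `p` is an unmatched zero (prefix strict record of the walk). -/
def isUZ (T : ℕ → Bool) (p : ℕ) : Prop := ∀ i ≤ p, g T i < g T (p+1)

/-- `p` is an unmatched one (suffix strict record of the walk up to `m`). -/
def isUO (m : ℕ) (T : ℕ → Bool) (p : ℕ) : Prop := ∀ i ≤ m, p < i → g T i < g T p

instance (T : ℕ → Bool) (p : ℕ) : Decidable (isUZ T p) := by
  unfold isUZ; infer_instance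

instance (m : ℕ) (T : ℕ → Bool) (p : ℕ) : Decidable (isUO m T p) := by
  unfold isUO; infer_instance

def UZ (m : ℕ) (T : ℕ → Bool) : Finset ℕ := (Finset.range m).filter (fun p => isUZ T p)
def UO (m : ℕ) (T : ℕ → Bool) : Finset ℕ := (Finset.range m).filter (fun p => isUO m T p)

lemma isUZ_false {T : ℕ → Bool} {p : ℕ} (h : isUZ T p) : T p = false := by
  have := h p le_rfl
  cases hb : T p with
  | false => rfl
  | true => rw [g_succ_true hb] at this; omega

lemma isUO_true {m : ℕ} {T : ℕ → Bool} {p : ℕ} (hp : p < m) (h : isUO m T p) : T p = true := by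
  have := h (p+1) (by omega) (by omega)
  cases hb : T p with
  | false => rw [g_succ_false hb] at this; omega
  | true => rfl

lemma UZ_UO_disjoint (m : ℕ) (T : ℕ → Bool) : Disjoint (UZ m T) (UO m T) := by
  rw [Finset.disjoint_left]
  intro p hz ho
  rw [UZ, Finset.mem_filter, Finset.mem_range] at hz
  rw [UO, Finset.mem_filter] at ho
  have h1 := isUZ_false hz.2
  have h2 := isUO_true hz.1 ho.2
  simp [h1] at h2

/-- unmatched zeros come before unmatched ones -/
lemma UZ_lt_UO {m : ℕ} {T : ℕ → Bool} {p q : ℕ} (hp : p ∈ UZ m T) (hq : q ∈ UO m T) :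
    p < q := by
  rw [UZ, Finset.mem_filter, Finset.mem_range] at hp
  rw [UO, Finset.mem_filter] at hq
  obtain ⟨hqm, hqo⟩ := hq
  rw [Finset.mem_range] at hqm
  by_contra hle
  have h1 : g T q < g T (p+1) := hp.2 q (by omega)
  have h2 : g T (p+1) < g T q := hqo (p+1) (by omega) (by omega)
  omega

def U (m : ℕ) (T : ℕ → Bool) : Finset ℕ := UZ m T ∪ UO m T

lemma U_subset_range (m : ℕ) (T : ℕ → Bool) : U m T ⊆ Finset.range m := by
  rw [U]
  exact Finset.union_subset (Finset.filter_subset _ _) (Finset.filter_subset _ _)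

def na (m : ℕ) (T : ℕ → Bool) : ℕ := (UZ m T).card
def nb (m : ℕ) (T : ℕ → Bool) : ℕ := (UO m T).card
def nu (m : ℕ) (T : ℕ → Bool) : ℕ := (U m T).card

lemma nu_eq (m : ℕ) (T : ℕ → Bool) : nu m T = na m T + nb m T := by
  rw [nu, na, nb, U, Finset.card_union_of_disjoint (UZ_UO_disjoint m T)]

/-- rank of a position among unmatched positions -/
def rk (m : ℕ) (T : ℕ → Bool) (p : ℕ) : ℕ := ((U m T).filter (fun q => q < p)).card


lemma mem_UZ {m : ℕ} {T : ℕ → Bool} {p : ℕ} : p ∈ UZ m T ↔ p < m ∧ isUZ T p := by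
  simp [UZ, Finset.mem_filter, Finset.mem_range]

lemma mem_UO {m : ℕ} {T : ℕ → Bool} {p : ℕ} : p ∈ UO m T ↔ p < m ∧ isUO m T p := by
  simp [UO, Finset.mem_filter, Finset.mem_range]

/-- generic: counting elements below `i+1` vs below `i` -/
lemma card_filter_lt_succ (S : Finset ℕ) (i : ℕ) :
    (S.filter (fun q => q < i+1)).card
      = (S.filter (fun q => q < i)).card + (if i ∈ S then 1 else 0) := by
  by_cases h : i ∈ S
  · rw [if_pos h]
    have he : S.filter (fun q => q < i+1) = insert i (S.filter (fun q => q < i)) := by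
      ext q
      simp only [Finset.mem_filter, Finset.mem_insert]
      constructor
      · rintro ⟨hq, hlt⟩
        rcases Nat.lt_succ_iff_lt_or_eq.mp hlt with h' | h'
        · exact Or.inr ⟨hq, h'⟩
        · exact Or.inl h'
      · rintro (rfl | ⟨hq, hlt⟩)
        · exact ⟨h, by omega⟩
        · exact ⟨hq, by omega⟩
    rw [he, Finset.card_insert_of_notMem (by simp)]
  · rw [if_neg h]
    congr 1
    ext q
    simp only [Finset.mem_filter]
    constructor
    · rintro ⟨hq, hlt⟩
      refine ⟨hq, ?_⟩
      rcases Nat.lt_succ_iff_lt_or_eq.mp hlt with h' | h'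
      · exact h'
      · exact absurd (h' ▸ hq) h
    · rintro ⟨hq, hlt⟩
      exact ⟨hq, by omega⟩

lemma card_filter_le_succ (S : Finset ℕ) (i : ℕ) :
    (S.filter (fun q => i ≤ q)).card
      = (S.filter (fun q => i+1 ≤ q)).card + (if i ∈ S then 1 else 0) := by
  by_cases h : i ∈ S
  · rw [if_pos h]
    have he : S.filter (fun q => i ≤ q) = insert i (S.filter (fun q => i+1 ≤ q)) := by
      ext q
      simp only [Finset.mem_filter, Finset.mem_insert]
      constructor
      · rintro ⟨hq, hle⟩
        rcases Nat.eq_or_lt_of_le hle with h' | h'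
        · exact Or.inl h'.symm
        · exact Or.inr ⟨hq, h'⟩
      · rintro (rfl | ⟨hq, hle⟩)
        · exact ⟨h, le_rfl⟩
        · exact ⟨hq, by omega⟩
    rw [he, Finset.card_insert_of_notMem (by simp)]
  · rw [if_neg h]
    congr 1
    ext q
    simp only [Finset.mem_filter]
    constructor
    · rintro ⟨hq, hle⟩
      refine ⟨hq, ?_⟩
      rcases Nat.eq_or_lt_of_le hle with h' | h'
      · exact absurd (h' ▸ hq) h
      · exact h'
    · rintro ⟨hq, hle⟩
      exact ⟨hq, by omega⟩

def rz (m : ℕ) (T : ℕ → Bool) (i : ℕ) : ℕ := ((UZ m T).filter (fun q => q < i)).card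
def so (m : ℕ) (T : ℕ → Bool) (i : ℕ) : ℕ := ((UO m T).filter (fun q => i ≤ q)).card

lemma rz_mono (m : ℕ) (T : ℕ → Bool) {i i' : ℕ} (h : i ≤ i') : rz m T i ≤ rz m T i' := by
  apply Finset.card_le_card
  intro q hq
  simp only [Finset.mem_filter] at *
  exact ⟨hq.1, by omega⟩

lemma so_antitone (m : ℕ) (T : ℕ → Bool) {i i' : ℕ} (h : i ≤ i') : so m T i' ≤ so m T i := by
  apply Finset.card_le_card
  intro q hq
  simp only [Finset.mem_filter] at *
  exact ⟨hq.1, by omega⟩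

lemma rz_le_na (m : ℕ) (T : ℕ → Bool) (i : ℕ) : rz m T i ≤ na m T :=
  Finset.card_le_card (Finset.filter_subset _ _)

lemma so_le_nb (m : ℕ) (T : ℕ → Bool) (i : ℕ) : so m T i ≤ nb m T :=
  Finset.card_le_card (Finset.filter_subset _ _)

lemma rz_m (m : ℕ) (T : ℕ → Bool) : rz m T m = na m T := by
  unfold rz na
  congr 1
  rw [Finset.filter_eq_self]
  intro q hq
  have := (mem_UZ.mp hq).1
  simpa using this

lemma so_zero (m : ℕ) (T : ℕ → Bool) : so m T 0 = nb m T := by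
  unfold so nb
  congr 1
  rw [Finset.filter_eq_self]
  intro q hq
  simp

/-- L3: the walk is bounded by the number of unmatched zeros seen so far -/
lemma g_le_rz (m : ℕ) (T : ℕ → Bool) : ∀ i, i ≤ m → g T i ≤ rz m T i := by
  intro i
  induction i using Nat.strong_induction_on with
  | _ i ih =>
    intro him
    match i with
    | 0 => simp [g_zero, rz]
    | (j+1) =>
      cases hb : T j with
      | true =>
        have h1 := ih j (by omega) (by omega)
        have h2 := rz_mono m T (show j ≤ j+1 by omega)
        rw [g_succ_true hb]
        push_cast
        omega
      | false =>
        by_cases hz : isUZ T j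
        · have hmem : j ∈ UZ m T := mem_UZ.mpr ⟨by omega, hz⟩
          have h1 := ih j (by omega) (by omega)
          have h2 : rz m T (j+1) = rz m T j + 1 := by
            unfold rz
            rw [card_filter_lt_succ, if_pos hmem]
          rw [g_succ_false hb]
          push_cast
          omega
        · unfold isUZ at hz
          push_neg at hz
          obtain ⟨i0, hi0le, hi0⟩ := hz
          have h1 := ih i0 (by omega) (by omega)
          have h2 := rz_mono m T (show i0 ≤ j+1 by omega)
          push_cast at *
          omega

/-- L4: suffix version -/
lemma g_le_so (m : ℕ) (T : ℕ → Bool) : ∀ d i, i ≤ m → m - i = d → g T i ≤ g T m + so m T i := by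
  intro d
  induction d using Nat.strong_induction_on with
  | _ d ih =>
    intro i him hd
    rcases Nat.eq_or_lt_of_le him with heq | hlt
    · rw [heq]
      have : (0:ℤ) ≤ so m T m := by positivity
      omega
    · cases hb : T i with
      | false =>
        have h1 := ih (m - (i+1)) (by omega) (i+1) (by omega) rfl
        have h2 := so_antitone m T (show i ≤ i+1 by omega)
        have h3 := g_succ_false hb
        push_cast at *
        omega
      | true =>
        by_cases ho : isUO m T i
        · have hmem : i ∈ UO m T := mem_UO.mpr ⟨hlt, ho⟩
          have h1 := ih (m - (i+1)) (by omega) (i+1) (by omega) rfl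
          have h2 : so m T i = so m T (i+1) + 1 := by
            unfold so
            rw [card_filter_le_succ, if_pos hmem]
          have h3 := g_succ_true hb
          push_cast at *
          omega
        · unfold isUO at ho
          push_neg at ho
          obtain ⟨i0, hi0le, hi0gt, hi0⟩ := ho
          have h1 := ih (m - i0) (by omega) i0 (by omega) rfl
          have h2 := so_antitone m T (show i ≤ i0 by omega)
          push_cast at *
          omega

/-- value at an unmatched-zero record -/
lemma g_UZ_val (m : ℕ) (T : ℕ → Bool) : ∀ p, p ∈ UZ m T → g T (p+1) = (rz m T p : ℤ) + 1 := by
  intro p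
  induction p using Nat.strong_induction_on with
  | _ p ih =>
    intro hp
    obtain ⟨hpm, hpz⟩ := mem_UZ.mp hp
    have hub : g T (p+1) ≤ (rz m T p : ℤ) + 1 := by
      have h1 := g_le_rz m T (p+1) (by omega)
      have h2 : rz m T (p+1) = rz m T p + 1 := by
        unfold rz; rw [card_filter_lt_succ, if_pos hp]
      push_cast at *
      omega
    set S := (UZ m T).filter (fun q => q < p) with hS
    rcases S.eq_empty_or_nonempty with hemp | hne
    · have hrz : rz m T p = 0 := by rw [rz, ← hS, hemp]; simp
      have h0 : g T 0 < g T (p+1) := hpz 0 (by omega)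
      rw [g_zero] at h0
      omega
    · set q := S.max' hne with hq
      have hqS : q ∈ S := S.max'_mem hne
      obtain ⟨hqz, hqlt⟩ := Finset.mem_filter.mp hqS
      have hSins : S = insert q ((UZ m T).filter (fun r => r < q)) := by
        ext r
        simp only [hS, Finset.mem_filter, Finset.mem_insert]
        constructor
        · rintro ⟨hr, hrlt⟩
          have : r ≤ q := S.le_max' r (Finset.mem_filter.mpr ⟨hr, hrlt⟩)
          rcases Nat.eq_or_lt_of_le this with h' | h'
          · exact Or.inl h'
          · exact Or.inr ⟨hr, h'⟩
        · rintro (rfl | ⟨hr, hrlt⟩)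
          · exact ⟨hqz, hqlt⟩
          · exact ⟨hr, by omega⟩
      have hrzp : rz m T p = rz m T q + 1 := by
        unfold rz
        rw [← hS, hSins, Finset.card_insert_of_notMem (by simp)]
      have hIH : g T (q+1) = (rz m T q : ℤ) + 1 := ih q hqlt hqz
      have hlb : g T (q+1) < g T (p+1) := hpz (q+1) (by omega)
      omega

/-- value at an unmatched-one record -/
lemma g_UO_val_aux (m : ℕ) (T : ℕ → Bool) :
    ∀ d p, m - p = d → p ∈ UO m T → g T p = g T m + (so m T p : ℤ) := by
  intro d
  induction d using Nat.strong_induction_on with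
  | _ d ih =>
    intro p hd hp
    obtain ⟨hpm, hpo⟩ := mem_UO.mp hp
    have hub : g T p ≤ g T m + (so m T p : ℤ) := g_le_so m T (m - p) p (by omega) rfl
    rcases ((UO m T).filter (fun q => p < q)).eq_empty_or_nonempty with hemp | hne
    · have hso : so m T p = 1 := by
        have hsing : (UO m T).filter (fun q => p ≤ q) = {p} := by
          ext r
          simp only [Finset.mem_filter, Finset.mem_singleton]
          constructor
          · rintro ⟨hr, hrle⟩
            by_contra hne'
            have hrS : r ∈ (UO m T).filter (fun q => p < q) :=
              Finset.mem_filter.mpr ⟨hr, by omega⟩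
            rw [hemp] at hrS
            exact absurd hrS (Finset.notMem_empty r)
          · rintro rfl
            exact ⟨hp, le_rfl⟩
        rw [so, hsing]
        simp
      have h0 : g T m < g T p := hpo m le_rfl hpm
      omega
    · obtain ⟨q, hqS⟩ := hne
      -- take the minimal one
      obtain ⟨q, hqS, hqmin⟩ :=
        Finset.exists_min_image ((UO m T).filter (fun r => p < r)) id ⟨q, hqS⟩
      obtain ⟨hqo, hqgt⟩ := Finset.mem_filter.mp hqS
      have hqm : q < m := (mem_UO.mp hqo).1
      have hsop : so m T p = so m T q + 1 := by
        have he : (UO m T).filter (fun r => p ≤ r)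
            = insert p ((UO m T).filter (fun r => q ≤ r)) := by
          ext r
          simp only [Finset.mem_filter, Finset.mem_insert]
          constructor
          · rintro ⟨hr, hrle⟩
            rcases Nat.eq_or_lt_of_le hrle with h' | h'
            · exact Or.inl h'.symm
            · refine Or.inr ⟨hr, ?_⟩
              exact hqmin r (Finset.mem_filter.mpr ⟨hr, h'⟩)
          · rintro (rfl | ⟨hr, hrle⟩)
            · exact ⟨hp, le_rfl⟩
            · exact ⟨hr, by omega⟩
        unfold so
        rw [he, Finset.card_insert_of_notMem (by simp; omega)]
      have hIH : g T q = g T m + (so m T q : ℤ) := ih (m - q) (by omega) q rfl hqo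
      have hlb : g T q < g T p := hpo q (by omega) hqgt
      omega

lemma g_UO_val (m : ℕ) (T : ℕ → Bool) (p : ℕ) (hp : p ∈ UO m T) :
    g T p = g T m + (so m T p : ℤ) := g_UO_val_aux m T (m - p) p rfl hp

/-- the central identity: (number of unmatched zeros) − (number of unmatched ones) = g m -/
lemma na_sub_nb (m : ℕ) (T : ℕ → Bool) : (na m T : ℤ) - nb m T = g T m := by
  have h1 : g T m ≤ na m T := by
    have := g_le_rz m T m le_rfl
    rw [rz_m] at this
    exact this
  -- na ≤ g m + nb
  have h2 : (na m T : ℤ) ≤ g T m + nb m T := by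
    rcases (UZ m T).eq_empty_or_nonempty with hemp | hne
    · have : na m T = 0 := by rw [na, hemp]; simp
      have h4 := g_le_so m T m 0 (by omega) (by omega)
      rw [g_zero, so_zero] at h4
      omega
    · set p := (UZ m T).max' hne with hp
      have hpmem : p ∈ UZ m T := (UZ m T).max'_mem hne
      have hpm : p < m := (mem_UZ.mp hpmem).1
      have hval : g T (p+1) = (rz m T p : ℤ) + 1 := g_UZ_val m T p hpmem
      have hrzp : rz m T p = na m T - 1 ∧ 1 ≤ na m T := by
        have he : UZ m T = insert p ((UZ m T).filter (fun q => q < p)) := by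
          ext r
          simp only [Finset.mem_insert, Finset.mem_filter]
          constructor
          · intro hr
            have := (UZ m T).le_max' r hr
            rcases Nat.eq_or_lt_of_le this with h' | h'
            · exact Or.inl (by omega)
            · exact Or.inr ⟨hr, by omega⟩
          · rintro (rfl | ⟨hr, _⟩)
            · exact hpmem
            · exact hr
        have : na m T = rz m T p + 1 := by
          rw [na]
          conv_lhs => rw [he]
          rw [Finset.card_insert_of_notMem (by simp)]
          rfl
        omega
      have h4 := g_le_so m T (m - (p+1)) (p+1) (by omega) rfl
      have h5 := so_le_nb m T (p+1)
      push_cast at *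
      omega
  -- nb ≤ na − g m
  have h3 : (nb m T : ℤ) ≤ (na m T : ℤ) - g T m := by
    rcases (UO m T).eq_empty_or_nonempty with hemp | hne
    · have : nb m T = 0 := by rw [nb, hemp]; simp
      omega
    · set q := (UO m T).min' hne with hq
      have hqmem : q ∈ UO m T := (UO m T).min'_mem hne
      have hval : g T q = g T m + (so m T q : ℤ) := g_UO_val m T q hqmem
      have hsoq : so m T q = nb m T := by
        unfold so nb
        congr 1
        rw [Finset.filter_eq_self]
        intro r hr
        exact (UO m T).min'_le r hr
      have h4 := g_le_rz m T q (by have := (mem_UO.mp hqmem).1; omega)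
      have h5 := rz_le_na m T q
      push_cast at *
      omega
  omega

lemma rk_le_nu (m : ℕ) (T : ℕ → Bool) (i : ℕ) : rk m T i ≤ nu m T :=
  Finset.card_le_card (Finset.filter_subset _ _)

lemma rk_mono (m : ℕ) (T : ℕ → Bool) {i i' : ℕ} (h : i ≤ i') : rk m T i ≤ rk m T i' := by
  apply Finset.card_le_card
  intro q hq
  simp only [Finset.mem_filter] at *
  exact ⟨hq.1, by omega⟩

lemma rk_succ_mem {m : ℕ} {T : ℕ → Bool} {p : ℕ} (hp : p ∈ U m T) :
    rk m T (p+1) = rk m T p + 1 := by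
  unfold rk
  rw [card_filter_lt_succ, if_pos hp]

lemma rk_succ_not_mem {m : ℕ} {T : ℕ → Bool} {p : ℕ} (hp : p ∉ U m T) :
    rk m T (p+1) = rk m T p := by
  unfold rk
  rw [card_filter_lt_succ, if_neg hp]
  omega

lemma rk_lt_of_mem_lt {m : ℕ} {T : ℕ → Bool} {p i : ℕ} (hp : p ∈ U m T) (h : p < i) :
    rk m T p < rk m T i := by
  have h1 := rk_succ_mem hp
  have h2 := rk_mono m T (show p+1 ≤ i by omega)
  omega

lemma rk_lt_nu {m : ℕ} {T : ℕ → Bool} {p : ℕ} (hp : p ∈ U m T) : rk m T p < nu m T := by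
  have h1 := rk_succ_mem hp
  have h2 := rk_le_nu m T (p+1)
  omega

lemma lt_iff_rk_lt {m : ℕ} {T : ℕ → Bool} {p i : ℕ} (hp : p ∈ U m T) :
    p < i ↔ rk m T p < rk m T i := by
  constructor
  · exact rk_lt_of_mem_lt hp
  · intro h
    by_contra hle
    have := rk_mono m T (show i ≤ p by omega)
    omega

lemma rk_injOn {m : ℕ} {T : ℕ → Bool} {p q : ℕ} (hp : p ∈ U m T) (hq : q ∈ U m T)
    (h : rk m T p = rk m T q) : p = q := by
  rcases Nat.lt_trichotomy p q with h' | h' | h'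
  · have := rk_lt_of_mem_lt hp h'; omega
  · exact h'
  · have := rk_lt_of_mem_lt hq h'; omega

lemma rk_surj {m : ℕ} {T : ℕ → Bool} {r : ℕ} (hr : r < nu m T) :
    ∃ p ∈ U m T, rk m T p = r := by
  have := Finset.surj_on_of_inj_on_of_card_le
    (s := U m T) (t := Finset.range (nu m T))
    (fun p _ => rk m T p)
    (fun p hp => Finset.mem_range.mpr (rk_lt_nu hp))
    (fun p q hp hq hpq => rk_injOn hp hq hpq)
    (by rw [Finset.card_range]; exact le_rfl)
  obtain ⟨p, hp, hpr⟩ := this r (Finset.mem_range.mpr hr)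
  exact ⟨p, hp, hpr.symm⟩

/-- number of unmatched positions below `i` with rank `< w`, for `w ≤ rk i` -/
lemma card_rk_lt (m : ℕ) (T : ℕ → Bool) (w : ℕ) (hw : w ≤ nu m T) :
    ((U m T).filter (fun p => rk m T p < w)).card = w := by
  conv_rhs => rw [← Finset.card_range w]
  apply Finset.card_bij (fun p _ => rk m T p)
  · intro p hp
    simp only [Finset.mem_filter] at hp
    exact Finset.mem_range.mpr hp.2
  · intro p hp q hq hpq
    simp only [Finset.mem_filter] at hp hq
    exact rk_injOn hp.1 hq.1 hpq
  · intro r hrr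
    rw [Finset.mem_range] at hrr
    obtain ⟨p, hp, hpr⟩ := rk_surj (show r < nu m T by omega)
    exact ⟨p, Finset.mem_filter.mpr ⟨hp, by omega⟩, hpr⟩

lemma card_lt_and_rk_lt (m : ℕ) (T : ℕ → Bool) (z i : ℕ) :
    ((U m T).filter (fun p => p < i ∧ rk m T p < z)).card = min z (rk m T i) := by
  have he : (U m T).filter (fun p => p < i ∧ rk m T p < z)
      = (U m T).filter (fun p => rk m T p < min z (rk m T i)) := by
    ext p
    simp only [Finset.mem_filter]
    constructor
    · rintro ⟨hp, hlt, hz⟩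
      exact ⟨hp, lt_min hz (rk_lt_of_mem_lt hp hlt)⟩
    · rintro ⟨hp, hlt⟩
      rw [lt_min_iff] at hlt
      exact ⟨hp, (lt_iff_rk_lt hp).mpr hlt.2, hlt.1⟩
  rw [he, card_rk_lt]
  have := rk_le_nu m T i
  omega

lemma card_lt_and_rk_ge (m : ℕ) (T : ℕ → Bool) (z i : ℕ) :
    ((U m T).filter (fun p => p < i ∧ z ≤ rk m T p)).card = rk m T i - min z (rk m T i) := by
  have hsplit : rk m T i = ((U m T).filter (fun p => p < i ∧ rk m T p < z)).card
      + ((U m T).filter (fun p => p < i ∧ z ≤ rk m T p)).card := by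
    have hdef : rk m T i = ((U m T).filter (fun q => q < i)).card := rfl
    rw [hdef, ← Finset.card_union_of_disjoint]
    · congr 1
      ext p
      simp only [Finset.mem_filter, Finset.mem_union]
      constructor
      · rintro ⟨hp, hlt⟩
        by_cases hz : rk m T p < z
        · exact Or.inl ⟨hp, hlt, hz⟩
        · exact Or.inr ⟨hp, hlt, by omega⟩
      · rintro (⟨hp, hlt, _⟩ | ⟨hp, hlt, _⟩) <;> exact ⟨hp, hlt⟩
    · rw [Finset.disjoint_left]
      rintro p hp hq
      simp only [Finset.mem_filter] at hp hq
      omega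
  rw [card_lt_and_rk_lt] at hsplit
  omega

lemma UZ_eq_rk_lt (m : ℕ) (T : ℕ → Bool) :
    UZ m T = (U m T).filter (fun p => rk m T p < na m T) := by
  ext p
  simp only [Finset.mem_filter]
  constructor
  · intro hp
    refine ⟨Finset.mem_union_left _ hp, ?_⟩
    have hsub : (U m T).filter (fun q => q < p) ⊆ (UZ m T).erase p := by
      intro q hq
      simp only [Finset.mem_filter] at hq
      rcases Finset.mem_union.mp hq.1 with hqz | hqo
      · exact Finset.mem_erase.mpr ⟨by omega, hqz⟩
      · exact absurd (UZ_lt_UO hp hqo) (by omega)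
    have h1 : rk m T p ≤ (UZ m T).card - 1 := by
      have h2 := Finset.card_le_card hsub
      have h3 : ((UZ m T).erase p).card = (UZ m T).card - 1 :=
        Finset.card_erase_of_mem hp
      unfold rk
      omega
    have h4 : 0 < (UZ m T).card := Finset.card_pos.mpr ⟨p, hp⟩
    unfold na
    omega
  · rintro ⟨hp, hrk⟩
    rcases Finset.mem_union.mp hp with hpz | hpo
    · exact hpz
    · exfalso
      have hsub : UZ m T ⊆ (U m T).filter (fun q => q < p) := by
        intro q hq
        exact Finset.mem_filter.mpr ⟨Finset.mem_union_left _ hq, UZ_lt_UO hq hpo⟩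
      have hcc := Finset.card_le_card hsub
      have hrkdef : rk m T p = ((U m T).filter (fun q => q < p)).card := rfl
      unfold na at hrk
      omega

lemma UO_eq_rk_ge (m : ℕ) (T : ℕ → Bool) :
    UO m T = (U m T).filter (fun p => na m T ≤ rk m T p) := by
  have hdis := UZ_UO_disjoint m T
  ext p
  simp only [Finset.mem_filter]
  constructor
  · intro hp
    have hpU : p ∈ U m T := Finset.mem_union_right _ hp
    refine ⟨hpU, ?_⟩
    by_contra hlt
    have : p ∈ UZ m T := by
      rw [UZ_eq_rk_lt]
      exact Finset.mem_filter.mpr ⟨hpU, by omega⟩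
    exact (Finset.disjoint_left.mp hdis this) hp
  · rintro ⟨hp, hge⟩
    rcases Finset.mem_union.mp hp with hpz | hpo
    · exfalso
      have : p ∈ (U m T).filter (fun q => rk m T q < na m T) := by
        rw [← UZ_eq_rk_lt]; exact hpz
      simp only [Finset.mem_filter] at this
      omega
    · exact hpo

lemma rk_of_UZ {m : ℕ} {T : ℕ → Bool} {p : ℕ} (hp : p ∈ UZ m T) :
    rk m T p = rz m T p := by
  unfold rk rz
  congr 1
  ext q
  simp only [Finset.mem_filter]
  constructor
  · rintro ⟨hq, hlt⟩
    rcases Finset.mem_union.mp hq with hqz | hqo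
    · exact ⟨hqz, hlt⟩
    · exact absurd (UZ_lt_UO hp hqo) (by omega)
  · rintro ⟨hq, hlt⟩
    exact ⟨Finset.mem_union_left _ hq, hlt⟩

lemma rk_of_UO {m : ℕ} {T : ℕ → Bool} {p : ℕ} (hp : p ∈ UO m T) :
    rk m T p = na m T + (nb m T - so m T p) ∧ so m T p ≤ nb m T := by
  refine ⟨?_, so_le_nb m T p⟩
  have hsplit : (U m T).filter (fun q => q < p)
      = UZ m T ∪ (UO m T).filter (fun q => q < p) := by
    ext q
    simp only [Finset.mem_filter, Finset.mem_union]
    constructor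
    · rintro ⟨hq, hlt⟩
      rcases Finset.mem_union.mp hq with hqz | hqo
      · exact Or.inl hqz
      · exact Or.inr ⟨hqo, hlt⟩
    · rintro (hqz | ⟨hqo, hlt⟩)
      · exact ⟨Finset.mem_union_left _ hqz, UZ_lt_UO hqz hp⟩
      · exact ⟨Finset.mem_union_right _ hqo, hlt⟩
  have hdisj : Disjoint (UZ m T) ((UO m T).filter (fun q => q < p)) :=
    (UZ_UO_disjoint m T).mono_right (Finset.filter_subset _ _)
  have h1 : rk m T p = na m T + ((UO m T).filter (fun q => q < p)).card := by
    unfold rk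
    rw [hsplit, Finset.card_union_of_disjoint hdisj]
    rfl
  have hdisj2 : Disjoint ((UO m T).filter (fun q => q < p))
      ((UO m T).filter (fun q => p ≤ q)) := by
    rw [Finset.disjoint_left]
    rintro q hq hq'
    simp only [Finset.mem_filter] at hq hq'
    omega
  have h2 : ((UO m T).filter (fun q => q < p)).card + so m T p = nb m T := by
    unfold so nb
    rw [← Finset.card_union_of_disjoint hdisj2]
    congr 1
    ext q
    simp only [Finset.mem_filter, Finset.mem_union]
    constructor
    · rintro (⟨hq, _⟩ | ⟨hq, _⟩) <;> exact hq
    · intro hq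
      by_cases hlt : q < p
      · exact Or.inl ⟨hq, hlt⟩
      · exact Or.inr ⟨hq, by omega⟩
  omega

/-- rewrite the unmatched word: unmatched positions of rank `≥ z` become `true` -/
def RW (m : ℕ) (T : ℕ → Bool) (z : ℕ) : ℕ → Bool :=
  fun p => if p ∈ U m T then decide (z ≤ rk m T p) else T p

lemma bool_of_memU {m : ℕ} {T : ℕ → Bool} {p : ℕ} (hp : p ∈ U m T) :
    T p = decide (na m T ≤ rk m T p) := by
  rcases Finset.mem_union.mp hp with hpz | hpo
  · have h1 := isUZ_false (mem_UZ.mp hpz).2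
    have h2 : rk m T p < na m T := by
      have := UZ_eq_rk_lt m T
      rw [this] at hpz
      exact (Finset.mem_filter.mp hpz).2
    simp [h1]
    omega
  · have h1 := isUO_true (mem_UO.mp hpo).1 (mem_UO.mp hpo).2
    have h2 : na m T ≤ rk m T p := by
      have := UO_eq_rk_ge m T
      rw [this] at hpo
      exact (Finset.mem_filter.mp hpo).2
    simp [h1, h2]

lemma g_RW (m : ℕ) (T : ℕ → Bool) (z : ℕ) (i : ℕ) :
    g (RW m T z) i
      = g T i + 2 * ((min z (rk m T i) : ℤ) - (min (na m T) (rk m T i) : ℤ)) := by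
  induction i with
  | zero =>
    have : rk m T 0 = 0 := by
      unfold rk
      rw [Finset.card_eq_zero]
      ext q; simp
    rw [g_zero, g_zero, this]
    simp
  | succ i ih =>
    by_cases hU : i ∈ U m T
    · have hrk := rk_succ_mem hU
      have hT : T i = decide (na m T ≤ rk m T i) := bool_of_memU hU
      have hRW : RW m T z i = decide (z ≤ rk m T i) := by
        unfold RW
        rw [if_pos hU]
      rw [g_succ, g_succ, hT, hRW, ih, hrk]
      by_cases h1 : z ≤ rk m T i <;> by_cases h2 : na m T ≤ rk m T i <;>
        simp [h1, h2] <;> push_cast <;> omega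
    · have hrk := rk_succ_not_mem hU
      have hRW : RW m T z i = T i := by
        unfold RW
        rw [if_neg hU]
      rw [g_succ, g_succ, hRW, ih, hrk]
      ring

lemma rz_eq_min (m : ℕ) (T : ℕ → Bool) (i : ℕ) :
    rz m T i = min (na m T) (rk m T i) := by
  have he : (UZ m T).filter (fun q => q < i)
      = (U m T).filter (fun p => p < i ∧ rk m T p < na m T) := by
    rw [UZ_eq_rk_lt]
    ext q
    simp only [Finset.mem_filter]
    tauto
  rw [rz, he, card_lt_and_rk_lt]

lemma soUO_eq (m : ℕ) (T : ℕ → Bool) (i : ℕ) :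
    so m T i + (rk m T i - min (na m T) (rk m T i)) = nb m T
      ∧ min (na m T) (rk m T i) ≤ rk m T i := by
  constructor
  · have he : (UO m T).filter (fun q => q < i)
        = (U m T).filter (fun p => p < i ∧ na m T ≤ rk m T p) := by
      rw [UO_eq_rk_ge]
      ext q
      simp only [Finset.mem_filter]
      tauto
    have h1 : ((UO m T).filter (fun q => q < i)).card
        = rk m T i - min (na m T) (rk m T i) := by
      rw [he, card_lt_and_rk_ge]
    have h2 : ((UO m T).filter (fun q => q < i)).card + so m T i = nb m T := by
      unfold so nb
      rw [← Finset.card_union_of_disjoint (by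
        rw [Finset.disjoint_left]
        rintro q hq hq'
        simp only [Finset.mem_filter] at hq hq'
        omega)]
      congr 1
      ext q
      simp only [Finset.mem_filter, Finset.mem_union]
      constructor
      · rintro (⟨hq, _⟩ | ⟨hq, _⟩) <;> exact hq
      · intro hq
        by_cases hlt : q < i
        · exact Or.inl ⟨hq, hlt⟩
        · exact Or.inr ⟨hq, by omega⟩
    omega
  · omega

/-- the two fundamental upper bounds for the rewritten walk -/
lemma g_RW_le (m : ℕ) (T : ℕ → Bool) (z : ℕ) (i : ℕ) (him : i ≤ m) :
    g (RW m T z) i ≤ min (z : ℤ) (rk m T i)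
      ∧ g (RW m T z) i ≤ 2 * (z:ℤ) - rk m T i := by
  have h0 := g_RW m T z i
  have h1 := g_le_rz m T i him
  have h2 := rz_eq_min m T i
  have h3 := g_le_so m T (m - i) i him rfl
  have h4 := (soUO_eq m T i).1
  have h5 := na_sub_nb m T
  have h6 := rk_le_nu m T i
  rw [h2] at h1
  push_cast at *
  omega

/-- values of the rewritten walk at unmatched positions -/
lemma g_RW_val_lt {m : ℕ} {T : ℕ → Bool} {z : ℕ} {p : ℕ} (hp : p ∈ U m T)
    (hz : rk m T p < z) : g (RW m T z) (p+1) = (rk m T p : ℤ) + 1 := by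
  have h0 := g_RW m T z (p+1)
  have hrk := rk_succ_mem hp
  have h5 := na_sub_nb m T
  rcases Finset.mem_union.mp hp with hpz | hpo
  · have hval := g_UZ_val m T p hpz
    have hrz : rk m T p = rz m T p := rk_of_UZ hpz
    have hna : rk m T p < na m T := by
      rw [UZ_eq_rk_lt] at hpz
      exact (Finset.mem_filter.mp hpz).2
    rw [hrk] at h0
    push_cast at *
    omega
  · have hval := g_UO_val m T p hpo
    obtain ⟨hro, hso⟩ := rk_of_UO hpo
    have hna : na m T ≤ rk m T p := by
      rw [UO_eq_rk_ge] at hpo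
      exact (Finset.mem_filter.mp hpo).2
    have hstep : g T (p+1) = g T p - 1 := g_succ_true (isUO_true (mem_UO.mp hpo).1 (mem_UO.mp hpo).2)
    rw [hrk] at h0
    push_cast at *
    omega

lemma g_RW_val_ge {m : ℕ} {T : ℕ → Bool} {z : ℕ} {p : ℕ} (hp : p ∈ U m T)
    (hz : z ≤ rk m T p) : g (RW m T z) p = 2*(z:ℤ) - rk m T p := by
  have h0 := g_RW m T z p
  have h5 := na_sub_nb m T
  rcases Finset.mem_union.mp hp with hpz | hpo
  · have hval := g_UZ_val m T p hpz
    have hrz : rk m T p = rz m T p := rk_of_UZ hpz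
    have hna : rk m T p < na m T := by
      rw [UZ_eq_rk_lt] at hpz
      exact (Finset.mem_filter.mp hpz).2
    have hstep : g T (p+1) = g T p + 1 := g_succ_false (isUZ_false (mem_UZ.mp hpz).2)
    push_cast at *
    omega
  · have hval := g_UO_val m T p hpo
    obtain ⟨hro, hso⟩ := rk_of_UO hpo
    have hna : na m T ≤ rk m T p := by
      rw [UO_eq_rk_ge] at hpo
      exact (Finset.mem_filter.mp hpo).2
    push_cast at *
    omega

lemma exists_na_val (m : ℕ) (T : ℕ → Bool) :
    na m T = 0 ∨ ∃ p, p < m ∧ g T (p+1) = (na m T : ℤ) := by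
  rcases (UZ m T).eq_empty_or_nonempty with hemp | hne
  · left; rw [na, hemp]; simp
  · right
    set p := (UZ m T).max' hne with hp
    have hpmem : p ∈ UZ m T := (UZ m T).max'_mem hne
    have hpm : p < m := (mem_UZ.mp hpmem).1
    refine ⟨p, hpm, ?_⟩
    have hval : g T (p+1) = (rz m T p : ℤ) + 1 := g_UZ_val m T p hpmem
    have he : UZ m T = insert p ((UZ m T).filter (fun q => q < p)) := by
      ext r
      simp only [Finset.mem_insert, Finset.mem_filter]
      constructor
      · intro hr
        have := (UZ m T).le_max' r hr
        rcases Nat.eq_or_lt_of_le this with h' | h'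
        · exact Or.inl (by omega)
        · exact Or.inr ⟨hr, by omega⟩
      · rintro (rfl | ⟨hr, _⟩)
        · exact hpmem
        · exact hr
    have hna : na m T = rz m T p + 1 := by
      rw [na]
      conv_lhs => rw [he]
      rw [Finset.card_insert_of_notMem (by simp)]
      rfl
    rw [hval, hna]
    push_cast
    ring

lemma rk_m_eq_nu (m : ℕ) (T : ℕ → Bool) : rk m T m = nu m T := by
  unfold rk nu
  congr 1
  rw [Finset.filter_eq_self]
  intro q hq
  have := U_subset_range m T hq
  simpa using this

variable {m : ℕ} {T : ℕ → Bool} {z : ℕ}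

lemma UZ_RW (hz : z ≤ nu m T) :
    UZ m (RW m T z) = (U m T).filter (fun p => rk m T p < z) := by
  have hinc : (U m T).filter (fun p => rk m T p < z) ⊆ UZ m (RW m T z) := by
    intro p hp
    obtain ⟨hpU, hlt⟩ := Finset.mem_filter.mp hp
    have hpm : p < m := Finset.mem_range.mp (U_subset_range m T hpU)
    refine mem_UZ.mpr ⟨hpm, ?_⟩
    intro i hip
    have h1 : g (RW m T z) (p+1) = (rk m T p : ℤ) + 1 := g_RW_val_lt hpU hlt
    have h2 := (g_RW_le m T z i (by omega)).1
    have h3 := rk_mono m T (show i ≤ p by omega)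
    rw [h1]
    push_cast at *
    omega
  have hcard : ((U m T).filter (fun p => rk m T p < z)).card = z := card_rk_lt m T z hz
  -- na of RW ≤ z
  have hna_le : na m (RW m T z) ≤ z := by
    rcases exists_na_val m (RW m T z) with h0 | ⟨p, hpm, hval⟩
    · omega
    · have h2 := (g_RW_le m T z (p+1) (by omega)).1
      rw [hval] at h2
      have : (min (z:ℤ) (rk m T (p+1))) ≤ z := by
        push_cast
        omega
      omega
  refine (Finset.eq_of_subset_of_card_le hinc ?_).symm
  rw [hcard]
  exact hna_le

lemma UO_RW (hz : z ≤ nu m T) :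
    UO m (RW m T z) = (U m T).filter (fun p => z ≤ rk m T p) := by
  have hinc : (U m T).filter (fun p => z ≤ rk m T p) ⊆ UO m (RW m T z) := by
    intro p hp
    obtain ⟨hpU, hge⟩ := Finset.mem_filter.mp hp
    have hpm : p < m := Finset.mem_range.mp (U_subset_range m T hpU)
    refine mem_UO.mpr ⟨hpm, ?_⟩
    intro i him hpi
    have h1 : g (RW m T z) p = 2*(z:ℤ) - rk m T p := g_RW_val_ge hpU hge
    have h2 := (g_RW_le m T z i him).2
    have h3 : rk m T p + 1 ≤ rk m T i := by
      have := rk_succ_mem hpU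
      have := rk_mono m T (show p+1 ≤ i by omega)
      omega
    rw [h1]
    push_cast at *
    omega
  have hsplitcard : ((U m T).filter (fun p => rk m T p < z)).card
      + ((U m T).filter (fun p => z ≤ rk m T p)).card = nu m T := by
    rw [← Finset.card_union_of_disjoint (by
      rw [Finset.disjoint_left]
      rintro q hq hq'
      simp only [Finset.mem_filter] at hq hq'
      omega)]
    rw [nu]
    congr 1
    ext q
    simp only [Finset.mem_filter, Finset.mem_union]
    constructor
    · rintro (⟨hq, _⟩ | ⟨hq, _⟩) <;> exact hq
    · intro hq
      by_cases hlt : rk m T q < z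
      · exact Or.inl ⟨hq, hlt⟩
      · exact Or.inr ⟨hq, by omega⟩
  have hcard2 : ((U m T).filter (fun p => z ≤ rk m T p)).card = nu m T - z := by
    have := card_rk_lt m T z hz
    omega
  -- nb of RW
  have hgm : g (RW m T z) m = 2*(z:ℤ) - nu m T := by
    have h0 := g_RW m T z m
    have h3 : na m T ≤ nu m T := by rw [nu_eq]; omega
    rw [rk_m_eq_nu m T] at h0
    have h3' : na m T ≤ nu m T := h3
    rw [min_eq_left (show (z:ℤ) ≤ (nu m T:ℤ) by exact_mod_cast hz),
        min_eq_left (show ((na m T):ℤ) ≤ (nu m T:ℤ) by exact_mod_cast h3')] at h0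
    have h2 := na_sub_nb m T
    have h4 := nu_eq m T
    omega
  have hnb : (na m (RW m T z) : ℤ) - nb m (RW m T z) = 2*(z:ℤ) - nu m T := by
    rw [na_sub_nb m (RW m T z), hgm]
  have hna : na m (RW m T z) = z := by
    have := UZ_RW hz
    have : na m (RW m T z) = ((U m T).filter (fun p => rk m T p < z)).card := by
      rw [na, this]
    rw [this, card_rk_lt m T z hz]
  refine (Finset.eq_of_subset_of_card_le hinc ?_).symm
  rw [hcard2]
  have hnbdef : nb m (RW m T z) = (UO m (RW m T z)).card := rfl
  omega

lemma U_RW (hz : z ≤ nu m T) : U m (RW m T z) = U m T := by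
  rw [U, UZ_RW hz, UO_RW hz]
  ext q
  simp only [Finset.mem_filter, Finset.mem_union]
  constructor
  · rintro (⟨hq, _⟩ | ⟨hq, _⟩) <;> exact hq
  · intro hq
    by_cases hlt : rk m T q < z
    · exact Or.inl ⟨hq, hlt⟩
    · exact Or.inr ⟨hq, by omega⟩

lemma rk_RW (hz : z ≤ nu m T) (p : ℕ) : rk m (RW m T z) p = rk m T p := by
  unfold rk
  rw [U_RW hz]

lemma na_RW (hz : z ≤ nu m T) : na m (RW m T z) = z := by
  rw [na, UZ_RW hz, card_rk_lt m T z hz]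

lemma nb_RW (hz : z ≤ nu m T) : nb m (RW m T z) = nu m T - z := by
  rw [nb, UO_RW hz]
  have h1 := card_rk_lt m T z hz
  have hsplitcard : ((U m T).filter (fun p => rk m T p < z)).card
      + ((U m T).filter (fun p => z ≤ rk m T p)).card = nu m T := by
    rw [← Finset.card_union_of_disjoint (by
      rw [Finset.disjoint_left]
      rintro q hq hq'
      simp only [Finset.mem_filter] at hq hq'
      omega)]
    rw [nu]
    congr 1
    ext q
    simp only [Finset.mem_filter, Finset.mem_union]
    constructor
    · rintro (⟨hq, _⟩ | ⟨hq, _⟩) <;> exact hq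
    · intro hq
      by_cases hlt : rk m T q < z
      · exact Or.inl ⟨hq, hlt⟩
      · exact Or.inr ⟨hq, by omega⟩
  omega

lemma nu_RW (hz : z ≤ nu m T) : nu m (RW m T z) = nu m T := by
  unfold nu
  rw [U_RW hz]

lemma RW_self : RW m T (na m T) = T := by
  funext p
  unfold RW
  by_cases hp : p ∈ U m T
  · rw [if_pos hp, (bool_of_memU hp).symm]
  · rw [if_neg hp]

lemma RW_apply (m : ℕ) (T : ℕ → Bool) (z : ℕ) (p : ℕ) :
    RW m T z p = if p ∈ U m T then decide (z ≤ rk m T p) else T p := rfl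

lemma RW_RW (hz : z ≤ nu m T) (z2 : ℕ) : RW m (RW m T z) z2 = RW m T z2 := by
  funext p
  rw [RW_apply m (RW m T z) z2 p, U_RW hz, rk_RW hz, RW_apply m T z2 p]
  by_cases hp : p ∈ U m T
  · rw [if_pos hp, if_pos hp]
  · rw [if_neg hp, if_neg hp, RW_apply, if_neg hp]

section Flip

variable {m q : ℕ} {T T' : ℕ → Bool}

/-- hypothesis: `T'` is `T` with position `q` flipped from `false` to `true` -/
def FlipUp (m q : ℕ) (T T' : ℕ → Bool) : Prop :=
  q < m ∧ T q = false ∧ T' q = true ∧ ∀ p, p ≠ q → T' p = T p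

lemma flip_g (hf : FlipUp m q T T') :
    ∀ i, (i ≤ q → g T' i = g T i) ∧ (q < i → g T' i = g T i - 2) := by
  obtain ⟨hqm, hTq, hTq', hoff⟩ := hf
  intro i
  induction i with
  | zero => constructor <;> intro h <;> [rw [g_zero, g_zero]; omega]
  | succ i ih =>
    constructor
    · intro h
      have h1 : T' i = T i := hoff i (by omega)
      rw [g_succ, g_succ, h1, ih.1 (by omega)]
    · intro h
      by_cases hi : i = q
      · subst hi
        rw [g_succ_true hTq', g_succ_false hTq, ih.1 le_rfl]
        ring
      · have h1 : T' i = T i := hoff i hi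
        rw [g_succ, g_succ, h1, ih.2 (by omega)]
        ring

lemma flip_UZ (hf : FlipUp m q T T') : UZ m T' ⊆ UZ m T := by
  intro p hp
  obtain ⟨hpm, hpz⟩ := mem_UZ.mp hp
  refine mem_UZ.mpr ⟨hpm, ?_⟩
  intro i hi
  have h0 := hpz i hi
  have e1 := flip_g hf i
  have e2 := flip_g hf (p+1)
  by_cases hiq : i ≤ q <;> by_cases hpq : p + 1 ≤ q
  · rw [e1.1 (by omega), e2.1 (by omega)] at h0; omega
  · rw [e1.1 (by omega), e2.2 (by omega)] at h0; omega
  · omega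
  · rw [e1.2 (by omega), e2.2 (by omega)] at h0; omega

lemma flip_UO (hf : FlipUp m q T T') : UO m T ⊆ UO m T' := by
  intro p hp
  obtain ⟨hpm, hpo⟩ := mem_UO.mp hp
  have hpq : p ≠ q := by
    intro h
    have := isUO_true hpm hpo
    rw [h, hf.2.1] at this
    exact absurd this (by simp)
  refine mem_UO.mpr ⟨hpm, ?_⟩
  intro i him hpi
  have h0 := hpo i him hpi
  have e1 := flip_g hf i
  have e2 := flip_g hf p
  by_cases hiq : i ≤ q <;> by_cases hpq2 : p ≤ q
  · rw [e1.1 (by omega), e2.1 (by omega)]; omega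
  · omega
  · rw [e1.2 (by omega), e2.1 (by omega)]; omega
  · rw [e1.2 (by omega), e2.2 (by omega)]; omega

lemma flip_counts (hf : FlipUp m q T T') :
    na m T' ≤ na m T ∧ nb m T ≤ nb m T' ∧
      (na m T - na m T') + (nb m T' - nb m T) = 2 := by
  have h1 : na m T' ≤ na m T := Finset.card_le_card (flip_UZ hf)
  have h2 : nb m T ≤ nb m T' := Finset.card_le_card (flip_UO hf)
  have h3 : (na m T : ℤ) - nb m T = g T m := na_sub_nb m T
  have h4 : (na m T' : ℤ) - nb m T' = g T' m := na_sub_nb m T'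
  have h5 : g T' m = g T m - 2 := (flip_g hf m).2 hf.1
  refine ⟨h1, h2, by omega⟩

/-- filter-count stability under subset with defect -/
lemma card_filter_defect {S S' : Finset ℕ} (h : S ⊆ S') (P : ℕ → Prop) [DecidablePred P] :
    (S'.filter P).card ≤ (S.filter P).card + (S'.card - S.card) := by
  have hsub : S'.filter P ⊆ (S.filter P) ∪ (S' \ S) := by
    intro x hx
    obtain ⟨hx1, hx2⟩ := Finset.mem_filter.mp hx
    by_cases hxS : x ∈ S
    · exact Finset.mem_union_left _ (Finset.mem_filter.mpr ⟨hxS, hx2⟩)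
    · exact Finset.mem_union_right _ (Finset.mem_sdiff.mpr ⟨hx1, hxS⟩)
  calc (S'.filter P).card ≤ ((S.filter P) ∪ (S' \ S)).card := Finset.card_le_card hsub
    _ ≤ (S.filter P).card + (S' \ S).card := Finset.card_union_le _ _
    _ = (S.filter P).card + (S'.card - S.card) := by rw [Finset.card_sdiff_of_subset h]

lemma rk_split (m : ℕ) (T : ℕ → Bool) (p : ℕ) :
    rk m T p = ((UZ m T).filter (fun r => r < p)).card
      + ((UO m T).filter (fun r => r < p)).card := by
  unfold rk
  rw [U, Finset.filter_union,
    Finset.card_union_of_disjoint ((UZ_UO_disjoint m T).mono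
      (Finset.filter_subset _ _) (Finset.filter_subset _ _))]

lemma flip_rk (hf : FlipUp m q T T') (p : ℕ) :
    rk m T' p ≤ rk m T p + 2 ∧ rk m T p ≤ rk m T' p + 2 := by
  obtain ⟨h1, h2, h3⟩ := flip_counts hf
  have e1 := rk_split m T p
  have e2 := rk_split m T' p
  have d1 : ((UO m T').filter (fun r => r < p)).card
      ≤ ((UO m T).filter (fun r => r < p)).card + (nb m T' - nb m T) :=
    card_filter_defect (flip_UO hf) _
  have d2 : ((UZ m T).filter (fun r => r < p)).card
      ≤ ((UZ m T').filter (fun r => r < p)).card + (na m T - na m T') :=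
    card_filter_defect (flip_UZ hf) _
  have d3 : ((UZ m T').filter (fun r => r < p)).card
      ≤ ((UZ m T).filter (fun r => r < p)).card :=
    Finset.card_le_card (Finset.filter_subset_filter _ (flip_UZ hf))
  have d4 : ((UO m T).filter (fun r => r < p)).card
      ≤ ((UO m T').filter (fun r => r < p)).card :=
    Finset.card_le_card (Finset.filter_subset_filter _ (flip_UO hf))
  omega

/-- the set where the two rewrites differ, bounded. -/
lemma flip_diff_card (hf : FlipUp m q T T') (z1 z2 : ℕ) :
    ((Finset.range m).filter
        (fun p => RW m T z1 p ≠ RW m T' z2 p)).card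
      ≤ 7 + max z1 z2 - min z1 z2 := by
  classical
  set D : Finset ℕ := (U m T).filter
    (fun p => min z1 z2 ≤ rk m T p + 2 ∧ rk m T p ≤ max z1 z2 + 1) with hD
  have hsub : (Finset.range m).filter (fun p => RW m T z1 p ≠ RW m T' z2 p)
      ⊆ (({q} ∪ ((UZ m T) \ (UZ m T'))) ∪ ((UO m T') \ (UO m T))) ∪ D := by
    intro p hp
    obtain ⟨hpm, hpne⟩ := Finset.mem_filter.mp hp
    rw [Finset.mem_range] at hpm
    rw [Finset.mem_union, Finset.mem_union, Finset.mem_union, Finset.mem_singleton,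
      Finset.mem_sdiff, Finset.mem_sdiff]
    by_cases hq : p = q
    · exact Or.inl (Or.inl (Or.inl hq))
    · by_cases hU : p ∈ U m T <;> by_cases hU' : p ∈ U m T'
      · -- both unmatched: decide mismatch, p ∈ D
        right
        rw [hD]
        refine Finset.mem_filter.mpr ⟨hU, ?_⟩
        have v1 : RW m T z1 p = decide (z1 ≤ rk m T p) := by rw [RW_apply, if_pos hU]
        have v2 : RW m T' z2 p = decide (z2 ≤ rk m T' p) := by rw [RW_apply, if_pos hU']
        rw [v1, v2] at hpne
        have hrk := flip_rk hf p
        have hm1 := min_le_left z1 z2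
        have hm2 := min_le_right z1 z2
        have hm3 := le_max_left z1 z2
        have hm4 := le_max_right z1 z2
        by_cases c1 : z1 ≤ rk m T p <;> by_cases c2 : z2 ≤ rk m T' p
        · exfalso; apply hpne; simp [c1, c2]
        · constructor <;> omega
        · constructor <;> omega
        · exfalso; apply hpne; simp [c1, c2]
      · rcases Finset.mem_union.mp hU with hz | ho
        · exact Or.inl (Or.inl (Or.inr ⟨hz, fun h => hU' (Finset.mem_union_left _ h)⟩))
        · exact absurd (Finset.mem_union_right _ (flip_UO hf ho)) hU'
      · rcases Finset.mem_union.mp hU' with hz' | ho'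
        · exact absurd (Finset.mem_union_left _ (flip_UZ hf hz')) hU
        · exact Or.inl (Or.inr ⟨ho', fun h => hU (Finset.mem_union_right _ h)⟩)
      · exfalso
        apply hpne
        have v1 : RW m T z1 p = T p := by rw [RW_apply, if_neg hU]
        have v2 : RW m T' z2 p = T' p := by rw [RW_apply, if_neg hU']
        rw [v1, v2, hf.2.2.2 p hq]
  have hcard := Finset.card_le_card hsub
  have hc1 : (((({q} : Finset ℕ) ∪ ((UZ m T) \ (UZ m T'))) ∪ ((UO m T') \ (UO m T))) ∪ D).card
      ≤ (1 + ((UZ m T) \ (UZ m T')).card + ((UO m T') \ (UO m T)).card) + D.card := by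
    calc _ ≤ ((({q} : Finset ℕ) ∪ ((UZ m T) \ (UZ m T'))) ∪ ((UO m T') \ (UO m T))).card + D.card :=
          Finset.card_union_le _ _
      _ ≤ (((({q} : Finset ℕ) ∪ ((UZ m T) \ (UZ m T'))).card + ((UO m T') \ (UO m T)).card)) + D.card := by
          have := Finset.card_union_le (({q} : Finset ℕ) ∪ ((UZ m T) \ (UZ m T'))) ((UO m T') \ (UO m T))
          omega
      _ ≤ _ := by
          have h1 := Finset.card_union_le ({q} : Finset ℕ) ((UZ m T) \ (UZ m T'))
          have h2 : ({q} : Finset ℕ).card = 1 := Finset.card_singleton q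
          omega
  have hsd1 : ((UZ m T) \ (UZ m T')).card = na m T - na m T' :=
    Finset.card_sdiff_of_subset (flip_UZ hf)
  have hsd2 : ((UO m T') \ (UO m T)).card = nb m T' - nb m T :=
    Finset.card_sdiff_of_subset (flip_UO hf)
  have hD_card : D.card ≤ (max z1 z2 + 1) + 1 - (min z1 z2 - 2) := by
    have : D.card ≤ (Finset.Icc (min z1 z2 - 2) (max z1 z2 + 1)).card := by
      apply Finset.card_le_card_of_injOn (rk m T)
      · intro p hp
        rw [hD] at hp
        obtain ⟨hpU, hp1, hp2⟩ := Finset.mem_filter.mp hp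
        rw [Finset.mem_coe, Finset.mem_Icc]
        omega
      · intro p hp p' hp' hpp
        rw [hD] at hp hp'
        simp only [Finset.mem_coe] at hp hp'
        exact rk_injOn (Finset.mem_filter.mp hp).1 (Finset.mem_filter.mp hp').1 hpp
    rw [Nat.card_Icc] at this
    omega
  have hfc := flip_counts hf
  have hm1 := min_le_left z1 z2
  have hm3 := le_max_left z1 z2
  have hm5 := min_add_max z1 z2
  omega

end Flip

section Assembly

/-- the tail of a vector, as a `ℕ → Bool` function (false beyond) -/
def tl (n : ℕ) (x : Fin n → Bool) : ℕ → Bool :=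
  fun p => if h : p + 1 < n then x ⟨p+1, h⟩ else false

lemma tl_eq_false {n : ℕ} (x : Fin n → Bool) {p : ℕ} (h : ¬ (p + 1 < n)) :
    tl n x p = false := by
  unfold tl
  rw [dif_neg h]

lemma RW_high {m : ℕ} {T : ℕ → Bool} (z : ℕ) {p : ℕ} (h : m ≤ p) :
    RW m T z p = T p := by
  rw [RW_apply, if_neg]
  intro hU
  have := Finset.mem_range.mp (U_subset_range m T hU)
  omega

/-- the new number of unmatched zeros, as a function of the head bit `c` -/
def zval (m : ℕ) (T : ℕ → Bool) (c : ℕ) : ℕ :=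
  nu m T - (if 2 * nb m T + c ≤ nu m T then 2 * nb m T + c
            else 2 * nu m T + 1 - (2 * nb m T + c))

def psi (n : ℕ) (hn : 0 < n) (x : Fin n → Bool) : Fin n → Bool :=
  fun i => if (i : ℕ) = 0
    then decide (nu (n-1) (tl n x) < 2 * nb (n-1) (tl n x) + (if x ⟨0, hn⟩ then 1 else 0))
    else RW (n-1) (tl n x) (zval (n-1) (tl n x) (if x ⟨0, hn⟩ then 1 else 0)) ((i : ℕ) - 1)

def phi (n : ℕ) (hn : 0 < n) (y : Fin n → Bool) : Fin n → Bool :=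
  fun i =>
    if (i : ℕ) = 0
    then decide ((if y ⟨0, hn⟩ then 2 * nu (n-1) (tl n y) + 1 - nb (n-1) (tl n y)
                  else nb (n-1) (tl n y)) % 2 = 1)
    else RW (n-1) (tl n y)
      (nu (n-1) (tl n y) -
        (if y ⟨0, hn⟩ then 2 * nu (n-1) (tl n y) + 1 - nb (n-1) (tl n y)
         else nb (n-1) (tl n y)) / 2) ((i : ℕ) - 1)

lemma nb_le_nu (m : ℕ) (T : ℕ → Bool) : nb m T ≤ nu m T := by
  have := nu_eq m T
  omega

lemma zval_le (m : ℕ) (T : ℕ → Bool) (c : ℕ) : zval m T c ≤ nu m T :=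
  Nat.sub_le _ _

lemma tl_psi {n : ℕ} (hn : 0 < n) (x : Fin n → Bool) :
    tl n (psi n hn x) = RW (n-1) (tl n x)
      (zval (n-1) (tl n x) (if x ⟨0, hn⟩ then 1 else 0)) := by
  funext p
  by_cases h : p + 1 < n
  · have h0 : tl n (psi n hn x) p = psi n hn x ⟨p+1, h⟩ := by
      unfold tl
      rw [dif_pos h]
    rw [h0]
    unfold psi
    rw [if_neg (by simp)]
    simp only [Nat.add_sub_cancel]
  · rw [tl_eq_false _ h, RW_high _ (by omega), tl_eq_false _ (by omega)]

lemma phi_psi {n : ℕ} (hn : 0 < n) (x : Fin n → Bool) : phi n hn (psi n hn x) = x := by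
  have hm : n - 1 = n - 1 := rfl
  -- abbreviations
  set T := tl n x with hT
  set u := nu (n-1) T with hu
  set b := nb (n-1) T with hb
  set c : ℕ := if x ⟨0, hn⟩ then 1 else 0 with hc
  have hcle : c ≤ 1 := by rw [hc]; split <;> omega
  have hble : b ≤ u := nb_le_nu (n-1) T
  -- the z value
  have hzval : zval (n-1) T c
      = u - (if 2*b + c ≤ u then 2*b + c else 2*u + 1 - (2*b + c)) := by
    unfold zval
    rw [← hu, ← hb]
  set J := if 2*b + c ≤ u then 2*b + c else 2*u + 1 - (2*b + c) with hJ
  have hJle : J ≤ u := by rw [hJ]; split <;> omega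
  have hzle : u - J ≤ nu (n-1) T := by rw [← hu]; omega
  have hS : tl n (psi n hn x) = RW (n-1) T (u - J) := by
    rw [tl_psi hn x, ← hT, ← hc, hzval]
  have hnuS : nu (n-1) (RW (n-1) T (u-J)) = u := by rw [nu_RW hzle, hu]
  have hnbS : nb (n-1) (RW (n-1) T (u-J)) = J := by
    rw [nb_RW hzle, ← hu]
    omega
  have hy0 : psi n hn x ⟨0, hn⟩ = decide (u < 2*b + c) := by
    unfold psi
    rw [if_pos rfl, ← hT, ← hu, ← hb, ← hc]
  funext i
  unfold phi
  rw [hS, hnuS, hnbS, hy0]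
  have hvrec : (if decide (u < 2*b + c) = true then 2 * u + 1 - J else J) = 2*b + c := by
    rcases le_or_gt (2*b + c) u with hle | hlt
    · have hd : decide (u < 2*b + c) = false := by
        simp only [decide_eq_false_iff_not]
        omega
      rw [hd]
      simp only [Bool.false_eq_true, if_false]
      rw [hJ, if_pos hle]
    · have hd : decide (u < 2*b + c) = true := by
        simp only [decide_eq_true_eq]
        omega
      rw [hd, if_pos rfl, hJ, if_neg (by omega)]
      omega
  rw [hvrec]
  by_cases hi : (i : ℕ) = 0
  · rw [if_pos hi]
    have hieq : i = ⟨0, hn⟩ := Fin.ext hi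
    rw [hieq]
    rcases hx0 : x ⟨0, hn⟩ with _ | _
    · have hc0 : c = 0 := by rw [hc, hx0]; simp
      have : (2*b + c) % 2 = 0 := by omega
      simp [this, hx0]
    · have hc1 : c = 1 := by rw [hc, hx0]; simp
      have : (2*b + c) % 2 = 1 := by omega
      simp [this, hx0]
  · rw [if_neg hi]
    have hv2 : (2*b + c) / 2 = b := by omega
    have hna : u - b = na (n-1) T := by
      have := nu_eq (n-1) T
      rw [← hu, ← hb] at this
      omega
    rw [hv2, RW_RW hzle, hna, RW_self]
    have hi1 : ((i:ℕ) - 1) + 1 < n := by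
      have := i.isLt
      omega
    rw [hT]
    unfold tl
    rw [dif_pos hi1]
    congr 1
    apply Fin.ext
    simp only []
    omega

end Assembly

section Final

/-- counting ones in the whole vector vs head + tail -/
lemma card_ones {n : ℕ} (hn : 0 < n) (x : Fin n → Bool) :
    (Finset.univ.filter (fun i : Fin n => x i = true)).card
      = (if x ⟨0, hn⟩ = true then 1 else 0) + o (tl n x) (n-1) := by
  classical
  set A := Finset.univ.filter (fun i : Fin n => x i = true) with hA
  have hsplit : A.card = (A.filter (fun (i : Fin n) => (i:ℕ) = 0)).card
      + (A.filter (fun (i : Fin n) => (i:ℕ) ≠ 0)).card :=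
    (Finset.card_filter_add_card_filter_not _).symm
  have h1 : (A.filter (fun (i : Fin n) => (i:ℕ) = 0)).card = if x ⟨0, hn⟩ = true then 1 else 0 := by
    by_cases hx : x ⟨0, hn⟩ = true
    · rw [if_pos hx]
      have : A.filter (fun (i : Fin n) => (i:ℕ) = 0) = {⟨0, hn⟩} := by
        ext i
        simp only [hA, Finset.mem_filter, Finset.mem_univ, true_and, Finset.mem_singleton]
        constructor
        · rintro ⟨h2, h3⟩
          exact Fin.ext h3
        · rintro rfl
          exact ⟨hx, rfl⟩
      rw [this, Finset.card_singleton]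
    · rw [if_neg hx]
      rw [Finset.card_eq_zero]
      ext i
      simp only [hA, Finset.mem_filter, Finset.mem_univ, true_and, Finset.notMem_empty,
        iff_false, not_and]
      intro h2 h3
      exact hx (by rwa [show (⟨0, hn⟩ : Fin n) = i from (Fin.ext h3.symm)])
  have h2 : (A.filter (fun (i : Fin n) => (i:ℕ) ≠ 0)).card = o (tl n x) (n-1) := by
    unfold o
    apply Finset.card_bij (fun (i : Fin n) _ => (i:ℕ) - 1)
    · intro i hi
      simp only [hA, Finset.mem_filter, Finset.mem_univ, true_and] at hi
      obtain ⟨hxi, hi0⟩ := hi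
      refine Finset.mem_filter.mpr ⟨Finset.mem_range.mpr (by have := i.isLt; omega), ?_⟩
      have hlt : ((i:ℕ) - 1) + 1 < n := by have := i.isLt; omega
      unfold tl
      rw [dif_pos hlt]
      rwa [show (⟨(i:ℕ)-1+1, hlt⟩ : Fin n) = i from Fin.ext (by simp; omega)]
    · intro i hi j hj hij
      simp only [hA, Finset.mem_filter, Finset.mem_univ, true_and] at hi hj
      exact Fin.ext (by omega)
    · intro p hp
      obtain ⟨hpr, hpT⟩ := Finset.mem_filter.mp hp
      rw [Finset.mem_range] at hpr
      have hlt : p + 1 < n := by omega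
      refine ⟨⟨p+1, hlt⟩, ?_, by simp⟩
      simp only [hA, Finset.mem_filter, Finset.mem_univ, true_and]
      constructor
      · unfold tl at hpT
        rwa [dif_pos hlt] at hpT
      · simp
  omega

lemma psi_head {n : ℕ} (hn : 0 < n) (x : Fin n → Bool) {i : Fin n} (hi : (i:ℕ) = 0) :
    psi n hn x i = decide (nu (n-1) (tl n x)
      < 2 * nb (n-1) (tl n x) + (if x ⟨0, hn⟩ then 1 else 0)) := by
  unfold psi
  rw [if_pos hi]

/-- the dictator bit of the image is the majority -/
lemma psi_majority {n : ℕ} (hn : 0 < n) (hodd : Odd n) (x : Fin n → Bool) :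
    decide (n < 2 * (Finset.univ.filter (fun i => x i = true)).card)
      = psi n hn x ⟨0, hn⟩ := by
  rw [psi_head hn x (by simp)]
  apply decide_eq_decide.mpr
  set T := tl n x with hT
  set c : ℕ := if x ⟨0, hn⟩ then 1 else 0 with hc
  have hones : (Finset.univ.filter (fun i : Fin n => x i = true)).card
      = c + o T (n-1) := by
    rw [card_ones hn x, ← hT, ← hc]
  rw [hones]
  have hg : g T (n-1) = ((n-1 : ℕ) : ℤ) - 2 * o T (n-1) := rfl
  have hab : (na (n-1) T : ℤ) - nb (n-1) T = g T (n-1) := na_sub_nb (n-1) T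
  have hu : nu (n-1) T = na (n-1) T + nb (n-1) T := nu_eq (n-1) T
  obtain ⟨k, hk⟩ := hodd
  have hcle : c ≤ 1 := by rw [hc]; split <;> omega
  omega

/-- difference of two rewrites of the same word -/
lemma RW_zz (m : ℕ) (T : ℕ → Bool) (z1 z2 : ℕ) :
    ((Finset.range m).filter (fun p => RW m T z1 p ≠ RW m T z2 p)).card
      ≤ max z1 z2 - min z1 z2 := by
  classical
  have hsub : (Finset.range m).filter (fun p => RW m T z1 p ≠ RW m T z2 p)
      ⊆ (U m T).filter (fun p => min z1 z2 ≤ rk m T p ∧ rk m T p < max z1 z2) := by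
    intro p hp
    obtain ⟨hpm, hpne⟩ := Finset.mem_filter.mp hp
    by_cases hU : p ∈ U m T
    · refine Finset.mem_filter.mpr ⟨hU, ?_⟩
      rw [RW_apply, if_pos hU, RW_apply, if_pos hU] at hpne
      have hm1 := min_le_left z1 z2
      have hm2 := min_le_right z1 z2
      have hm3 := le_max_left z1 z2
      have hm4 := le_max_right z1 z2
      by_cases c1 : z1 ≤ rk m T p <;> by_cases c2 : z2 ≤ rk m T p
      · exact absurd (by simp [c1, c2]) hpne
      · constructor <;> omega
      · constructor <;> omega
      · exact absurd (by simp [c1, c2]) hpne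
    · rw [RW_apply, if_neg hU, RW_apply, if_neg hU] at hpne
      exact absurd rfl hpne
  have hle := Finset.card_le_card hsub
  have hub : ((U m T).filter (fun p => min z1 z2 ≤ rk m T p ∧ rk m T p < max z1 z2)).card
      ≤ (Finset.Ico (min z1 z2) (max z1 z2)).card := by
    apply Finset.card_le_card_of_injOn (rk m T)
    · intro p hp
      obtain ⟨hpU, h1, h2⟩ := Finset.mem_filter.mp hp
      rw [Finset.mem_coe, Finset.mem_Ico]
      exact ⟨h1, h2⟩
    · intro p hp p' hp' hpp
      simp only [Finset.mem_coe] at hp hp'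
      exact rk_injOn (Finset.mem_filter.mp hp).1 (Finset.mem_filter.mp hp').1 hpp
  rw [Nat.card_Ico] at hub
  omega

/-- head-plus-tail bound for the Hamming distance -/
lemma dist_head_tail {n : ℕ} (hn : 0 < n) (y1 y2 : Fin n → Bool) :
    hammingDist y1 y2
      ≤ 1 + ((Finset.range (n-1)).filter (fun p => tl n y1 p ≠ tl n y2 p)).card := by
  classical
  have h1 : hammingDist y1 y2
      = ((Finset.univ.filter (fun i : Fin n => y1 i ≠ y2 i)).image Fin.val).card := by
    rw [Finset.card_image_of_injective _ Fin.val_injective]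
    rfl
  rw [h1]
  have hsub : (Finset.univ.filter (fun i : Fin n => y1 i ≠ y2 i)).image Fin.val
      ⊆ insert 0 (((Finset.range (n-1)).filter
          (fun p => tl n y1 p ≠ tl n y2 p)).image (· + 1)) := by
    intro a ha
    obtain ⟨i, hi, rfl⟩ := Finset.mem_image.mp ha
    obtain ⟨_, hine⟩ := Finset.mem_filter.mp hi
    by_cases h0 : (i : ℕ) = 0
    · rw [h0]
      exact Finset.mem_insert_self _ _
    · apply Finset.mem_insert_of_mem
      refine Finset.mem_image.mpr ⟨(i:ℕ) - 1, ?_, by omega⟩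
      refine Finset.mem_filter.mpr ⟨Finset.mem_range.mpr (by have := i.isLt; omega), ?_⟩
      have hlt : ((i:ℕ) - 1) + 1 < n := by have := i.isLt; omega
      unfold tl
      rw [dif_pos hlt, dif_pos hlt]
      rwa [show (⟨(i:ℕ)-1+1, hlt⟩ : Fin n) = i from Fin.ext (by simp; omega)]
  calc _ ≤ (insert 0 (((Finset.range (n-1)).filter
          (fun p => tl n y1 p ≠ tl n y2 p)).image (· + 1))).card := Finset.card_le_card hsub
    _ ≤ 1 + (((Finset.range (n-1)).filter
          (fun p => tl n y1 p ≠ tl n y2 p)).image (· + 1)).card := by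
        have := Finset.card_insert_le 0 (((Finset.range (n-1)).filter
          (fun p => tl n y1 p ≠ tl n y2 p)).image (· + 1))
        omega
    _ ≤ _ := by
        have := Finset.card_image_le (s := (Finset.range (n-1)).filter
          (fun p => tl n y1 p ≠ tl n y2 p)) (f := (· + 1))
        omega

end Final

section Adjacent

lemma zval_c_close (m : ℕ) (T : ℕ → Bool) {c c' : ℕ} (hc : c ≤ 1) (hc' : c' ≤ 1) :
    zval m T c ≤ zval m T c' + 1 ∧ zval m T c' ≤ zval m T c + 1 := by
  have hb := nb_le_nu m T
  constructor <;> (unfold zval; split <;> split <;> omega)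

lemma zval_flip_close {m q : ℕ} {T T' : ℕ → Bool} (hf : FlipUp m q T T') {c : ℕ} (hc : c ≤ 1) :
    zval m T c ≤ zval m T' c + 5 ∧ zval m T' c ≤ zval m T c + 5 := by
  obtain ⟨h1, h2, h3⟩ := flip_counts hf
  have e1 := nu_eq m T
  have e2 := nu_eq m T'
  have h4 : (na m T : ℤ) - nb m T = g T m := na_sub_nb m T
  have h5 : (na m T' : ℤ) - nb m T' = g T' m := na_sub_nb m T'
  have h6 : g T' m = g T m - 2 := (flip_g hf m).2 hf.1
  constructor <;> (unfold zval; split <;> split <;> omega)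

lemma tl_update_head {n : ℕ} (x : Fin n → Bool) {i : Fin n} (b : Bool) (hi : (i:ℕ) = 0) :
    tl n (Function.update x i b) = tl n x := by
  funext p
  unfold tl
  by_cases h : p + 1 < n
  · rw [dif_pos h, dif_pos h, Function.update_of_ne]
    intro he
    rw [← he] at hi
    simp at hi
  · rw [dif_neg h, dif_neg h]

lemma tl_update_tail {n : ℕ} (x : Fin n → Bool) {i : Fin n} (b : Bool) (hi : (i:ℕ) ≠ 0) :
    (∀ p, p ≠ (i:ℕ) - 1 → tl n (Function.update x i b) p = tl n x p)
      ∧ tl n (Function.update x i b) ((i:ℕ) - 1) = b := by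
  constructor
  · intro p hp
    unfold tl
    by_cases h : p + 1 < n
    · rw [dif_pos h, dif_pos h, Function.update_of_ne]
      intro he
      rw [← he] at hp
      simp at hp
    · rw [dif_neg h, dif_neg h]
  · have h : ((i:ℕ) - 1) + 1 < n := by have := i.isLt; omega
    unfold tl
    rw [dif_pos h, show (⟨(i:ℕ)-1+1, h⟩ : Fin n) = i from Fin.ext (by simp; omega),
      Function.update_self]

lemma psi_adjacent {n : ℕ} (hn : 0 < n) (x : Fin n → Bool) (i : Fin n) (b : Bool) :
    hammingDist (psi n hn x) (psi n hn (Function.update x i b)) ≤ 13 := by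
  classical
  by_cases hb : b = x i
  · rw [hb, Function.update_eq_self]
    have h0 : hammingDist (psi n hn x) (psi n hn x) = 0 := hammingDist_self _
    omega
  set x' := Function.update x i b with hx'
  have hdh := dist_head_tail hn (psi n hn x) (psi n hn x')
  by_cases hi : (i:ℕ) = 0
  · -- head flip
    have hT : tl n x' = tl n x := tl_update_head x b hi
    have hc' : (if x' ⟨0, hn⟩ then 1 else 0 : ℕ) ≤ 1 := by split <;> omega
    have hc : (if x ⟨0, hn⟩ then 1 else 0 : ℕ) ≤ 1 := by split <;> omega
    have hz := zval_c_close (n-1) (tl n x) hc hc'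
    have hset : (Finset.range (n-1)).filter
        (fun p => tl n (psi n hn x) p ≠ tl n (psi n hn x') p)
        = (Finset.range (n-1)).filter
        (fun p => RW (n-1) (tl n x) (zval (n-1) (tl n x) (if x ⟨0, hn⟩ then 1 else 0)) p
            ≠ RW (n-1) (tl n x) (zval (n-1) (tl n x) (if x' ⟨0, hn⟩ then 1 else 0)) p) := by
      apply Finset.filter_congr
      intro p _
      rw [tl_psi hn x, tl_psi hn x', hT]
    rw [hset] at hdh
    have hzz := RW_zz (n-1) (tl n x)
      (zval (n-1) (tl n x) (if x ⟨0, hn⟩ then 1 else 0))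
      (zval (n-1) (tl n x) (if x' ⟨0, hn⟩ then 1 else 0))
    have hm5 := min_add_max (zval (n-1) (tl n x) (if x ⟨0, hn⟩ then 1 else 0))
      (zval (n-1) (tl n x) (if x' ⟨0, hn⟩ then 1 else 0))
    have hm1 := min_le_left (zval (n-1) (tl n x) (if x ⟨0, hn⟩ then 1 else 0))
      (zval (n-1) (tl n x) (if x' ⟨0, hn⟩ then 1 else 0))
    omega
  · -- tail flip
    set q := (i:ℕ) - 1 with hq
    have hqm : q < n - 1 := by have := i.isLt; omega
    have hhead : x' ⟨0, hn⟩ = x ⟨0, hn⟩ := by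
      rw [hx']
      apply Function.update_of_ne
      intro he
      apply hi
      rw [← he]
    set c : ℕ := if x ⟨0, hn⟩ then 1 else 0 with hc
    have hcle : c ≤ 1 := by rw [hc]; split <;> omega
    have hcx' : (if x' ⟨0, hn⟩ then 1 else 0 : ℕ) = c := by rw [hhead]
    have hoff := (tl_update_tail x b hi).1
    have hatq : tl n x' q = b := (tl_update_tail x b hi).2
    have hTq : tl n x q = x i := by
      have h : q + 1 < n := by have := i.isLt; omega
      unfold tl
      rw [dif_pos h]
      congr 1
      apply Fin.ext
      simp only []
      omega
    have hset : (Finset.range (n-1)).filter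
        (fun p => tl n (psi n hn x) p ≠ tl n (psi n hn x') p)
        = (Finset.range (n-1)).filter
        (fun p => RW (n-1) (tl n x) (zval (n-1) (tl n x) c) p
            ≠ RW (n-1) (tl n x') (zval (n-1) (tl n x') c) p) := by
      apply Finset.filter_congr
      intro p _
      rw [tl_psi hn x, tl_psi hn x', hcx', hc]
    rw [hset] at hdh
    cases hxi : x i with
    | false =>
      have hf : FlipUp (n-1) q (tl n x) (tl n x') := by
        refine ⟨hqm, by rw [hTq, hxi], ?_, hoff⟩
        rw [hatq]
        cases hbv : b with
        | false => exact absurd (by rw [hbv, hxi]) hb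
        | true => rfl
      have hd := flip_diff_card hf (zval (n-1) (tl n x) c) (zval (n-1) (tl n x') c)
      have hzz := zval_flip_close hf hcle
      have hm5 := min_add_max (zval (n-1) (tl n x) c) (zval (n-1) (tl n x') c)
      have hm1 := min_le_left (zval (n-1) (tl n x) c) (zval (n-1) (tl n x') c)
      omega
    | true =>
      have hf : FlipUp (n-1) q (tl n x') (tl n x) := by
        refine ⟨hqm, ?_, by rw [hTq, hxi], fun p hp => (hoff p hp).symm⟩
        rw [hatq]
        cases hbv : b with
        | false => rfl
        | true => exact absurd (by rw [hbv, hxi]) hb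
      have hd := flip_diff_card hf (zval (n-1) (tl n x') c) (zval (n-1) (tl n x) c)
      have hzz := zval_flip_close hf hcle
      have he : (Finset.range (n-1)).filter
          (fun p => RW (n-1) (tl n x) (zval (n-1) (tl n x) c) p
            ≠ RW (n-1) (tl n x') (zval (n-1) (tl n x') c) p)
          = (Finset.range (n-1)).filter
          (fun p => RW (n-1) (tl n x') (zval (n-1) (tl n x') c) p
            ≠ RW (n-1) (tl n x) (zval (n-1) (tl n x) c) p) := by
        apply Finset.filter_congr
        intro p _
        simp only [ne_comm]
      rw [he] at hdh
      have hm5 := min_add_max (zval (n-1) (tl n x') c) (zval (n-1) (tl n x) c)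
      have hm1 := min_le_left (zval (n-1) (tl n x') c) (zval (n-1) (tl n x) c)
      omega

lemma lipschitz_of_adjacent {n : ℕ} (F : (Fin n → Bool) → (Fin n → Bool)) (C : ℕ)
    (hadj : ∀ x (i : Fin n) b, hammingDist (F x) (F (Function.update x i b)) ≤ C) :
    ∀ x y, hammingDist (F x) (F y) ≤ C * hammingDist x y := by
  intro x y
  generalize hd : hammingDist x y = d
  induction d generalizing y with
  | zero =>
    have : x = y := hammingDist_eq_zero.mp hd
    subst this
    simp [hammingDist_self]
  | succ d ih =>
    have hne : x ≠ y := by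
      intro h
      rw [h, hammingDist_self] at hd
      omega
    obtain ⟨i, hi⟩ := Function.ne_iff.mp hne
    set y' := Function.update y i (x i) with hy'
    have h1 : hammingDist x y' = d := by
      have he : (Finset.univ.filter (fun j : Fin n => x j ≠ y' j))
          = (Finset.univ.filter (fun j : Fin n => x j ≠ y j)).erase i := by
        ext j
        simp only [Finset.mem_filter, Finset.mem_univ, true_and, Finset.mem_erase]
        by_cases hij : j = i
        · subst hij
          simp [hy', Function.update_self]
        · simp [hy', Function.update_of_ne hij, hij]
      have h2 : hammingDist x y'
          = ((Finset.univ.filter (fun j : Fin n => x j ≠ y j)).erase i).card := by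
        rw [← he]; rfl
      have h3 : hammingDist x y = (Finset.univ.filter (fun j : Fin n => x j ≠ y j)).card := rfl
      rw [h2, Finset.card_erase_of_mem (by simp [hi])]
      omega
    have h2 : y = Function.update y' i (y i) := by
      funext j
      by_cases hij : j = i
      · subst hij
        rw [Function.update_self]
      · rw [Function.update_of_ne hij, hy', Function.update_of_ne hij]
    have h3 : hammingDist (F y') (F y) ≤ C := by
      conv_lhs => rw [h2]
      exact hadj y' i (y i)
    calc hammingDist (F x) (F y)
        ≤ hammingDist (F x) (F y') + hammingDist (F y') (F y) := hammingDist_triangle _ _ _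
      _ ≤ C * d + C := by
          have := ih y' h1
          omega
      _ = C * (d+1) := by ring

end Adjacent

end MajDict

/-- There is an absolute constant `C` such that for every odd `n` there is a
`C`-Lipschitz bijection from `Majority` to `Dictator`. -/
theorem majority_to_dictator_lipschitz :
    ∃ C : ℕ, ∀ n : ℕ, Odd n →
      ∃ ψ : (Fin n → Bool) → (Fin n → Bool),
        Function.Bijective ψ ∧
        (∀ z : Fin n → Bool, majority z = dictator (ψ z)) ∧
        (∀ x y : Fin n → Bool, hammingDist (ψ x) (ψ y) ≤ C * hammingDist x y) := by
  refine ⟨13, fun n hodd => ?_⟩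
  have hn : 0 < n := by
    obtain ⟨k, hk⟩ := hodd
    omega
  refine ⟨MajDict.psi n hn, ?_, ?_, ?_⟩
  · exact Finite.injective_iff_bijective.mp
      (Function.LeftInverse.injective (g := MajDict.phi n hn)
        (fun x => MajDict.phi_psi hn x))
  · intro z
    rw [majority, dictator, dif_pos hn]
    exact MajDict.psi_majority hn hodd z
  · exact MajDict.lipschitz_of_adjacent _ 13 (fun x i b => MajDict.psi_adjacent hn x i b)
end

section
/- For every odd integer n ≥ 1 and every bijection φ : {0,1}^n → {0,1}^n that is a mapping from Dictator to Majority (i.e., Dictator(z) = Majority(φ(z)) for every z), there exist x, y ∈ {0,1}^n with dist(x, y) = 1 and dist(φ(x), φ(y)) ≥ n/2. In particular, there is no C-Lipschitz bijection from Dictator to Majority for any C < n/2. -/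
/-- For odd `n`, any bijection mapping `Dictator` to `Majority` has a hypercube edge whose
endpoints are mapped to distance at least `n/2`; that is, there is no `C`-Lipschitz
bijection from `Dictator` to `Majority` for `C < n/2`. -/
theorem no_lipschitz_dictator_to_majority (n : ℕ) (hn : Odd n)
    (φ : (Fin n → Bool) → (Fin n → Bool)) (hbij : Function.Bijective φ)
    (hmap : ∀ z : Fin n → Bool, dictator z = majority (φ z)) :
    ∃ x y : Fin n → Bool,
      hammingDist x y = 1 ∧ (n : ℝ) / 2 ≤ (hammingDist (φ x) (φ y) : ℝ) := by
  have h0 : 0 < n := hn.pos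
  set u : Fin n → Bool := fun _ => true with hu
  obtain ⟨z, hz⟩ := hbij.2 u
  set i0 : Fin n := ⟨0, h0⟩
  set y : Fin n → Bool := Function.update z i0 (!z i0) with hy
  refine ⟨z, y, ?_, ?_⟩
  · -- hammingDist z y = 1
    rw [hammingDist]
    have : (Finset.univ.filter (fun i => z i ≠ y i)) = {i0} := by
      ext j
      simp only [Finset.mem_filter, Finset.mem_univ, true_and, Finset.mem_singleton]
      constructor
      · intro hj
        by_contra hne
        apply hj
        rw [hy, Function.update_of_ne hne]
      · rintro rfl
        rw [hy, Function.update_self]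
        simp
    rw [this, Finset.card_singleton]
  · -- distance bound
    -- dictator y = false
    have hdy : dictator y = false := by
      rw [dictator, dif_pos h0]
      show y i0 = false
      rw [hy, Function.update_self]
      -- need z i0 = true, i.e. dictator z = true
      have hdz : dictator z = true := by
        rw [hmap z, hz, majority]
        simp [hu, Finset.filter_true_of_mem]
        omega
      rw [dictator, dif_pos h0] at hdz
      rw [hdz]
      rfl
    have hmaj : majority (φ y) = false := by rw [← hmap, hdy]
    set S := Finset.univ.filter (fun i => φ y i = true) with hS
    have hcard : 2 * S.card ≤ n := by
      rw [majority, decide_eq_false_iff_not, ← hS] at hmaj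
      omega
    have hdist : hammingDist (φ z) (φ y) = n - S.card := by
      rw [hz, hammingDist]
      have : (Finset.univ.filter (fun i => u i ≠ φ y i)) = Sᶜ := by
        ext j
        simp only [Finset.mem_filter, Finset.mem_univ, true_and, Finset.mem_compl, hS, hu]
        cases h : φ y j <;> simp
      rw [this, Finset.card_compl, Fintype.card_fin]
    rw [hdist]
    have hle : S.card ≤ n := le_trans (by omega) hcard
    rw [Nat.cast_sub hle]
    have : (S.card : ℝ) * 2 ≤ n := by exact_mod_cast (by omega : S.card * 2 ≤ n)
    linarith
end

section
/- For every n ≥ 1, the map ψ : {0,1}^n → {0,1}^n defined by ψ(x_1, x_2, …, x_n) = (XOR(x), x_2, …, x_n) is a bijection, is a mapping from Dictator to XOR (i.e., Dictator(z) = XOR(ψ(z)) for every z), ψ is 2-Lipschitz, and its inverse ψ⁻¹ is 2-Lipschitz. -/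
/-- `XOR(x) = x_1 + ⋯ + x_n (mod 2)`. -/
def xorFun {n : ℕ} (x : Fin n → Bool) : Bool :=
  decide ((Finset.univ.filter (fun i => x i = true)).card % 2 = 1)

lemma card_update {n : ℕ} (x : Fin n → Bool) (i : Fin n) (b : Bool) :
    (Finset.univ.filter (fun j => Function.update x i b j = true)).card
      + (if x i = true then 1 else 0)
    = (Finset.univ.filter (fun j => x j = true)).card + (if b = true then 1 else 0) := by
  cases b with
  | false =>
    have h : (Finset.univ.filter (fun j => Function.update x i false j = true))
        = (Finset.univ.filter (fun j => x j = true)).erase i := by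
      ext j
      rcases eq_or_ne j i with rfl | hj
      · simp
      · simp [Function.update_apply, hj]
    rw [h]
    by_cases hx : x i = true
    · have hi : i ∈ Finset.univ.filter (fun j => x j = true) := by simp [hx]
      rw [if_pos hx, Finset.card_erase_add_one hi]
      simp
    · have hi : i ∉ Finset.univ.filter (fun j => x j = true) := by simp [hx]
      rw [Finset.erase_eq_of_notMem hi]
      simp [hx]
  | true =>
    have h : (Finset.univ.filter (fun j => Function.update x i true j = true))
        = insert i (Finset.univ.filter (fun j => x j = true)) := by
      ext j
      rcases eq_or_ne j i with rfl | hj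
      · simp
      · simp [Function.update_apply, hj]
    rw [h]
    by_cases hx : x i = true
    · have hi : i ∈ Finset.univ.filter (fun j => x j = true) := by simp [hx]
      rw [Finset.insert_eq_self.mpr hi]
      simp [hx]
    · have hi : i ∉ Finset.univ.filter (fun j => x j = true) := by simp [hx]
      rw [Finset.card_insert_of_notMem hi]
      simp [hx]

lemma xor_update {n : ℕ} (x : Fin n → Bool) (i : Fin n) :
    xorFun (Function.update x i (xorFun x)) = x i := by
  have h := card_update x i (xorFun x)
  unfold xorFun at *
  set c := (Finset.univ.filter (fun j => x j = true)).card with hc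
  set c' := (Finset.univ.filter (fun j => Function.update x i (decide (c % 2 = 1)) j = true)).card with hc'
  cases hx : x i <;> simp [hx] at h ⊢ <;> split_ifs at h <;> omega

lemma dist_update_le {n : ℕ} (x y : Fin n → Bool) (i : Fin n) (a b : Bool) :
    hammingDist (Function.update x i a) (Function.update y i b) ≤ hammingDist x y + 1 := by
  simp only [hammingDist]
  have hsub : (Finset.univ.filter (fun j => Function.update x i a j ≠ Function.update y i b j))
      ⊆ insert i (Finset.univ.filter (fun j => x j ≠ y j)) := by
    intro j hj
    rcases eq_or_ne j i with rfl | hji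
    · exact Finset.mem_insert_self _ _
    · simp only [Finset.mem_filter, Finset.mem_univ, true_and,
        Function.update_apply, if_neg hji] at hj
      exact Finset.mem_insert_of_mem (by simp [hj])
  calc _ ≤ (insert i (Finset.univ.filter (fun j => x j ≠ y j))).card :=
        Finset.card_le_card hsub
    _ ≤ _ := Finset.card_insert_le _ _

/-- The map `ψ(x) = (XOR(x), x_2, …, x_n)` is a bijection from `Dictator` to `XOR`,
it is 2-Lipschitz, and its inverse is 2-Lipschitz. -/
theorem dictator_to_xor_biLipschitz (n : ℕ) (hn : 0 < n)
    (ψ : (Fin n → Bool) → (Fin n → Bool))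
    (hψ : ∀ x : Fin n → Bool, ψ x = Function.update x ⟨0, hn⟩ (xorFun x)) :
    Function.Bijective ψ ∧
    (∀ z : Fin n → Bool, dictator z = xorFun (ψ z)) ∧
    (∀ x y : Fin n → Bool, hammingDist (ψ x) (ψ y) ≤ 2 * hammingDist x y) ∧
    (∀ g : (Fin n → Bool) → (Fin n → Bool),
      Function.LeftInverse g ψ → Function.RightInverse g ψ →
      ∀ x y : Fin n → Bool, hammingDist (g x) (g y) ≤ 2 * hammingDist x y) := by
  have hinv : ∀ x, ψ (ψ x) = x := by
    intro x
    rw [hψ, hψ, xor_update, Function.update_idem, Function.update_eq_self]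
  have hlip : ∀ x y : Fin n → Bool, hammingDist (ψ x) (ψ y) ≤ 2 * hammingDist x y := by
    intro x y
    rcases eq_or_ne x y with rfl | hxy
    · simp
    · have h1 : 1 ≤ hammingDist x y := by
        have := hammingDist_ne_zero.mpr hxy
        omega
      calc hammingDist (ψ x) (ψ y) ≤ hammingDist x y + 1 := by
            rw [hψ x, hψ y]; exact dist_update_le x y _ _ _
        _ ≤ 2 * hammingDist x y := by omega
  refine ⟨Function.bijective_iff_has_inverse.mpr ⟨ψ, hinv, hinv⟩, ?_, hlip, ?_⟩
  · intro z
    rw [hψ, dictator, dif_pos hn, xor_update]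
  · intro g hg _ x y
    have hgψ : ∀ z, g z = ψ z := fun z => by
      conv_lhs => rw [← hinv z, hg (ψ z)]
    rw [hgψ, hgψ]
    exact hlip x y
end

section
/- For every n ≥ 1 there exists a map φ : {0,1}^n → {0,1}^n such that: (1) φ is a bijection and a mapping from Dictator to XOR (i.e., Dictator(z) = XOR(φ(z)) for every z); (2) φ is a linear operator over GF(2), i.e., φ(x + y) = φ(x) + φ(y) coordinate-wise mod 2; (3) φ is 3-local, i.e., for every output coordinate i there is a set S_i ⊆ {1, …, n} with |S_i| ≤ 3 such that φ(x)_i depends only on the coordinates of x in S_i (if x and y agree on S_i then φ(x)_i = φ(y)_i); (4) φ is 2-Lipschitz; and (5) its inverse φ⁻¹ is (⌊log₂ n⌋ + 1)-Lipschitz. -/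
/- Auxiliary development: the binary-heap tree construction
   `φ(x)_i = x_i ⊕ x_{2i+1} ⊕ x_{2i+2}`. -/

/-- Read coordinate `k`, `false` out of range. -/
def getb {n : ℕ} (x : Fin n → Bool) (k : ℕ) : Bool :=
  if h : k < n then x ⟨k, h⟩ else false

/-- The forward map. -/
def phiF {n : ℕ} (x : Fin n → Bool) (i : Fin n) : Bool :=
  xor (x i) (xor (getb x (2 * i.1 + 1)) (getb x (2 * i.1 + 2)))

/-- The inverse map: xor over the subtree rooted at `k`. -/
def ginv (n : ℕ) (y : Fin n → Bool) (k : ℕ) : Bool :=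
  if h : k < n then
    xor (y ⟨k, h⟩) (xor (ginv n y (2 * k + 1)) (ginv n y (2 * k + 2)))
  else false
termination_by n - k
decreasing_by all_goals omega

attribute [local instance 10] Classical.propDecidable

/-- `j` lies in the subtree rooted at `k` (heap indexing). -/
def subtr (k j : ℕ) : Prop := ∃ t, (j + 1) / 2 ^ t = k + 1

lemma subtr_self (k : ℕ) : subtr k k := ⟨0, by simp⟩

lemma subtr_le {k j : ℕ} (h : subtr k j) : k ≤ j := by
  obtain ⟨t, ht⟩ := h
  have := Nat.div_le_self (j + 1) (2 ^ t)
  omega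

lemma subtr_child1 {k j : ℕ} (h : subtr (2 * k + 1) j) : subtr k j := by
  obtain ⟨t, ht⟩ := h
  refine ⟨t + 1, ?_⟩
  rw [pow_succ, ← Nat.div_div_eq_div_mul, ht]
  omega

lemma subtr_child2 {k j : ℕ} (h : subtr (2 * k + 2) j) : subtr k j := by
  obtain ⟨t, ht⟩ := h
  refine ⟨t + 1, ?_⟩
  rw [pow_succ, ← Nat.div_div_eq_div_mul, ht]
  omega

lemma subtr_split {k j : ℕ} (h : subtr k j) :
    j = k ∨ subtr (2 * k + 1) j ∨ subtr (2 * k + 2) j := by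
  obtain ⟨t, ht⟩ := h
  rcases t with _ | s
  · left; simpa using ht
  · rw [pow_succ, ← Nat.div_div_eq_div_mul] at ht
    set m := (j + 1) / 2 ^ s with hm
    have : m = 2 * k + 2 ∨ m = 2 * k + 3 := by omega
    rcases this with h1 | h1
    · right; left; exact ⟨s, by omega⟩
    · right; right; exact ⟨s, by omega⟩

lemma my_div_pow_le {a t s : ℕ} (h : t ≤ s) : a / 2 ^ s ≤ a / 2 ^ t :=
  Nat.div_le_div_left (Nat.pow_le_pow_right (by norm_num) h) (Nat.pow_pos (by norm_num))

lemma subtr_disj {k j : ℕ} (h1 : subtr (2 * k + 1) j) (h2 : subtr (2 * k + 2) j) : False := by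
  obtain ⟨t, ht⟩ := h1
  obtain ⟨s, hs⟩ := h2
  rcases Nat.le_total t s with hle | hle
  · have hss : (j + 1) / 2 ^ s = ((j + 1) / 2 ^ t) / 2 ^ (s - t) := by
      rw [Nat.div_div_eq_div_mul, ← pow_add]
      congr 2
      omega
    rw [ht] at hss
    rw [hs] at hss
    rcases Nat.eq_or_lt_of_le hle with he | hlt
    · have h0 : s - t = 0 := by omega
      rw [h0, pow_zero, Nat.div_one] at hss
      omega
    · have h1 : 1 ≤ s - t := by omega
      have h2 := my_div_pow_le (a := 2 * k + 1 + 1) h1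
      rw [pow_one] at h2
      omega
  · have hss : (j + 1) / 2 ^ t = ((j + 1) / 2 ^ s) / 2 ^ (t - s) := by
      rw [Nat.div_div_eq_div_mul, ← pow_add]
      congr 2
      omega
    rw [hs] at hss
    rw [ht] at hss
    rcases Nat.eq_or_lt_of_le hle with he | hlt
    · have h0 : t - s = 0 := by omega
      rw [h0, pow_zero, Nat.div_one] at hss
      omega
    · have h1 : 1 ≤ t - s := by omega
      have h2 := my_div_pow_le (a := 2 * k + 2 + 1) h1
      rw [pow_one] at h2
      omega

lemma subtr_zero (j : ℕ) : subtr 0 j := by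
  refine ⟨Nat.log 2 (j + 1), ?_⟩
  have h1 : 2 ^ Nat.log 2 (j + 1) ≤ j + 1 := Nat.pow_log_le_self 2 (by omega)
  have h2 : j + 1 < 2 ^ (Nat.log 2 (j + 1) + 1) := Nat.lt_pow_succ_log_self (by norm_num) _
  rw [pow_succ] at h2
  exact Nat.div_eq_of_lt_le (by omega) (by omega)

/-- Parity of the number of `true` coordinates of `y` inside `s`. -/
def par {n : ℕ} (s : Finset (Fin n)) (y : Fin n → Bool) : Bool :=
  decide ((s.filter (fun j => y j = true)).card % 2 = 1)

lemma par_empty {n : ℕ} (y : Fin n → Bool) : par (∅ : Finset (Fin n)) y = false := by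
  simp [par]

lemma par_singleton {n : ℕ} (k : Fin n) (y : Fin n → Bool) : par {k} y = y k := by
  rw [par, Finset.filter_singleton]
  cases h : y k <;> simp [h]

lemma par_union {n : ℕ} {s t : Finset (Fin n)} (hd : Disjoint s t) (y : Fin n → Bool) :
    par (s ∪ t) y = xor (par s y) (par t y) := by
  rw [par, par, par, Finset.filter_union,
    Finset.card_union_of_disjoint (Finset.disjoint_filter_filter hd)]
  rcases Nat.mod_two_eq_zero_or_one (s.filter (fun j => y j = true)).card with h1 | h1 <;>
    rcases Nat.mod_two_eq_zero_or_one (t.filter (fun j => y j = true)).card with h2 | h2 <;>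
      simp [Nat.add_mod, h1, h2]

/-- `ginv` computes parity over the subtree. -/
lemma ginv_eq_par {n : ℕ} (y : Fin n → Bool) :
    ∀ m k, n ≤ k + m →
      ginv n y k = par (Finset.univ.filter fun j : Fin n => subtr k j.1) y := by
  intro m
  induction m with
  | zero =>
    intro k hk
    rw [ginv, dif_neg (by omega)]
    have he : (Finset.univ.filter fun j : Fin n => subtr k j.1) = ∅ := by
      apply Finset.filter_false_of_mem
      intro j _ hs
      have := subtr_le hs
      have := j.2
      omega
    rw [he, par_empty]
  | succ m ih =>
    intro k hk
    by_cases h : k < n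
    · rw [ginv, dif_pos h]
      rw [ih (2 * k + 1) (by omega), ih (2 * k + 2) (by omega)]
      have hsplit : (Finset.univ.filter fun j : Fin n => subtr k j.1)
          = {(⟨k, h⟩ : Fin n)} ∪
            ((Finset.univ.filter fun j : Fin n => subtr (2 * k + 1) j.1) ∪
             (Finset.univ.filter fun j : Fin n => subtr (2 * k + 2) j.1)) := by
        ext j
        simp only [Finset.mem_filter, Finset.mem_univ, true_and, Finset.mem_union,
          Finset.mem_singleton]
        constructor
        · intro hs
          rcases subtr_split hs with h1 | h1 | h1
          · left; exact Fin.ext h1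
          · right; left; exact h1
          · right; right; exact h1
        · rintro (h1 | h1 | h1)
          · subst h1; exact subtr_self k
          · exact subtr_child1 h1
          · exact subtr_child2 h1
      have hd2 : Disjoint (Finset.univ.filter fun j : Fin n => subtr (2 * k + 1) j.1)
          (Finset.univ.filter fun j : Fin n => subtr (2 * k + 2) j.1) := by
        rw [Finset.disjoint_left]
        intro j hj1 hj2
        simp only [Finset.mem_filter, Finset.mem_univ, true_and] at hj1 hj2
        exact subtr_disj hj1 hj2
      have hd1 : Disjoint ({(⟨k, h⟩ : Fin n)} : Finset (Fin n))
          ((Finset.univ.filter fun j : Fin n => subtr (2 * k + 1) j.1) ∪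
           (Finset.univ.filter fun j : Fin n => subtr (2 * k + 2) j.1)) := by
        rw [Finset.disjoint_left]
        intro j hj1 hj2
        simp only [Finset.mem_singleton] at hj1
        simp only [Finset.mem_union, Finset.mem_filter, Finset.mem_univ, true_and] at hj2
        have hjk : j.1 = k := by rw [hj1]
        rcases hj2 with h1 | h1 <;> (have := subtr_le h1; omega)
      rw [hsplit, par_union hd1 y, par_union hd2 y, par_singleton]
    · rw [ginv, dif_neg h]
      have he : (Finset.univ.filter fun j : Fin n => subtr k j.1) = ∅ := by
        apply Finset.filter_false_of_mem
        intro j _ hs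
        have := subtr_le hs
        have := j.2
        omega
      rw [he, par_empty]

lemma ginv_phi {n : ℕ} (x : Fin n → Bool) :
    ∀ m k, n ≤ k + m → ginv n (fun i => phiF x i) k = getb x k := by
  intro m
  induction m with
  | zero =>
    intro k hk
    rw [ginv, dif_neg (by omega), getb, dif_neg (by omega)]
  | succ m ih =>
    intro k hk
    by_cases h : k < n
    · rw [ginv, dif_pos h, ih (2 * k + 1) (by omega), ih (2 * k + 2) (by omega)]
      have hr : getb x k = x ⟨k, h⟩ := dif_pos h
      rw [hr]
      show xor (xor (x ⟨k, h⟩) (xor (getb x (2 * k + 1)) (getb x (2 * k + 2))))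
        (xor (getb x (2 * k + 1)) (getb x (2 * k + 2))) = x ⟨k, h⟩
      generalize x ⟨k, h⟩ = a
      generalize getb x (2 * k + 1) = b
      generalize getb x (2 * k + 2) = c
      cases a <;> cases b <;> cases c <;> rfl
    · rw [ginv, dif_neg h, getb, dif_neg h]

lemma ginv_out {n : ℕ} (y : Fin n → Bool) {k : ℕ} (h : ¬ k < n) : ginv n y k = false := by
  rw [ginv, dif_neg h]

lemma phi_ginv {n : ℕ} (y : Fin n → Bool) (i : Fin n) :
    phiF (fun j => ginv n y j.1) i = y i := by
  have hg : ∀ k, getb (fun j : Fin n => ginv n y j.1) k = ginv n y k := by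
    intro k
    by_cases h : k < n
    · rw [getb, dif_pos h]
    · rw [getb, dif_neg h, ginv_out y h]
  rw [phiF, hg, hg]
  conv_lhs => rw [show ginv n y i.1 = xor (y i) (xor (ginv n y (2 * i.1 + 1))
    (ginv n y (2 * i.1 + 2))) by rw [ginv, dif_pos i.2]]
  generalize y i = a
  generalize ginv n y (2 * i.1 + 1) = b
  generalize ginv n y (2 * i.1 + 2) = c
  cases a <;> cases b <;> cases c <;> rfl

/-- There is a bijection `φ` from `Dictator` to `XOR` that is linear over `GF(2)`,
3-local, 2-Lipschitz, and whose inverse is `(⌊log₂ n⌋ + 1)`-Lipschitz. -/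
theorem dictator_to_xor_local_linear (n : ℕ) (hn : 0 < n) :
    ∃ φ : (Fin n → Bool) → (Fin n → Bool),
      Function.Bijective φ ∧
      (∀ z : Fin n → Bool, dictator z = xorFun (φ z)) ∧
      (∀ x y : Fin n → Bool,
        φ (fun i => xor (x i) (y i)) = fun i => xor (φ x i) (φ y i)) ∧
      (∀ i : Fin n, ∃ S : Finset (Fin n), S.card ≤ 3 ∧
        ∀ x y : Fin n → Bool, (∀ j ∈ S, x j = y j) → φ x i = φ y i) ∧
      (∀ x y : Fin n → Bool, hammingDist (φ x) (φ y) ≤ 2 * hammingDist x y) ∧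
      (∀ g : (Fin n → Bool) → (Fin n → Bool),
        Function.LeftInverse g φ → Function.RightInverse g φ →
        ∀ x y : Fin n → Bool,
          hammingDist (g x) (g y) ≤ (Nat.log 2 n + 1) * hammingDist x y) := by
  refine ⟨fun x => (fun i => phiF x i), ?_, ?_, ?_, ?_, ?_, ?_⟩
  · -- Bijective
    refine Function.bijective_iff_has_inverse.2
      ⟨fun y => (fun i => ginv n y i.1), ?_, ?_⟩
    · intro x
      funext i
      show ginv n (fun j => phiF x j) i.1 = x i
      have hh := ginv_phi x n i.1 (by omega)
      rw [hh]
      show dite _ _ _ = _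
      rw [dif_pos i.2]
    · intro y
      funext i
      exact phi_ginv y i
  · -- dictator ↦ xor
    intro z
    show dictator z = xorFun (fun i => phiF z i)
    have h0 : ginv n (fun i => phiF z i) 0 = getb z 0 := ginv_phi z n 0 (by omega)
    have hpar := ginv_eq_par (fun i => phiF z i) n 0 (by omega)
    have huniv : (Finset.univ.filter fun j : Fin n => subtr 0 j.1) = Finset.univ := by
      apply Finset.filter_true_of_mem
      intro j _
      exact subtr_zero j.1
    rw [huniv] at hpar
    have hxf : xorFun (fun i => phiF z i) = par Finset.univ (fun i => phiF z i) := rfl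
    rw [hxf, ← hpar, h0, dictator, dif_pos hn]
    show z ⟨0, hn⟩ = getb z 0
    rw [getb, dif_pos hn]
  · -- linearity
    intro x y
    funext i
    have hg : ∀ k, getb (fun j : Fin n => xor (x j) (y j)) k
        = xor (getb x k) (getb y k) := by
      intro k
      by_cases h : k < n
      · show dite _ _ _ = xor (dite _ _ _) (dite _ _ _)
        rw [dif_pos h, dif_pos h, dif_pos h]
      · show dite _ _ _ = xor (dite _ _ _) (dite _ _ _)
        rw [dif_neg h, dif_neg h, dif_neg h]
        rfl
    show phiF (fun j => xor (x j) (y j)) i = xor (phiF x i) (phiF y i)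
    rw [phiF, phiF, phiF, hg, hg]

    generalize x i = a₁
    generalize y i = a₂
    generalize getb x (2 * i.1 + 1) = b₁
    generalize getb y (2 * i.1 + 1) = b₂
    generalize getb x (2 * i.1 + 2) = c₁
    generalize getb y (2 * i.1 + 2) = c₂
    cases a₁ <;> cases a₂ <;> cases b₁ <;> cases b₂ <;> cases c₁ <;> cases c₂ <;> rfl
  · -- 3-locality
    intro i
    classical
    refine ⟨insert i ((if h : 2 * i.1 + 1 < n then {(⟨2 * i.1 + 1, h⟩ : Fin n)} else ∅) ∪
      (if h : 2 * i.1 + 2 < n then {(⟨2 * i.1 + 2, h⟩ : Fin n)} else ∅)), ?_, ?_⟩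
    · refine le_trans (Finset.card_insert_le _ _) ?_
      have := Finset.card_union_le
        (if h : 2 * i.1 + 1 < n then ({(⟨2 * i.1 + 1, h⟩ : Fin n)} : Finset (Fin n)) else ∅)
        (if h : 2 * i.1 + 2 < n then ({(⟨2 * i.1 + 2, h⟩ : Fin n)} : Finset (Fin n)) else ∅)
      have h1 : (if h : 2 * i.1 + 1 < n then ({(⟨2 * i.1 + 1, h⟩ : Fin n)} : Finset (Fin n))
          else ∅).card ≤ 1 := by
        split <;> simp
      have h2 : (if h : 2 * i.1 + 2 < n then ({(⟨2 * i.1 + 2, h⟩ : Fin n)} : Finset (Fin n))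
          else ∅).card ≤ 1 := by
        split <;> simp
      omega
    · intro x y hxy
      show phiF x i = phiF y i
      have hxi : x i = y i := hxy i (Finset.mem_insert_self _ _)
      have h1 : getb x (2 * i.1 + 1) = getb y (2 * i.1 + 1) := by
        by_cases h : 2 * i.1 + 1 < n
        · rw [getb, getb, dif_pos h, dif_pos h]
          refine hxy _ (Finset.mem_insert_of_mem (Finset.mem_union_left _ ?_))
          rw [dif_pos h]
          exact Finset.mem_singleton_self _
        · rw [getb, getb, dif_neg h, dif_neg h]
      have h2 : getb x (2 * i.1 + 2) = getb y (2 * i.1 + 2) := by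
        by_cases h : 2 * i.1 + 2 < n
        · rw [getb, getb, dif_pos h, dif_pos h]
          refine hxy _ (Finset.mem_insert_of_mem (Finset.mem_union_right _ ?_))
          rw [dif_pos h]
          exact Finset.mem_singleton_self _
        · rw [getb, getb, dif_neg h, dif_neg h]
      rw [phiF, phiF, hxi, h1, h2]
  · -- 2-Lipschitz
    intro x y
    classical
    rw [hammingDist, hammingDist]
    set B := Finset.univ.filter fun j : Fin n => x j ≠ y j with hB
    set p : Fin n → Fin n := fun j => ⟨(j.1 - 1) / 2, by
      have := j.2
      omega⟩ with hp
    have hsub : (Finset.univ.filter fun i : Fin n => phiF x i ≠ phiF y i)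
        ⊆ B ∪ B.image p := by
      intro i hi
      simp only [Finset.mem_filter, Finset.mem_univ, true_and] at hi
      rw [Finset.mem_union]
      by_cases hxi : x i = y i
      · right
        rw [Finset.mem_image]
        by_cases h1 : getb x (2 * i.1 + 1) = getb y (2 * i.1 + 1)
        · -- then coordinate 2i+2 must differ
          have h2 : getb x (2 * i.1 + 2) ≠ getb y (2 * i.1 + 2) := by
            intro h2
            apply hi
            rw [phiF, phiF, hxi, h1, h2]
          have hlt : 2 * i.1 + 2 < n := by
            by_contra h
            rw [getb, getb, dif_neg h, dif_neg h] at h2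
            exact h2 rfl
          refine ⟨⟨2 * i.1 + 2, hlt⟩, ?_, ?_⟩
          · rw [hB, Finset.mem_filter]
            refine ⟨Finset.mem_univ _, ?_⟩
            rw [getb, getb, dif_pos hlt, dif_pos hlt] at h2
            exact h2
          · rw [hp]
            apply Fin.ext
            show (2 * i.1 + 2 - 1) / 2 = i.1
            omega
        · have hlt : 2 * i.1 + 1 < n := by
            by_contra h
            rw [getb, getb, dif_neg h, dif_neg h] at h1
            exact h1 rfl
          refine ⟨⟨2 * i.1 + 1, hlt⟩, ?_, ?_⟩
          · rw [hB, Finset.mem_filter]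
            refine ⟨Finset.mem_univ _, ?_⟩
            rw [getb, getb, dif_pos hlt, dif_pos hlt] at h1
            exact h1
          · rw [hp]
            apply Fin.ext
            show (2 * i.1 + 1 - 1) / 2 = i.1
            omega
      · left
        rw [hB, Finset.mem_filter]
        exact ⟨Finset.mem_univ _, hxi⟩
    calc (Finset.univ.filter fun i : Fin n => phiF x i ≠ phiF y i).card
        ≤ (B ∪ B.image p).card := Finset.card_le_card hsub
      _ ≤ B.card + (B.image p).card := Finset.card_union_le _ _
      _ ≤ B.card + B.card := by
          have := Finset.card_image_le (s := B) (f := p)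
          omega
      _ = 2 * B.card := by ring
  · -- inverse is (log₂ n + 1)-Lipschitz
    intro g hL hR x y
    classical
    -- g must be our explicit inverse
    have hg : g = fun y => (fun i : Fin n => ginv n y i.1) := by
      funext z
      have h1 : (fun i : Fin n => phiF ((fun j : Fin n => ginv n z j.1)) i) = z := by
        funext i
        exact phi_ginv z i
      calc g z = g (fun i : Fin n => phiF ((fun j : Fin n => ginv n z j.1)) i) := by rw [h1]
        _ = fun i : Fin n => ginv n z i.1 := hL _
    subst hg
    rw [hammingDist, hammingDist]
    set B := Finset.univ.filter fun j : Fin n => x j ≠ y j with hB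
    -- ancestors of j, as a Finset
    set anc : Fin n → Finset (Fin n) := fun j =>
      (Finset.range (Nat.log 2 n + 1)).image fun t =>
        (⟨(j.1 + 1) / 2 ^ t - 1, by
          have h1 : (j.1 + 1) / 2 ^ t ≤ j.1 + 1 := Nat.div_le_self _ _
          have := j.2
          omega⟩ : Fin n) with hanc
    have hsub : (Finset.univ.filter fun i : Fin n => ginv n x i.1 ≠ ginv n y i.1)
        ⊆ B.biUnion anc := by
      intro i hi
      simp only [Finset.mem_filter, Finset.mem_univ, true_and] at hi
      -- find a coordinate in the subtree of i where x,y differ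
      have hex : ∃ j : Fin n, subtr i.1 j.1 ∧ x j ≠ y j := by
        by_contra hc
        push_neg at hc
        apply hi
        rw [ginv_eq_par x n i.1 (by omega), ginv_eq_par y n i.1 (by omega)]
        rw [par, par]
        have hset : ((Finset.univ.filter fun j : Fin n => subtr i.1 j.1).filter
              fun j => x j = true)
            = ((Finset.univ.filter fun j : Fin n => subtr i.1 j.1).filter
              fun j => y j = true) := by
          ext j
          simp only [Finset.mem_filter, Finset.mem_univ, true_and]
          constructor
          · rintro ⟨hs, hx⟩
            exact ⟨hs, by rw [← hc j hs]; exact hx⟩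
          · rintro ⟨hs, hy⟩
            exact ⟨hs, by rw [hc j hs]; exact hy⟩
        rw [hset]
      obtain ⟨j, hs, hne⟩ := hex
      rw [Finset.mem_biUnion]
      refine ⟨j, ?_, ?_⟩
      · rw [hB, Finset.mem_filter]; exact ⟨Finset.mem_univ _, hne⟩
      · obtain ⟨t, ht⟩ := hs
        rw [hanc]
        simp only [Finset.mem_image, Finset.mem_range]
        refine ⟨t, ?_, ?_⟩
        · -- t ≤ log₂ n
          have h2 : 2 ^ t ≤ j.1 + 1 := by
            by_contra h
            rw [Nat.div_eq_of_lt (by omega)] at ht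
            omega
          have h3 : 2 ^ t ≤ n := le_trans h2 j.2
          have := (Nat.le_log_iff_pow_le (by norm_num) (by omega)).2 h3
          omega
        · apply Fin.ext
          show (j.1 + 1) / 2 ^ t - 1 = i.1
          omega
    have hcard : ∀ j : Fin n, (anc j).card ≤ Nat.log 2 n + 1 := by
      intro j
      rw [hanc]
      refine le_trans (Finset.card_image_le) ?_
      simp
    calc (Finset.univ.filter fun i : Fin n => ginv n x i.1 ≠ ginv n y i.1).card
        ≤ (B.biUnion anc).card := Finset.card_le_card hsub
      _ ≤ ∑ j ∈ B, (anc j).card := Finset.card_biUnion_le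
      _ ≤ ∑ _j ∈ B, (Nat.log 2 n + 1) := Finset.sum_le_sum fun j _ => hcard j
      _ = B.card * (Nat.log 2 n + 1) := by rw [Finset.sum_const, smul_eq_mul]
      _ = (Nat.log 2 n + 1) * B.card := Nat.mul_comm _ _
end

section
/- There exists an absolute constant C such that for every odd integer n there exists a C-Lipschitz bijection ψ : {0,1}^n → {0,1}^n that is a mapping from Majority to XOR (i.e., Majority(z) = XOR(ψ(z)) for every z ∈ {0,1}^n). -/
namespace MXL

/-- walk -/
def S (x : ℕ → Bool) : ℕ → ℤ
  | 0 => 0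
  | j+1 => S x j + (if x j then 1 else -1)

lemma S_succ (x : ℕ → Bool) (j : ℕ) : S x (j+1) = S x j + (if x j then 1 else -1) := rfl

/-- prefix minimum of walk over `[0,j]` -/
def mmin (x : ℕ → Bool) : ℕ → ℤ
  | 0 => 0
  | j+1 => min (mmin x j) (S x (j+1))

/-- minimum of walk over `[j, j+k]` -/
def rmw (x : ℕ → Bool) : ℕ → ℕ → ℤ
  | j, 0 => S x j
  | j, k+1 => min (S x j) (rmw x (j+1) k)

def isU0 (x : ℕ → Bool) (u : ℕ) : Prop := ∀ j ≤ u, S x (u+1) < S x j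

def isU1 (x : ℕ → Bool) (n u : ℕ) : Prop := ∀ j ≤ n, u < j → S x u < S x j

instance (x : ℕ → Bool) (u : ℕ) : Decidable (isU0 x u) := by
  unfold isU0; infer_instance

instance (x : ℕ → Bool) (n u : ℕ) : Decidable (isU1 x n u) := by
  unfold isU1; infer_instance

lemma mmin_le (x : ℕ → Bool) : ∀ j, ∀ t ≤ j, mmin x j ≤ S x t := by
  intro j
  induction j with
  | zero => intro t ht; simp at ht; simp [ht, mmin, S]
  | succ j ih =>
    intro t ht
    rcases Nat.le_succ_iff_eq_or_le.mp ht with h | h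
    · subst h; simp [mmin]
    · exact le_trans (by simp [mmin]) (ih t h)

lemma exists_mmin (x : ℕ → Bool) : ∀ j, ∃ t ≤ j, mmin x j = S x t := by
  intro j
  induction j with
  | zero => exact ⟨0, le_refl _, rfl⟩
  | succ j ih =>
    rcases ih with ⟨t, ht, h⟩
    rcases le_total (mmin x j) (S x (j+1)) with h' | h'
    · refine ⟨t, le_trans ht (Nat.le_succ _), ?_⟩
      show min (mmin x j) (S x (j+1)) = S x t
      rw [min_eq_left h', h]
    · refine ⟨j+1, le_refl _, ?_⟩
      show min (mmin x j) (S x (j+1)) = S x (j+1)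
      rw [min_eq_right h']

lemma mmin_nonpos (x : ℕ → Bool) (j : ℕ) : mmin x j ≤ 0 := by
  simpa [S] using mmin_le x j 0 (Nat.zero_le _)

lemma isU0_iff_mmin (x : ℕ → Bool) (u : ℕ) : isU0 x u ↔ S x (u+1) < mmin x u := by
  constructor
  · intro h
    rcases exists_mmin x u with ⟨t, ht, he⟩
    rw [he]; exact h t ht
  · intro h j hj
    exact lt_of_lt_of_le h (mmin_le x u j hj)

lemma rmw_le (x : ℕ → Bool) : ∀ k j t, j ≤ t → t ≤ j + k → rmw x j k ≤ S x t := by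
  intro k
  induction k with
  | zero => intro j t h1 h2; have : j = t := le_antisymm h1 (by omega); simp [this, rmw]
  | succ k ih =>
    intro j t h1 h2
    rcases eq_or_lt_of_le h1 with h | h
    · subst h; simp [rmw]
    · exact le_trans (by simp [rmw]) (ih (j+1) t (by omega) (by omega))

lemma exists_rmw (x : ℕ → Bool) : ∀ k j, ∃ t, j ≤ t ∧ t ≤ j + k ∧ rmw x j k = S x t := by
  intro k
  induction k with
  | zero => intro j; exact ⟨j, le_refl _, by omega, rfl⟩
  | succ k ih =>
    intro j
    rcases ih (j+1) with ⟨t, h1, h2, h3⟩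
    rcases le_total (S x j) (rmw x (j+1) k) with h' | h'
    · refine ⟨j, le_refl _, by omega, ?_⟩
      show min (S x j) (rmw x (j+1) k) = S x j
      rw [min_eq_left h']
    · refine ⟨t, by omega, by omega, ?_⟩
      show min (S x j) (rmw x (j+1) k) = S x t
      rw [min_eq_right h', h3]

lemma isU1_iff_rmw (x : ℕ → Bool) (n u : ℕ) (hu : u < n) :
    isU1 x n u ↔ S x u < rmw x (u+1) (n - (u+1)) := by
  constructor
  · intro h
    rcases exists_rmw x (n - (u+1)) (u+1) with ⟨t, h1, h2, h3⟩
    rw [h3]; exact h t (by omega) (by omega)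
  · intro h j hj hj2
    exact lt_of_lt_of_le h (rmw_le x (n - (u+1)) (u+1) j (by omega) (by omega))

lemma S_step_le (x : ℕ → Bool) (j : ℕ) : S x (j+1) ≤ S x j + 1 := by
  cases h : x j <;> simp [S_succ, h]

lemma S_step_ge (x : ℕ → Bool) (j : ℕ) : S x j - 1 ≤ S x (j+1) := by
  cases h : x j <;> simp [S_succ, h] <;> omega

lemma isU0_false (x : ℕ → Bool) (u : ℕ) (h : isU0 x u) : x u = false := by
  have h2 := h u (le_refl _)
  rw [S_succ] at h2
  cases hb : x u
  · rfl
  · rw [hb] at h2; simp at h2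

lemma isU1_true (x : ℕ → Bool) (n u : ℕ) (hu : u < n) (h : isU1 x n u) : x u = true := by
  have h2 := h (u+1) (by omega) (by omega)
  rw [S_succ] at h2
  cases hb : x u
  · rw [hb] at h2; simp at h2
  · rfl

/-- ordering: any U0 record comes strictly before any U1 record -/
lemma isU0_lt_isU1 (x : ℕ → Bool) (n u v : ℕ) (hu : isU0 x u) (hv : isU1 x n v)
    (hun : u < n) : v < u → False := by
  intro hlt
  have h1 : S x (u+1) < S x v := hu v (by omega)
  have h2 : S x v < S x (u+1) := hv (u+1) (by omega) (by omega)
  omega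

lemma isU0_ne_isU1 (x : ℕ → Bool) (n u : ℕ) (hu : isU0 x u) (hv : isU1 x n u) (hun : u < n) :
    False := by
  have := isU0_false x u hu
  have := isU1_true x n u hun hv
  simp_all

lemma isU0_le_isU1 (x : ℕ → Bool) (n u v : ℕ) (hu : isU0 x u) (hv : isU1 x n v)
    (hun : u < n) : u < v := by
  rcases lt_trichotomy u v with h | h | h
  · exact h
  · subst h; exact absurd (isU0_ne_isU1 x n u hu hv hun) (by simp)
  · exact absurd (isU0_lt_isU1 x n u v hu hv hun h) (by simp)

end MXL
namespace MXL

def U0s (x : ℕ → Bool) (n : ℕ) : Finset ℕ := (Finset.range n).filter (fun u => isU0 x u)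
def U1s (x : ℕ → Bool) (n : ℕ) : Finset ℕ := (Finset.range n).filter (fun u => isU1 x n u)
def Us (x : ℕ → Bool) (n : ℕ) : Finset ℕ :=
  (Finset.range n).filter (fun u => isU0 x u ∨ isU1 x n u)

def aSt (x : ℕ → Bool) (n : ℕ) : ℕ := (U0s x n).card
def bSt (x : ℕ → Bool) (n : ℕ) : ℕ := (U1s x n).card
def sSt (x : ℕ → Bool) (n : ℕ) : ℕ := (Us x n).card

/-- number of `U0` records before `j` (does not depend on `n`) -/
def a0f (x : ℕ → Bool) (j : ℕ) : ℕ := ((Finset.range j).filter (fun u => isU0 x u)).card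
/-- number of `U1` records before `j` -/
def bef (x : ℕ → Bool) (n j : ℕ) : ℕ := ((Finset.range j).filter (fun u => isU1 x n u)).card
/-- number of `U1` records in `[j, n)` -/
def b1f (x : ℕ → Bool) (n j : ℕ) : ℕ := ((Finset.Ico j n).filter (fun u => isU1 x n u)).card
/-- number of records before `j` -/
def alf (x : ℕ → Bool) (n j : ℕ) : ℕ := ((Us x n).filter (fun v => v < j)).card
/-- rank (1-based, for elements of `Us`) -/
def rk (x : ℕ → Bool) (n u : ℕ) : ℕ := ((Us x n).filter (fun v => v ≤ u)).card

lemma mem_Us (x : ℕ → Bool) (n u : ℕ) :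
    u ∈ Us x n ↔ u < n ∧ (isU0 x u ∨ isU1 x n u) := by
  simp [Us]

lemma mmin_card (x : ℕ → Bool) : ∀ j, mmin x j = -(a0f x j : ℤ) := by
  intro j
  induction j with
  | zero => simp [mmin, a0f]
  | succ j ih =>
    have hstep : a0f x (j+1) = a0f x j + (if isU0 x j then 1 else 0) := by
      unfold a0f
      rw [Finset.range_add_one, Finset.filter_insert]
      split
      · rw [Finset.card_insert_of_notMem (by simp)]
      · simp
    have hm : mmin x (j+1) = min (mmin x j) (S x (j+1)) := rfl
    by_cases h : isU0 x j
    · have h1 : S x (j+1) < mmin x j := (isU0_iff_mmin x j).mp h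
      have h2 : mmin x j - 1 ≤ S x (j+1) :=
        le_trans (by have := mmin_le x j j (le_refl _); omega) (S_step_ge x j)
      rw [hstep]; simp [h] at *
      omega
    · have h1 : ¬ (S x (j+1) < mmin x j) := fun hc => h ((isU0_iff_mmin x j).mpr hc)
      rw [hstep]; simp [h] at *
      omega

lemma b1f_eq (x : ℕ → Bool) (n : ℕ) : ∀ k j, j + k = n → (b1f x n j : ℤ) = S x n - rmw x j k := by
  intro k
  induction k with
  | zero =>
    intro j hj
    have : j = n := by omega
    subst this
    simp [b1f, rmw]
  | succ k ih =>
    intro j hj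
    have hjn : j < n := by omega
    have hstep : b1f x n j = (if isU1 x n j then 1 else 0) + b1f x n (j+1) := by
      unfold b1f
      rw [show Finset.Ico j n = insert j (Finset.Ico (j+1) n) by
        rw [Finset.insert_Ico_add_one_left_eq_Ico hjn], Finset.filter_insert]
      split
      · rw [Finset.card_insert_of_notMem (by simp)]; omega
      · simp
    have hrm : rmw x j (k+1) = min (S x j) (rmw x (j+1) k) := rfl
    have hiu : isU1 x n j ↔ S x j < rmw x (j+1) k := by
      have := isU1_iff_rmw x n j hjn
      rwa [show n - (j+1) = k by omega] at this
    have ihj := ih (j+1) (by omega)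
    by_cases h : isU1 x n j
    · have h1 : S x j < rmw x (j+1) k := hiu.mp h
      have h2 : rmw x (j+1) k ≤ S x j + 1 :=
        le_trans (rmw_le x k (j+1) (j+1) (le_refl _) (by omega)) (S_step_le x j)
      rw [hstep]; simp [h] at *
      omega
    · have h1 : ¬ (S x j < rmw x (j+1) k) := fun hc => h (hiu.mpr hc)
      rw [hstep]; simp [h] at *
      omega

lemma mmin_eq_rmw (x : ℕ → Bool) (j : ℕ) : mmin x j = rmw x 0 j := by
  apply le_antisymm
  · rcases exists_rmw x j 0 with ⟨t, _, h2, h3⟩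
    rw [h3]; exact mmin_le x j t (by omega)
  · rcases exists_mmin x j with ⟨t, ht, h⟩
    rw [h]; exact rmw_le x j 0 t (by omega) (by omega)

lemma aSt_eq_a0f (x : ℕ → Bool) (n : ℕ) : aSt x n = a0f x n := rfl

lemma bSt_eq_b1f (x : ℕ → Bool) (n : ℕ) : bSt x n = b1f x n 0 := by
  unfold bSt b1f U1s
  congr 1
  rw [Finset.range_eq_Ico]

lemma S_n_eq (x : ℕ → Bool) (n : ℕ) : S x n = (bSt x n : ℤ) - (aSt x n : ℤ) := by
  have h1 : (b1f x n 0 : ℤ) = S x n - rmw x 0 n := b1f_eq x n n 0 (by omega)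
  rw [← mmin_eq_rmw] at h1
  rw [mmin_card] at h1
  rw [bSt_eq_b1f, aSt_eq_a0f]
  omega

lemma a0f_mono (x : ℕ → Bool) {j j' : ℕ} (h : j ≤ j') : a0f x j ≤ a0f x j' :=
  Finset.card_le_card (Finset.filter_subset_filter _ (Finset.range_subset_range.mpr h))

lemma bef_mono (x : ℕ → Bool) (n : ℕ) {j j' : ℕ} (h : j ≤ j') : bef x n j ≤ bef x n j' :=
  Finset.card_le_card (Finset.filter_subset_filter _ (Finset.range_subset_range.mpr h))

lemma alf_split (x : ℕ → Bool) (n : ℕ) (j : ℕ) (hj : j ≤ n) :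
    alf x n j = a0f x j + bef x n j := by
  unfold alf a0f bef
  have h1 : (Us x n).filter (fun v => v < j) =
      ((Finset.range j).filter (fun u => isU0 x u)) ∪
      ((Finset.range j).filter (fun u => isU1 x n u)) := by
    ext u
    simp [Us, Finset.mem_filter, Finset.mem_range]
    constructor
    · rintro ⟨⟨hn, h | h⟩, hlt⟩
      · exact Or.inl ⟨hlt, h⟩
      · exact Or.inr ⟨hlt, h⟩
    · rintro (⟨hlt, h⟩ | ⟨hlt, h⟩)
      · exact ⟨⟨by omega, Or.inl h⟩, hlt⟩
      · exact ⟨⟨by omega, Or.inr h⟩, hlt⟩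
  have hd : Disjoint ((Finset.range j).filter (fun u => isU0 x u))
      ((Finset.range j).filter (fun u => isU1 x n u)) := by
    rw [Finset.disjoint_left]
    intro u hu hu2
    simp only [Finset.mem_filter, Finset.mem_range] at hu hu2
    exact isU0_ne_isU1 x n u hu.2 hu2.2 (by omega)
  rw [h1, Finset.card_union_of_disjoint hd]

lemma a0f_le_aSt (x : ℕ → Bool) (n : ℕ) (j : ℕ) (hj : j ≤ n) : a0f x j ≤ aSt x n := by
  rw [aSt_eq_a0f]; exact a0f_mono x hj

lemma bef_le_bSt (x : ℕ → Bool) (n : ℕ) (j : ℕ) (hj : j ≤ n) : bef x n j ≤ bSt x n :=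
  Finset.card_le_card (Finset.filter_subset_filter _ (Finset.range_subset_range.mpr hj))

lemma bef_add_b1f (x : ℕ → Bool) (n : ℕ) (j : ℕ) (hj : j ≤ n) :
    bef x n j + b1f x n j = bSt x n := by
  unfold bef b1f bSt U1s
  rw [← Finset.card_union_of_disjoint]
  · congr 1
    rw [← Finset.filter_union]
    congr 1
    rw [Finset.range_eq_Ico, Finset.range_eq_Ico]
    exact Finset.Ico_union_Ico_eq_Ico (by omega) hj
  · exact Finset.disjoint_filter_filter (by
      rw [Finset.disjoint_left]; intro u hu hu2; simp at hu hu2; omega)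

lemma a0f_sat (x : ℕ → Bool) (n : ℕ) (j : ℕ) (hj : j ≤ n) (h : bef x n j ≠ 0) :
    a0f x j = aSt x n := by
  rcases Finset.card_ne_zero.mp h with ⟨v, hv⟩
  simp only [Finset.mem_filter, Finset.mem_range] at hv
  apply le_antisymm (a0f_le_aSt x n j hj)
  apply Finset.card_le_card
  intro u hu
  simp only [U0s, Finset.mem_filter, Finset.mem_range] at hu ⊢
  have := isU0_le_isU1 x n u v hu.2 hv.2 (by omega)
  exact ⟨by omega, hu.2⟩

end MXL
namespace MXL

lemma rk_eq_alf (x : ℕ → Bool) (n u : ℕ) : rk x n u = alf x n (u+1) := by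
  unfold rk alf
  congr 1
  ext v
  simp [Nat.lt_succ_iff]

lemma alf_mono (x : ℕ → Bool) (n : ℕ) {j j' : ℕ} (h : j ≤ j') : alf x n j ≤ alf x n j' := by
  apply Finset.card_le_card
  intro v hv
  simp only [Finset.mem_filter] at hv ⊢
  exact ⟨hv.1, by omega⟩

lemma alf_n (x : ℕ → Bool) (n j : ℕ) (h : n ≤ j) : alf x n j = sSt x n := by
  unfold alf sSt
  congr 1
  apply Finset.filter_true_of_mem
  intro v hv
  rw [mem_Us] at hv
  omega

lemma alf_le_sSt (x : ℕ → Bool) (n j : ℕ) : alf x n j ≤ sSt x n :=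
  Finset.card_le_card (Finset.filter_subset _ _)

lemma rk_le_sSt (x : ℕ → Bool) (n u : ℕ) : rk x n u ≤ sSt x n :=
  Finset.card_le_card (Finset.filter_subset _ _)

lemma rk_pos (x : ℕ → Bool) (n u : ℕ) (hu : u ∈ Us x n) : 1 ≤ rk x n u := by
  apply Finset.card_pos.mpr
  exact ⟨u, Finset.mem_filter.mpr ⟨hu, le_refl _⟩⟩

lemma rk_lt_rk (x : ℕ → Bool) (n u v : ℕ) (hv : v ∈ Us x n) (h : u < v) :
    rk x n u < rk x n v := by
  apply Finset.card_lt_card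
  constructor
  · intro w hw
    simp only [Finset.mem_filter] at hw ⊢
    exact ⟨hw.1, by omega⟩
  · intro hsub
    have := hsub (Finset.mem_filter.mpr ⟨hv, le_refl _⟩)
    simp at this
    omega

lemma rk_mono (x : ℕ → Bool) (n : ℕ) {u v : ℕ} (h : u ≤ v) : rk x n u ≤ rk x n v := by
  apply Finset.card_le_card
  intro w hw
  simp only [Finset.mem_filter] at hw ⊢
  exact ⟨hw.1, by omega⟩

lemma alf_succ_of_mem (x : ℕ → Bool) (n u : ℕ) (hu : u ∈ Us x n) :
    alf x n (u+1) = alf x n u + 1 := by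
  unfold alf
  have : (Us x n).filter (fun v => v < u+1) = insert u ((Us x n).filter (fun v => v < u)) := by
    ext v
    simp only [Finset.mem_filter, Finset.mem_insert]
    constructor
    · rintro ⟨h1, h2⟩
      rcases Nat.lt_succ_iff_lt_or_eq.mp h2 with h | h
      · exact Or.inr ⟨h1, h⟩
      · exact Or.inl h
    · rintro (h | ⟨h1, h2⟩)
      · subst h; exact ⟨hu, by omega⟩
      · exact ⟨h1, by omega⟩
  rw [this, Finset.card_insert_of_notMem (by simp)]

lemma alf_succ_of_not_mem (x : ℕ → Bool) (n u : ℕ) (hu : u ∉ Us x n) :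
    alf x n (u+1) = alf x n u := by
  unfold alf
  congr 1
  ext v
  simp only [Finset.mem_filter]
  constructor
  · rintro ⟨h1, h2⟩
    refine ⟨h1, ?_⟩
    rcases Nat.lt_succ_iff_lt_or_eq.mp h2 with h | h
    · exact h
    · subst h; exact absurd h1 hu
  · rintro ⟨h1, h2⟩; exact ⟨h1, by omega⟩

lemma rk_of_mem (x : ℕ → Bool) (n u : ℕ) (hu : u ∈ Us x n) :
    rk x n u = alf x n u + 1 := by
  rw [rk_eq_alf, alf_succ_of_mem x n u hu]

lemma bef_zero_of_U0 (x : ℕ → Bool) (n u : ℕ) (hun : u < n) (h : isU0 x u) :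
    bef x n (u+1) = 0 := by
  unfold bef
  rw [Finset.card_eq_zero]
  rw [Finset.filter_eq_empty_iff]
  intro v hv
  simp at hv
  intro hv1
  have := isU0_le_isU1 x n u v h hv1 hun
  omega

lemma bef_succ_of_U1 (x : ℕ → Bool) (n u : ℕ) (h : isU1 x n u) :
    bef x n (u+1) = bef x n u + 1 := by
  unfold bef
  rw [Finset.range_add_one, Finset.filter_insert]
  split
  · rw [Finset.card_insert_of_notMem (by simp)]
  · simp_all

/-- value of the walk just after a U0 record -/
lemma V0 (x : ℕ → Bool) (n u : ℕ) (hun : u < n) (h : isU0 x u) :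
    S x (u+1) = -(rk x n u : ℤ) := by
  have h1 : S x (u+1) = mmin x (u+1) := by
    have := (isU0_iff_mmin x u).mp h
    show S x (u+1) = min (mmin x u) (S x (u+1))
    omega
  have h2 := mmin_card x (u+1)
  have h3 : rk x n u = a0f x (u+1) + bef x n (u+1) := by
    rw [rk_eq_alf, alf_split x n (u+1) (by omega)]
  rw [bef_zero_of_U0 x n u hun h] at h3
  omega

/-- value of the walk at a U1 record -/
lemma V1 (x : ℕ → Bool) (n u : ℕ) (hun : u < n) (h : isU1 x n u) :
    S x u = (rk x n u : ℤ) - 2*(aSt x n) - 1 := by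
  have h1 : S x u = rmw x u (n-u) := by
    apply le_antisymm
    · rcases exists_rmw x (n-u) u with ⟨t, ht1, ht2, ht3⟩
      rcases eq_or_lt_of_le ht1 with he | hlt
      · rw [ht3, ← he]
      · exfalso
        have := h t (by omega) hlt
        have := rmw_le x (n-u) u u (le_refl _) (by omega)
        omega
    · exact rmw_le x (n-u) u u (le_refl _) (by omega)
  have h2 : (b1f x n u : ℤ) = S x n - rmw x u (n-u) := b1f_eq x n (n-u) u (by omega)
  have h3 : bef x n u + b1f x n u = bSt x n := bef_add_b1f x n u (by omega)
  have h4 : rk x n u = a0f x (u+1) + bef x n (u+1) := by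
    rw [rk_eq_alf, alf_split x n (u+1) (by omega)]
  have h5 : bef x n (u+1) = bef x n u + 1 := bef_succ_of_U1 x n u h
  have h6 : a0f x (u+1) = aSt x n := by
    apply a0f_sat x n (u+1) (by omega)
    omega
  have h7 := S_n_eq x n
  omega

lemma floor0 (x : ℕ → Bool) (j : ℕ) : -(a0f x j : ℤ) ≤ S x j := by
  rw [← mmin_card]
  exact mmin_le x j j (le_refl _)

lemma floor1 (x : ℕ → Bool) (n j : ℕ) (hj : j ≤ n) : (bef x n j : ℤ) - aSt x n ≤ S x j := by
  have h1 : (b1f x n j : ℤ) = S x n - rmw x j (n-j) := b1f_eq x n (n-j) j (by omega)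
  have h2 : bef x n j + b1f x n j = bSt x n := bef_add_b1f x n j hj
  have h3 := S_n_eq x n
  have h4 : rmw x j (n-j) ≤ S x j := rmw_le x (n-j) j j (le_refl _) (by omega)
  omega

lemma xval_of_mem (x : ℕ → Bool) (n u : ℕ) (hu : u ∈ Us x n) :
    x u = decide (aSt x n < rk x n u) := by
  rw [mem_Us] at hu
  rcases hu.2 with h | h
  · rw [isU0_false x u h]
    have h3 : rk x n u = a0f x (u+1) + bef x n (u+1) := by
      rw [rk_eq_alf, alf_split x n (u+1) (by omega)]
    rw [bef_zero_of_U0 x n u hu.1 h] at h3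
    have := a0f_le_aSt x n (u+1) (by omega)
    symm
    simpa using by omega
  · rw [isU1_true x n u hu.1 h]
    have h4 : rk x n u = a0f x (u+1) + bef x n (u+1) := by
      rw [rk_eq_alf, alf_split x n (u+1) (by omega)]
    have h5 : bef x n (u+1) = bef x n u + 1 := bef_succ_of_U1 x n u h
    have h6 : a0f x (u+1) = aSt x n := a0f_sat x n (u+1) (by omega) (by omega)
    symm
    simpa using by omega

lemma sSt_split (x : ℕ → Bool) (n : ℕ) : sSt x n = aSt x n + bSt x n := by
  have := alf_n x n n (le_refl _)
  rw [← this, alf_split x n n (le_refl _)]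
  rw [aSt_eq_a0f]
  congr 1

end MXL
namespace MXL

lemma rk_injOn (x : ℕ → Bool) (n : ℕ) : Set.InjOn (rk x n) (Us x n) := by
  intro u hu v hv h
  by_contra hne
  rcases lt_or_gt_of_ne hne with hlt | hlt
  · have := rk_lt_rk x n u v (by simpa using hv) hlt; omega
  · have := rk_lt_rk x n v u (by simpa using hu) hlt; omega

lemma rk_image (x : ℕ → Bool) (n : ℕ) :
    (Us x n).image (rk x n) = Finset.Icc 1 (sSt x n) := by
  apply Finset.eq_of_subset_of_card_le
  · intro r hr
    rcases Finset.mem_image.mp hr with ⟨u, hu, he⟩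
    rw [Finset.mem_Icc, ← he]
    exact ⟨rk_pos x n u hu, rk_le_sSt x n u⟩
  · rw [Nat.card_Icc, Finset.card_image_of_injOn (rk_injOn x n)]
    simp [sSt]

lemma card_rk_le (x : ℕ → Bool) (n m : ℕ) :
    ((Us x n).filter (fun u => rk x n u ≤ m)).card = min (sSt x n) m := by
  have h1 : ((Us x n).filter (fun u => rk x n u ≤ m)).image (rk x n) =
      (Finset.Icc 1 (sSt x n)).filter (fun r => r ≤ m) := by
    rw [← rk_image, Finset.filter_image]
  have h2 : ((Us x n).filter (fun u => rk x n u ≤ m)).card =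
      (((Us x n).filter (fun u => rk x n u ≤ m)).image (rk x n)).card := by
    rw [Finset.card_image_of_injOn ((rk_injOn x n).mono (by
      intro u hu
      exact Finset.mem_coe.mpr (Finset.filter_subset _ _ (Finset.mem_coe.mp hu))))]
  rw [h2, h1]
  have h3 : (Finset.Icc 1 (sSt x n)).filter (fun r => r ≤ m) = Finset.Icc 1 (min (sSt x n) m) := by
    ext r
    simp [Finset.mem_Icc, Finset.mem_filter]
    omega
  rw [h3, Nat.card_Icc]
  omega

/-- the chain rewrite map: rewrite the record positions with `a'` zeros then ones -/
def chi (x : ℕ → Bool) (n a' : ℕ) : ℕ → Bool :=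
  fun j => if j ∈ Us x n then decide (a' < rk x n j) else x j

lemma chi_not_mem (x : ℕ → Bool) (n a' j : ℕ) (h : j ∉ Us x n) : chi x n a' j = x j := by
  simp [chi, h]

lemma chi_mem (x : ℕ → Bool) (n a' j : ℕ) (h : j ∈ Us x n) :
    chi x n a' j = decide (a' < rk x n j) := by
  simp [chi, h]

lemma alf_zero (x : ℕ → Bool) (n : ℕ) : alf x n 0 = 0 := by
  simp [alf]

/-- the walk of the rewrite -/
lemma S_chi (x : ℕ → Bool) (n a' : ℕ) :
    ∀ j, S (chi x n a') j
      = S x j + 2*((min (alf x n j) (aSt x n) : ℕ) : ℤ) - 2*((min (alf x n j) a' : ℕ) : ℤ) := by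
  intro j
  induction j with
  | zero => simp [S, alf_zero]
  | succ j ih =>
    by_cases hj : j ∈ Us x n
    · have ha : alf x n (j+1) = alf x n j + 1 := alf_succ_of_mem x n j hj
      have hx : x j = decide (aSt x n < rk x n j) := xval_of_mem x n j hj
      have hc : chi x n a' j = decide (a' < rk x n j) := chi_mem x n a' j hj
      have hr : rk x n j = alf x n j + 1 := rk_of_mem x n j hj
      rw [S_succ, S_succ, ih, hc, hx, ha, hr]
      by_cases h1 : aSt x n < alf x n j + 1 <;> by_cases h2 : a' < alf x n j + 1 <;>
        simp [h1, h2] <;> omega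
    · have ha : alf x n (j+1) = alf x n j := alf_succ_of_not_mem x n j hj
      have hc : chi x n a' j = x j := chi_not_mem x n a' j hj
      rw [S_succ, S_succ, ih, hc, ha]
      ring

end MXL
namespace MXL

lemma a0f_eq_min (x : ℕ → Bool) (n j : ℕ) (hj : j ≤ n) :
    a0f x j = min (alf x n j) (aSt x n) := by
  have h1 := alf_split x n j hj
  have h2 := a0f_le_aSt x n j hj
  by_cases h : bef x n j = 0
  · omega
  · have := a0f_sat x n j hj h
    omega

lemma bef_eq (x : ℕ → Bool) (n j : ℕ) (hj : j ≤ n) :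
    bef x n j = alf x n j - min (alf x n j) (aSt x n) := by
  have h1 := alf_split x n j hj
  have h2 := a0f_eq_min x n j hj
  omega

section chiFacts

variable (x : ℕ → Bool) (n a' : ℕ)

lemma floorY0 (j : ℕ) (hj : j ≤ n) :
    -((min (alf x n j) a' : ℕ) : ℤ) ≤ S (chi x n a') j := by
  have h1 := S_chi x n a' j
  have h2 := floor0 x j
  have h3 := floor1 x n j hj
  have h4 := a0f_eq_min x n j hj
  have h5 := bef_eq x n j hj
  omega

lemma floorY1 (j : ℕ) (hj : j ≤ n) :
    ((alf x n j : ℤ) - (min (alf x n j) a' : ℕ)) - a' ≤ S (chi x n a') j := by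
  have h1 := S_chi x n a' j
  have h2 := floor0 x j
  have h3 := floor1 x n j hj
  have h4 := a0f_eq_min x n j hj
  have h5 := bef_eq x n j hj
  omega

/-- u is in U0 or U1 of x according to its rank -/
lemma isU0_of_rk_le (u : ℕ) (hu : u ∈ Us x n) (h : rk x n u ≤ aSt x n) : isU0 x u := by
  have hx := xval_of_mem x n u hu
  rw [mem_Us] at hu
  rcases hu.2 with h0 | h1
  · exact h0
  · have := isU1_true x n u hu.1 h1
    rw [this] at hx
    simp at hx
    omega

lemma isU1_of_rk_gt (u : ℕ) (hu : u ∈ Us x n) (h : aSt x n < rk x n u) : isU1 x n u := by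
  have hx := xval_of_mem x n u hu
  rw [mem_Us] at hu
  rcases hu.2 with h0 | h1
  · have := isU0_false x u h0
    rw [this] at hx
    simp at hx
    omega
  · exact h1

/-- value of the rewritten walk after a written zero -/
lemma VY0 (v : ℕ) (hv : v ∈ Us x n) (hr : rk x n v ≤ a') (ha : a' ≤ sSt x n) :
    S (chi x n a') (v+1) = -(rk x n v : ℤ) := by
  have hvn : v < n := ((mem_Us x n v).mp hv).1
  have hrk : rk x n v = alf x n v + 1 := rk_of_mem x n v hv
  have hmono := alf_mono x n (show v+1 ≤ n by omega)
  have h1 := S_chi x n a' (v+1)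
  have half : alf x n (v+1) = rk x n v := (rk_eq_alf x n v).symm
  by_cases hk : rk x n v ≤ aSt x n
  · have h0 : isU0 x v := isU0_of_rk_le x n v hv hk
    have hV := V0 x n v hvn h0
    omega
  · push_neg at hk
    have h1' : isU1 x n v := isU1_of_rk_gt x n v hv hk
    have hV := V1 x n v hvn h1'
    have hSv := S_chi x n a' v
    have hbit : chi x n a' v = false := by
      rw [chi_mem x n a' v hv]
      simp
      omega
    have hstep : S (chi x n a') (v+1) = S (chi x n a') v - 1 := by
      rw [S_succ, hbit]; norm_num; ring
    omega

/-- value of the rewritten walk at a written one -/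
lemma VY1 (v : ℕ) (hv : v ∈ Us x n) (hr : a' < rk x n v) :
    S (chi x n a') v = (rk x n v : ℤ) - 2*a' - 1 := by
  have hvn : v < n := ((mem_Us x n v).mp hv).1
  have hrk : rk x n v = alf x n v + 1 := rk_of_mem x n v hv
  have hSv := S_chi x n a' v
  by_cases hk : rk x n v ≤ aSt x n
  · have h0 : isU0 x v := isU0_of_rk_le x n v hv hk
    have hV := V0 x n v hvn h0
    have hxbit : x v = false := isU0_false x v h0
    have hstep : S x (v+1) = S x v - 1 := by
      rw [S_succ, hxbit]; norm_num; ring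
    omega
  · push_neg at hk
    have h1' : isU1 x n v := isU1_of_rk_gt x n v hv hk
    have hV := V1 x n v hvn h1'
    omega

/-- existence of an element of each rank -/
lemma exists_rk (k : ℕ) (h1 : 1 ≤ k) (h2 : k ≤ sSt x n) :
    ∃ v ∈ Us x n, rk x n v = k := by
  have : k ∈ Finset.Icc 1 (sSt x n) := Finset.mem_Icc.mpr ⟨h1, h2⟩
  rw [← rk_image] at this
  rcases Finset.mem_image.mp this with ⟨v, hv, he⟩
  exact ⟨v, hv, he⟩

/-- characterization of the U0 records of the rewrite -/
lemma isU0_chi (ha : a' ≤ sSt x n) (u : ℕ) (hun : u < n) :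
    isU0 (chi x n a') u ↔ (u ∈ Us x n ∧ rk x n u ≤ a') := by
  constructor
  · intro h
    by_cases hu : u ∈ Us x n
    · refine ⟨hu, ?_⟩
      by_contra hgt
      push_neg at hgt
      have hbit : chi x n a' u = true := by
        rw [chi_mem x n a' u hu]; simp; omega
      have hstep : S (chi x n a') (u+1) = S (chi x n a') u + 1 := by
        rw [S_succ, hbit]; norm_num
      have := h u (le_refl _)
      omega
    · exfalso
      set K := min (alf x n (u+1)) a' with hK
      have hflr := floorY0 x n a' (u+1) (by omega)
      by_cases hK0 : K = 0
      · have h0 := h 0 (by omega)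
        have : S (chi x n a') 0 = 0 := rfl
        omega
      · rcases exists_rk x n K (by omega) (by
          have := alf_le_sSt x n (u+1); omega) with ⟨v, hv, hrv⟩
        have hvu : v < u := by
          by_contra hge
          push_neg at hge
          have h1 : alf x n u ≤ alf x n v := alf_mono x n hge
          have h2 : rk x n v = alf x n v + 1 := rk_of_mem x n v hv
          have h3 : alf x n (u+1) = alf x n u := alf_succ_of_not_mem x n u hu
          omega
        have hval : S (chi x n a') (v+1) = -(K : ℤ) := by
          rw [← hrv]; exact VY0 x n a' v hv (by omega) ha
        have := h (v+1) (by omega)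
        omega
  · rintro ⟨hu, hr⟩
    have hval : S (chi x n a') (u+1) = -(rk x n u : ℤ) := VY0 x n a' u hu hr ha
    intro j hj
    have hflr := floorY0 x n a' j (by omega)
    have h1 : alf x n j ≤ alf x n u := alf_mono x n hj
    have h2 : rk x n u = alf x n u + 1 := rk_of_mem x n u hu
    omega

/-- characterization of the U1 records of the rewrite -/
lemma isU1_chi (ha : a' ≤ sSt x n) (u : ℕ) (hun : u < n) :
    isU1 (chi x n a') n u ↔ (u ∈ Us x n ∧ a' < rk x n u) := by
  constructor
  · intro h
    by_cases hu : u ∈ Us x n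
    · refine ⟨hu, ?_⟩
      by_contra hle
      push_neg at hle
      have hbit : chi x n a' u = false := by
        rw [chi_mem x n a' u hu]; simp; omega
      have hstep : S (chi x n a') (u+1) = S (chi x n a') u - 1 := by
        rw [S_succ, hbit]; norm_num; ring
      have := h (u+1) (by omega) (by omega)
      omega
    · exfalso
      set K := alf x n (u+1) with hK
      have hKu : alf x n (u+1) = alf x n u := alf_succ_of_not_mem x n u hu
      have hflr0 := floorY0 x n a' u (by omega)
      have hflr1 := floorY1 x n a' u (by omega)
      by_cases hKs : K < sSt x n
      · rcases exists_rk x n (K+1) (by omega) (by omega) with ⟨v, hv, hrv⟩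
        have hvu : u < v := by
          rcases lt_trichotomy u v with hc | hc | hc
          · exact hc
          · exfalso; rw [← hc] at hv; exact hu hv
          · exfalso
            have h1 : alf x n (v+1) ≤ alf x n u := alf_mono x n (by omega)
            have h2 : rk x n v = alf x n (v+1) := rk_eq_alf x n v
            omega
        have hvn : v < n := ((mem_Us x n v).mp hv).1
        by_cases hcmp : a' < K + 1
        · have hval : S (chi x n a') v = (K:ℤ) + 1 - 2*a' - 1 := by
            have := VY1 x n a' v hv (by omega)
            rw [hrv] at this
            push_cast at this
            omega
          have := h v (by omega) hvu
          omega
        · have hval : S (chi x n a') (v+1) = -((K:ℤ)+1) := by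
            have := VY0 x n a' v hv (by omega) ha
            rw [hrv] at this
            push_cast at this
            omega
          have := h (v+1) (by omega) (by omega)
          omega
      · have hKeq : K = sSt x n := by
          have := alf_le_sSt x n (u+1); omega
        have hSn : S (chi x n a') n
            = S x n + 2*((min (alf x n n) (aSt x n) : ℕ) : ℤ)
              - 2*((min (alf x n n) a' : ℕ) : ℤ) := S_chi x n a' n
        have halfn : alf x n n = sSt x n := alf_n x n n (le_refl _)
        have hsplit := sSt_split x n
        have hT := S_n_eq x n
        have := h n (le_refl _) hun
        have hmono : alf x n (u+1) ≤ alf x n n := alf_mono x n (by omega)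
        omega
  · rintro ⟨hu, hr⟩
    have hval : S (chi x n a') u = (rk x n u : ℤ) - 2*a' - 1 := VY1 x n a' u hu hr
    intro j hj hj2
    have hflr := floorY1 x n a' j hj
    have h1 : alf x n (u+1) ≤ alf x n j := alf_mono x n (by omega)
    have h2 : rk x n u = alf x n (u+1) := rk_eq_alf x n u
    have h3 := rk_le_sSt x n u
    omega

end chiFacts

end MXL
namespace MXL

lemma Us_chi (x : ℕ → Bool) (n a' : ℕ) (ha : a' ≤ sSt x n) :
    Us (chi x n a') n = Us x n := by
  ext u
  rw [mem_Us, mem_Us]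
  constructor
  · rintro ⟨hun, h | h⟩
    · have := ((isU0_chi x n a' ha u hun).mp h).1
      rw [mem_Us] at this
      exact this
    · have := ((isU1_chi x n a' ha u hun).mp h).1
      rw [mem_Us] at this
      exact this
  · rintro ⟨hun, hu⟩
    refine ⟨hun, ?_⟩
    by_cases hr : rk x n u ≤ a'
    · exact Or.inl ((isU0_chi x n a' ha u hun).mpr ⟨(mem_Us x n u).mpr ⟨hun, hu⟩, hr⟩)
    · exact Or.inr ((isU1_chi x n a' ha u hun).mpr ⟨(mem_Us x n u).mpr ⟨hun, hu⟩, by omega⟩)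

lemma rk_chi (x : ℕ → Bool) (n a' : ℕ) (ha : a' ≤ sSt x n) (u : ℕ) :
    rk (chi x n a') n u = rk x n u := by
  unfold rk
  rw [Us_chi x n a' ha]

lemma sSt_chi (x : ℕ → Bool) (n a' : ℕ) (ha : a' ≤ sSt x n) :
    sSt (chi x n a') n = sSt x n := by
  unfold sSt
  rw [Us_chi x n a' ha]

lemma aSt_chi (x : ℕ → Bool) (n a' : ℕ) (ha : a' ≤ sSt x n) :
    aSt (chi x n a') n = a' := by
  unfold aSt U0s
  have h1 : (Finset.range n).filter (fun u => isU0 (chi x n a') u)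
      = (Us x n).filter (fun u => rk x n u ≤ a') := by
    ext u
    simp only [Finset.mem_filter, Finset.mem_range]
    constructor
    · rintro ⟨hun, h⟩
      exact (isU0_chi x n a' ha u hun).mp h
    · rintro ⟨hu, hr⟩
      have hun : u < n := ((mem_Us x n u).mp hu).1
      exact ⟨hun, (isU0_chi x n a' ha u hun).mpr ⟨hu, hr⟩⟩
  rw [h1, card_rk_le]
  omega

lemma bSt_chi (x : ℕ → Bool) (n a' : ℕ) (ha : a' ≤ sSt x n) :
    bSt (chi x n a') n = sSt x n - a' := by
  have h1 := sSt_split (chi x n a') n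
  rw [sSt_chi x n a' ha, aSt_chi x n a' ha] at h1
  omega

lemma chi_chi (x : ℕ → Bool) (n a' : ℕ) (ha : a' ≤ sSt x n) (a'' : ℕ) :
    chi (chi x n a') n a'' = chi x n a'' := by
  funext j
  by_cases hj : j ∈ Us x n
  · rw [chi_mem _ n a'' j (by rw [Us_chi x n a' ha]; exact hj),
      chi_mem x n a'' j hj, rk_chi x n a' ha]
  · rw [chi_not_mem _ n a'' j (by rw [Us_chi x n a' ha]; exact hj),
      chi_not_mem x n a' j hj, chi_not_mem x n a'' j hj]

lemma chi_self (x : ℕ → Bool) (n : ℕ) : chi x n (aSt x n) = x := by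
  funext j
  by_cases hj : j ∈ Us x n
  · rw [chi_mem x n _ j hj, ← xval_of_mem x n j hj]
  · exact chi_not_mem x n _ j hj

def cnt1 (x : ℕ → Bool) (n : ℕ) : ℕ := ((Finset.range n).filter (fun j => x j = true)).card

lemma S_eq_cnt (x : ℕ → Bool) : ∀ j, S x j = 2*(cnt1 x j : ℤ) - j := by
  intro j
  induction j with
  | zero => simp [S, cnt1]
  | succ j ih =>
    have hstep : cnt1 x (j+1) = cnt1 x j + (if x j = true then 1 else 0) := by
      unfold cnt1
      rw [Finset.range_add_one, Finset.filter_insert]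
      split
      · rw [Finset.card_insert_of_notMem (by simp)]
      · simp
    rw [S_succ, ih, hstep]
    cases h : x j <;> simp [h] <;> push_cast <;> ring

end MXL
namespace MXL

def dlt (x : ℕ → Bool) (n : ℕ) : ℕ := ((n - sSt x n)/2) % 2
def rTh (x : ℕ → Bool) (n : ℕ) : ℕ := (sSt x n + 1)/2
def piF (r d b : ℕ) : ℕ := if b < r then 2*(r - 1 - b) + d else 2*(b - r) + 1 - d
def piI (r d p : ℕ) : ℕ := if p % 2 = d then r - 1 - (p - d)/2 else r + (p - (1 - d))/2
def aTgt (x : ℕ → Bool) (n : ℕ) : ℕ := sSt x n - piF (rTh x n) (dlt x n) (bSt x n)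
/-- the bijection (on `ℕ → Bool`, parametrized by `n`) -/
def psiN (x : ℕ → Bool) (n : ℕ) : ℕ → Bool := chi x n (aTgt x n)
def aInv (y : ℕ → Bool) (n : ℕ) : ℕ := sSt y n - piI (rTh y n) (dlt y n) (bSt y n)
/-- the inverse bijection -/
def phiN (y : ℕ → Bool) (n : ℕ) : ℕ → Bool := chi y n (aInv y n)

lemma sSt_le (x : ℕ → Bool) (n : ℕ) : sSt x n ≤ n :=
  le_trans (Finset.card_filter_le _ _) (by simp)

lemma bSt_le (x : ℕ → Bool) (n : ℕ) : bSt x n ≤ sSt x n := by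
  have := sSt_split x n; omega

lemma sSt_odd (x : ℕ → Bool) (n : ℕ) (hn : n % 2 = 1) : sSt x n % 2 = 1 := by
  have h1 := S_n_eq x n
  have h2 := S_eq_cnt x n
  have h3 := sSt_split x n
  omega

lemma dlt_lt (x : ℕ → Bool) (n : ℕ) : dlt x n < 2 := Nat.mod_lt _ (by norm_num)

lemma piF_le (s r d b : ℕ) (hs : s % 2 = 1) (hr : r = (s+1)/2) (hd : d < 2) (hb : b ≤ s) :
    piF r d b ≤ s := by
  unfold piF; split <;> omega

lemma piI_le (s r d p : ℕ) (hs : s % 2 = 1) (hr : r = (s+1)/2) (hd : d < 2) (hp : p ≤ s) :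
    piI r d p ≤ s := by
  unfold piI; split <;> omega

lemma piI_piF (s r d b : ℕ) (hs : s % 2 = 1) (hr : r = (s+1)/2) (hd : d < 2) (hb : b ≤ s) :
    piI r d (piF r d b) = b := by
  unfold piF piI
  by_cases h : b < r
  · simp only [if_pos h]
    split <;> omega
  · simp only [if_neg h]
    split <;> omega

lemma piF_piI (s r d p : ℕ) (hs : s % 2 = 1) (hr : r = (s+1)/2) (hd : d < 2) (hp : p ≤ s) :
    piF r d (piI r d p) = p := by
  unfold piF piI
  by_cases h : p % 2 = d
  · simp only [if_pos h]
    split <;> omega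
  · simp only [if_neg h]
    split <;> omega

section inverse

variable (x : ℕ → Bool) (n : ℕ) (hn : n % 2 = 1)

lemma aTgt_le (x : ℕ → Bool) (n : ℕ) : aTgt x n ≤ sSt x n := by
  unfold aTgt; omega

lemma aInv_le (y : ℕ → Bool) (n : ℕ) : aInv y n ≤ sSt y n := by
  unfold aInv; omega

lemma phiN_psiN (x : ℕ → Bool) (n : ℕ) (hn : n % 2 = 1) : phiN (psiN x n) n = x := by
  set y := psiN x n with hy
  have hA : aTgt x n ≤ sSt x n := aTgt_le x n
  have hsy : sSt y n = sSt x n := sSt_chi x n _ hA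
  have hay : aSt y n = aTgt x n := aSt_chi x n _ hA
  have hby : bSt y n = sSt x n - aTgt x n := bSt_chi x n _ hA
  have hso := sSt_odd x n hn
  have hd := dlt_lt x n
  have hsp := sSt_split x n
  have hdy : dlt y n = dlt x n := by unfold dlt; rw [hsy]
  have hry : rTh y n = rTh x n := by unfold rTh; rw [hsy]
  have hbx : bSt x n ≤ sSt x n := bSt_le x n
  have hpf : piF (rTh x n) (dlt x n) (bSt x n) ≤ sSt x n :=
    piF_le (sSt x n) _ _ _ hso rfl hd hbx
  have hbyv : bSt y n = piF (rTh x n) (dlt x n) (bSt x n) := by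
    rw [hby]; unfold aTgt; omega
  have hinv : aInv y n = aSt x n := by
    unfold aInv
    rw [hsy, hdy, hry, hbyv, piI_piF (sSt x n) (rTh x n) (dlt x n) (bSt x n) hso rfl hd hbx]
    omega
  show chi y n (aInv y n) = x
  rw [hinv, hy]
  show chi (chi x n (aTgt x n)) n (aSt x n) = x
  rw [chi_chi x n _ hA, chi_self]

lemma psiN_phiN (y : ℕ → Bool) (n : ℕ) (hn : n % 2 = 1) : psiN (phiN y n) n = y := by
  set z := phiN y n with hz
  have hA : aInv y n ≤ sSt y n := aInv_le y n
  have hsz : sSt z n = sSt y n := sSt_chi y n _ hA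
  have haz : aSt z n = aInv y n := aSt_chi y n _ hA
  have hbz : bSt z n = sSt y n - aInv y n := bSt_chi y n _ hA
  have hso := sSt_odd y n hn
  have hd := dlt_lt y n
  have hsp := sSt_split y n
  have hdz : dlt z n = dlt y n := by unfold dlt; rw [hsz]
  have hrz : rTh z n = rTh y n := by unfold rTh; rw [hsz]
  have hby : bSt y n ≤ sSt y n := bSt_le y n
  have hpi : piI (rTh y n) (dlt y n) (bSt y n) ≤ sSt y n :=
    piI_le (sSt y n) _ _ _ hso rfl hd hby
  have hbzv : bSt z n = piI (rTh y n) (dlt y n) (bSt y n) := by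
    rw [hbz]; unfold aInv; omega
  have htz : aTgt z n = aSt y n := by
    unfold aTgt
    rw [hsz, hdz, hrz, hbzv, piF_piI (sSt y n) (rTh y n) (dlt y n) (bSt y n) hso rfl hd hby]
    omega
  show chi z n (aTgt z n) = y
  rw [htz, hz]
  show chi (chi y n (aInv y n)) n (aSt y n) = y
  rw [chi_chi y n _ hA, chi_self]

end inverse

/-- parity of the image equals majority of the source -/
lemma parity_psiN (x : ℕ → Bool) (n : ℕ) (hn : n % 2 = 1) :
    (n < 2 * cnt1 x n ↔ cnt1 (psiN x n) n % 2 = 1) := by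
  set y := psiN x n with hy
  have hA : aTgt x n ≤ sSt x n := aTgt_le x n
  have hay : aSt y n = aTgt x n := aSt_chi x n _ hA
  have hby : bSt y n = sSt x n - aTgt x n := bSt_chi x n _ hA
  have hso := sSt_odd x n hn
  have hd := dlt_lt x n
  have hsp := sSt_split x n
  have hspy := sSt_split y n
  have hsy : sSt y n = sSt x n := sSt_chi x n _ hA
  have hTx := S_n_eq x n
  have hTy := S_n_eq y n
  have hcx := S_eq_cnt x n
  have hcy := S_eq_cnt y n
  have hsl := sSt_le x n
  have hDd : dlt x n = ((n - sSt x n)/2) % 2 := rfl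
  have hRr : rTh x n = (sSt x n + 1)/2 := rfl
  have hTt : aTgt x n = sSt x n - piF (rTh x n) (dlt x n) (bSt x n) := rfl
  have hbx : bSt x n ≤ sSt x n := bSt_le x n
  unfold piF at hTt
  split at hTt <;> omega

end MXL
namespace MXL

section edge

variable (x y : ℕ → Bool) (n i : ℕ)

/-- new U0 records above the flip -/
def Z0 (x y : ℕ → Bool) (n i : ℕ) : Finset ℕ :=
  (Finset.range n).filter (fun u => i < u ∧ isU0 y u ∧ ¬ isU0 x u)
/-- lost U1 records below the flip -/
def Z1 (x y : ℕ → Bool) (n i : ℕ) : Finset ℕ :=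
  (Finset.range n).filter (fun u => u < i ∧ isU1 x n u ∧ ¬ isU1 y n u)

variable (hin : i < n) (hx : x i = true) (hy : y i = false) (hxy : ∀ j, j ≠ i → x j = y j)

include hx hy hxy in
lemma S_flip : ∀ j, S y j = S x j - (if i < j then 2 else 0) := by
  intro j
  induction j with
  | zero => simp [S]
  | succ j ih =>
    by_cases hj : j = i
    · subst hj
      rw [S_succ, S_succ, hx, hy, ih]
      have h1 : ¬ (j < j) := by omega
      have h2 : j < j + 1 := by omega
      rw [if_neg h1, if_pos h2]
      norm_num
      ring
    · have hxj : x j = y j := hxy j hj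
      rw [S_succ, S_succ, ← hxj, ih]
      have : (if i < j + 1 then (2:ℤ) else 0) = (if i < j then 2 else 0) := by
        have he : (i < j + 1) ↔ (i < j) := by omega
        simp only [he]
      rw [this]
      ring

include hx hy hxy in
lemma S_flip_le (j : ℕ) (hj : j ≤ i) : S y j = S x j := by
  rw [S_flip x y i hx hy hxy j, if_neg (by omega)]
  ring

include hx hy hxy in
lemma S_flip_gt (j : ℕ) (hj : i < j) : S y j = S x j - 2 := by
  rw [S_flip x y i hx hy hxy j, if_pos hj]

include hx hy hxy in
lemma isU0_low (u : ℕ) (hu : u < i) : isU0 x u ↔ isU0 y u := by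
  constructor <;> intro h j hj
  · rw [S_flip_le x y i hx hy hxy (u+1) (by omega), S_flip_le x y i hx hy hxy j (by omega)]
    exact h j hj
  · have := h j hj
    rw [S_flip_le x y i hx hy hxy (u+1) (by omega), S_flip_le x y i hx hy hxy j (by omega)] at this
    exact this

include hx hy hxy in
lemma isU1_high (u : ℕ) (hu : i < u) : isU1 x n u ↔ isU1 y n u := by
  constructor <;> intro h j hj hj2
  · rw [S_flip_gt x y i hx hy hxy u hu, S_flip_gt x y i hx hy hxy j (by omega)]
    have := h j hj hj2
    omega
  · have := h j hj hj2
    rw [S_flip_gt x y i hx hy hxy u hu, S_flip_gt x y i hx hy hxy j (by omega)] at this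
    omega

include hx hy hxy in
lemma isU0_high_sub (u : ℕ) (hu : i < u) (h : isU0 x u) : isU0 y u := by
  intro j hj
  rw [S_flip_gt x y i hx hy hxy (u+1) (by omega), S_flip x y i hx hy hxy j]
  have := h j hj
  split <;> omega

include hx hy hxy in
lemma isU1_low_sub (u : ℕ) (hu : u < i) (h : isU1 y n u) : isU1 x n u := by
  intro j hj hj2
  have := h j hj hj2
  rw [S_flip_le x y i hx hy hxy u (by omega), S_flip x y i hx hy hxy j] at this
  split at this <;> omega

include hin hx hy hxy in
lemma Z0_card : (Z0 x y n i).card ≤ 2 := by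
  have hmaps : ∀ u ∈ Z0 x y n i, S x (u+1) ∈ ({mmin x i, mmin x i + 1} : Finset ℤ) := by
    intro u hu
    simp only [Z0, Finset.mem_filter, Finset.mem_range] at hu
    obtain ⟨hun, hui, hy0, hx0⟩ := hu
    have hup : S x (u+1) < mmin x i + 2 := by
      rcases exists_mmin x i with ⟨t, ht, he⟩
      have h1 := hy0 t (by omega)
      rw [S_flip_gt x y i hx hy hxy (u+1) (by omega),
        S_flip_le x y i hx hy hxy t (by omega)] at h1
      omega
    have hdn : mmin x i ≤ S x (u+1) := by
      unfold isU0 at hx0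
      push_neg at hx0
      rcases hx0 with ⟨j0, hj0, hge⟩
      have hj0i : j0 ≤ i := by
        by_contra hc
        push_neg at hc
        have h1 := hy0 j0 hj0
        rw [S_flip_gt x y i hx hy hxy (u+1) (by omega),
          S_flip_gt x y i hx hy hxy j0 (by omega)] at h1
        omega
      exact le_trans (mmin_le x i j0 hj0i) hge
    simp only [Finset.mem_insert, Finset.mem_singleton]
    omega
  have hinj : Set.InjOn (fun u => S x (u+1)) (Z0 x y n i) := by
    intro u hu v hv he
    simp only [Finset.coe_filter, Set.mem_setOf_eq, Z0, Finset.mem_coe,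
      Finset.mem_filter, Finset.mem_range] at hu hv
    by_contra hne
    rcases lt_or_gt_of_ne hne with hlt | hlt
    · have h1 := hv.2.2.1 (u+1) (by omega)
      rw [S_flip_gt x y i hx hy hxy (v+1) (by omega),
        S_flip_gt x y i hx hy hxy (u+1) (by omega)] at h1
      simp only at he
      omega
    · have h1 := hu.2.2.1 (v+1) (by omega)
      rw [S_flip_gt x y i hx hy hxy (u+1) (by omega),
        S_flip_gt x y i hx hy hxy (v+1) (by omega)] at h1
      simp only at he
      omega
  have := Finset.card_le_card_of_injOn (fun u => S x (u+1)) hmaps hinj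
  have hc : ({mmin x i, mmin x i + 1} : Finset ℤ).card ≤ 2 := by
    apply le_trans (Finset.card_insert_le _ _)
    simp
  omega

include hin hx hy hxy in
lemma Z1_card : (Z1 x y n i).card ≤ 2 := by
  set R := rmw x (i+1) (n - (i+1)) with hR
  have hmaps : ∀ u ∈ Z1 x y n i, S x u ∈ ({R - 2, R - 1} : Finset ℤ) := by
    intro u hu
    simp only [Z1, Finset.mem_filter, Finset.mem_range] at hu
    obtain ⟨hun, hui, hx1, hy1⟩ := hu
    have hup : S x u < R := by
      rcases exists_rmw x (n - (i+1)) (i+1) with ⟨t, ht1, ht2, ht3⟩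
      rw [hR, ht3]
      exact hx1 t (by omega) (by omega)
    have hdn : R - 2 ≤ S x u := by
      unfold isU1 at hy1
      push_neg at hy1
      rcases hy1 with ⟨j0, hj0, hj0u, hge⟩
      have hj0i : i < j0 := by
        by_contra hc
        push_neg at hc
        have h1 := hx1 j0 hj0 hj0u
        rw [S_flip_le x y i hx hy hxy u (by omega),
          S_flip_le x y i hx hy hxy j0 (by omega)] at hge
        omega
      have h2 : R ≤ S x j0 := rmw_le x (n - (i+1)) (i+1) j0 (by omega) (by omega)
      rw [S_flip_le x y i hx hy hxy u (by omega),
        S_flip_gt x y i hx hy hxy j0 (by omega)] at hge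
      omega
    simp only [Finset.mem_insert, Finset.mem_singleton]
    omega
  have hinj : Set.InjOn (fun u => S x u) (Z1 x y n i) := by
    intro u hu v hv he
    simp only [Finset.coe_filter, Set.mem_setOf_eq, Z1, Finset.mem_coe,
      Finset.mem_filter, Finset.mem_range] at hu hv
    by_contra hne
    rcases lt_or_gt_of_ne hne with hlt | hlt
    · have h1 := hu.2.2.1 v (by omega) hlt
      simp only at he
      omega
    · have h1 := hv.2.2.1 u (by omega) hlt
      simp only at he
      omega
  have := Finset.card_le_card_of_injOn (fun u => S x u) hmaps hinj
  have hc : ({R - 2, R - 1} : Finset ℤ).card ≤ 2 := by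
    apply le_trans (Finset.card_insert_le _ _)
    simp
  omega

include hx hy hxy in
lemma Us_diff_xy : Us x n \ Us y n ⊆ insert i (Z1 x y n i) := by
  intro u hu
  rw [Finset.mem_sdiff, mem_Us, mem_Us] at hu
  obtain ⟨⟨hun, hu2⟩, hnot⟩ := hu
  push_neg at hnot
  simp only [Finset.mem_insert]
  by_cases hui : u = i
  · exact Or.inl hui
  right
  rcases lt_trichotomy u i with hlt | heq | hgt
  · rcases hu2 with h0 | h1
    · exact absurd ((isU0_low x y i hx hy hxy u hlt).mp h0) (hnot hun).1
    · simp only [Z1, Finset.mem_filter, Finset.mem_range]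
      refine ⟨hun, hlt, h1, ?_⟩
      intro hc
      exact (hnot hun).2 hc
  · exact absurd heq hui
  · exfalso
    rcases hu2 with h0 | h1
    · exact (hnot hun).1 (isU0_high_sub x y i hx hy hxy u hgt h0)
    · exact (hnot hun).2 ((isU1_high x y n i hx hy hxy u hgt).mp h1)

include hx hy hxy in
lemma Us_diff_yx : Us y n \ Us x n ⊆ insert i (Z0 x y n i) := by
  intro u hu
  rw [Finset.mem_sdiff, mem_Us, mem_Us] at hu
  obtain ⟨⟨hun, hu2⟩, hnot⟩ := hu
  push_neg at hnot
  simp only [Finset.mem_insert]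
  by_cases hui : u = i
  · exact Or.inl hui
  right
  rcases lt_trichotomy u i with hlt | heq | hgt
  · exfalso
    rcases hu2 with h0 | h1
    · exact (hnot hun).1 ((isU0_low x y i hx hy hxy u hlt).mpr h0)
    · exact (hnot hun).2 (isU1_low_sub x y n i hx hy hxy u hlt h1)
  · exact absurd heq hui
  · rcases hu2 with h0 | h1
    · simp only [Z0, Finset.mem_filter, Finset.mem_range]
      refine ⟨hun, hgt, h0, ?_⟩
      intro hc
      exact (hnot hun).1 hc
    · exact absurd ((isU1_high x y n i hx hy hxy u hgt).mpr h1) (hnot hun).2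

include hin hx hy hxy in
lemma Us_diff_xy_card : (Us x n \ Us y n).card ≤ 3 := by
  apply le_trans (Finset.card_le_card (Us_diff_xy x y n i hx hy hxy))
  apply le_trans (Finset.card_insert_le _ _)
  have := Z1_card x y n i hin hx hy hxy
  omega

include hin hx hy hxy in
lemma Us_diff_yx_card : (Us y n \ Us x n).card ≤ 3 := by
  apply le_trans (Finset.card_le_card (Us_diff_yx x y n i hx hy hxy))
  apply le_trans (Finset.card_insert_le _ _)
  have := Z0_card x y n i hin hx hy hxy
  omega

end edge

/-- counting helper: ranks with respect to two close sets are close -/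
lemma filter_card_close (A B : Finset ℕ) (u : ℕ) :
    (A.filter (fun v => v ≤ u)).card ≤ (B.filter (fun v => v ≤ u)).card + (A \ B).card := by
  have hsub : A.filter (fun v => v ≤ u) ⊆ (B.filter (fun v => v ≤ u)) ∪ (A \ B) := by
    intro v hv
    rw [Finset.mem_filter] at hv
    rw [Finset.mem_union, Finset.mem_filter, Finset.mem_sdiff]
    by_cases hb : v ∈ B
    · exact Or.inl ⟨hb, hv.2⟩
    · exact Or.inr ⟨hv.1, hb⟩
  exact le_trans (Finset.card_le_card hsub) (Finset.card_union_le _ _)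

section edge2

variable (x y : ℕ → Bool) (n i : ℕ)
variable (hin : i < n) (hx : x i = true) (hy : y i = false) (hxy : ∀ j, j ≠ i → x j = y j)

include hin hx hy hxy in
lemma rk_close : ∀ u, rk x n u ≤ rk y n u + 3 ∧ rk y n u ≤ rk x n u + 3 := by
  intro u
  constructor
  · exact le_trans (filter_card_close (Us x n) (Us y n) u)
      (by have := Us_diff_xy_card x y n i hin hx hy hxy; unfold rk; omega)
  · exact le_trans (filter_card_close (Us y n) (Us x n) u)
      (by have := Us_diff_yx_card x y n i hin hx hy hxy; unfold rk; omega)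

include hin hx hy hxy in
lemma mmin_close : mmin x n - 2 ≤ mmin y n ∧ mmin y n ≤ mmin x n := by
  constructor
  · rcases exists_mmin y n with ⟨t, ht, he⟩
    have h1 := mmin_le x n t ht
    have h2 := S_flip x y i hx hy hxy t
    rw [he]
    split at h2 <;> omega
  · rcases exists_mmin x n with ⟨t, ht, he⟩
    have h1 := mmin_le y n t ht
    have h2 := S_flip x y i hx hy hxy t
    split at h2 <;> omega

include hin hx hy hxy in
lemma stats_close :
    aSt x n ≤ aSt y n ∧ aSt y n ≤ aSt x n + 2 ∧
    bSt x n ≤ bSt y n + 2 ∧ bSt y n ≤ bSt x n := by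
  have hm := mmin_close x y n i hin hx hy hxy
  have ha1 : (aSt x n : ℤ) = -(mmin x n) := by
    have := mmin_card x n; rw [aSt_eq_a0f]; omega
  have ha2 : (aSt y n : ℤ) = -(mmin y n) := by
    have := mmin_card y n; rw [aSt_eq_a0f]; omega
  have hb1 := S_n_eq x n
  have hb2 := S_n_eq y n
  have hS := S_flip_gt x y i hx hy hxy n hin
  omega

include hin hx hy hxy in
lemma aTgt_close (hn : n % 2 = 1) :
    aTgt x n ≤ aTgt y n + 5 ∧ aTgt y n ≤ aTgt x n + 5 := by
  have hst := stats_close x y n i hin hx hy hxy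
  have hox := sSt_odd x n hn
  have hoy := sSt_odd y n hn
  have hsx := sSt_split x n
  have hsy := sSt_split y n
  have hlx := sSt_le x n
  have hly := sSt_le y n
  have hrx : rTh x n = (sSt x n + 1)/2 := rfl
  have hry : rTh y n = (sSt y n + 1)/2 := rfl
  have hdx : dlt x n = ((n - sSt x n)/2) % 2 := rfl
  have hdy : dlt y n = ((n - sSt y n)/2) % 2 := rfl
  unfold aTgt piF
  split_ifs <;> omega

include hin hx hy hxy in
lemma edge_bound (hn : n % 2 = 1) :
    ((Finset.range n).filter (fun j => psiN x n j ≠ psiN y n j)).card ≤ 24 := by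
  classical
  set Ax := aTgt x n with hAx
  set Ay := aTgt y n with hAy
  set W := (Us x n).filter
      (fun u => u ∈ Us y n ∧ decide (Ax < rk x n u) ≠ decide (Ay < rk y n u)) with hW
  have hsub : (Finset.range n).filter (fun j => psiN x n j ≠ psiN y n j) ⊆
      insert i ((Us x n \ Us y n) ∪ ((Us y n \ Us x n) ∪ W)) := by
    intro j hj
    rw [Finset.mem_filter, Finset.mem_range] at hj
    obtain ⟨hjn, hne⟩ := hj
    simp only [Finset.mem_insert, Finset.mem_union]
    by_cases hji : j = i
    · exact Or.inl hji
    right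
    by_cases hjx : j ∈ Us x n <;> by_cases hjy : j ∈ Us y n
    · right; right
      rw [Finset.mem_filter]
      refine ⟨hjx, hjy, ?_⟩
      intro hc
      apply hne
      unfold psiN
      rw [chi_mem x n _ j hjx, chi_mem y n _ j hjy]
      exact hc
    · exact Or.inl (Finset.mem_sdiff.mpr ⟨hjx, hjy⟩)
    · right; left; exact Finset.mem_sdiff.mpr ⟨hjy, hjx⟩
    · exfalso
      apply hne
      unfold psiN
      rw [chi_not_mem x n _ j hjx, chi_not_mem y n _ j hjy]
      exact hxy j hji
  have hWcard : W.card ≤ 12 := by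
    have hA := aTgt_close x y n i hin hx hy hxy hn
    set lo := min Ax Ay - 3 with hlo
    set hi := max Ax Ay + 3 with hhi
    have hmaps : ∀ u ∈ W, rk x n u ∈ Finset.Ioc lo hi := by
      intro u hu
      rw [hW, Finset.mem_filter] at hu
      obtain ⟨hux, huy, hb⟩ := hu
      have hrkc := rk_close x y n i hin hx hy hxy u
      have hrk1 : 1 ≤ rk x n u := rk_pos x n u hux
      rw [Finset.mem_Ioc]
      have hb' : (Ax < rk x n u ∧ ¬ Ay < rk y n u) ∨ (¬ Ax < rk x n u ∧ Ay < rk y n u) := by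
        by_cases h1 : Ax < rk x n u <;> by_cases h2 : Ay < rk y n u <;>
          simp [h1, h2] at hb ⊢
      rw [hlo, hhi]
      rcases hb' with ⟨hc1, hc2⟩ | ⟨hc1, hc2⟩ <;> omega
    have hinj : Set.InjOn (rk x n) W := by
      apply (rk_injOn x n).mono
      intro u hu
      rw [Finset.mem_coe, hW, Finset.mem_filter] at hu
      exact Finset.mem_coe.mpr hu.1
    have := Finset.card_le_card_of_injOn (rk x n) hmaps hinj
    rw [Nat.card_Ioc] at this
    omega
  apply le_trans (Finset.card_le_card hsub)
  apply le_trans (Finset.card_insert_le _ _)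
  have h1 := Us_diff_xy_card x y n i hin hx hy hxy
  have h2 := Us_diff_yx_card x y n i hin hx hy hxy
  have h3 := Finset.card_union_le (Us x n \ Us y n) ((Us y n \ Us x n) ∪ W)
  have h4 := Finset.card_union_le (Us y n \ Us x n) W
  omega

end edge2

end MXL
namespace MXL

lemma Us_lt (x : ℕ → Bool) (n u : ℕ) (hu : u ∈ Us x n) : u < n := ((mem_Us x n u).mp hu).1

lemma ne_filter_comm (n : ℕ) (f g : ℕ → Bool) :
    (Finset.range n).filter (fun j => f j ≠ g j) = (Finset.range n).filter (fun j => g j ≠ f j) := by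
  ext j
  simp only [Finset.mem_filter]
  constructor <;> rintro ⟨h1, h2⟩ <;> exact ⟨h1, h2.symm⟩

lemma psiN_lip (n : ℕ) (hn : n % 2 = 1) :
    ∀ d (x y : ℕ → Bool), (∀ j, n ≤ j → x j = y j) →
    ((Finset.range n).filter (fun j => x j ≠ y j)).card = d →
    ((Finset.range n).filter (fun j => psiN x n j ≠ psiN y n j)).card ≤ 24 * d := by
  intro d
  induction d with
  | zero =>
    intro x y hbey hcard
    have hxy : x = y := by
      funext j
      by_cases hj : j < n
      · rw [Finset.card_eq_zero] at hcard
        by_contra hne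
        have : j ∈ (Finset.range n).filter (fun j => x j ≠ y j) := by
          rw [Finset.mem_filter, Finset.mem_range]
          exact ⟨hj, hne⟩
        rw [hcard] at this
        exact absurd this (Finset.notMem_empty j)
      · exact hbey j (by omega)
    subst hxy
    simp
  | succ d ih =>
    intro x y hbey hcard
    have hne : ((Finset.range n).filter (fun j => x j ≠ y j)).Nonempty := by
      rw [← Finset.card_ne_zero] at *
      omega
    rcases hne with ⟨i, hi⟩
    rw [Finset.mem_filter, Finset.mem_range] at hi
    obtain ⟨hin, hnei⟩ := hi
    set z := Function.update y i (x i) with hz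
    have hzi : z i = x i := Function.update_self i (x i) y
    have hzj : ∀ j, j ≠ i → z j = y j := fun j hj => Function.update_of_ne hj (x i) y
    have hxz_bey : ∀ j, n ≤ j → x j = z j := by
      intro j hj
      rw [hzj j (by omega)]
      exact hbey j hj
    have hfilter : (Finset.range n).filter (fun j => x j ≠ z j)
        = ((Finset.range n).filter (fun j => x j ≠ y j)).erase i := by
      ext j
      simp only [Finset.mem_erase, Finset.mem_filter, Finset.mem_range]
      constructor
      · rintro ⟨hj1, hj2⟩
        have hji : j ≠ i := by
          intro hc
          subst hc
          exact hj2 hzi.symm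
        rw [hzj j hji] at hj2
        exact ⟨hji, hj1, hj2⟩
      · rintro ⟨hji, hj1, hj2⟩
        rw [← hzj j hji] at hj2
        exact ⟨hj1, hj2⟩
    have hmem : i ∈ (Finset.range n).filter (fun j => x j ≠ y j) := by
      rw [Finset.mem_filter, Finset.mem_range]; exact ⟨hin, hnei⟩
    have hcz : ((Finset.range n).filter (fun j => x j ≠ z j)).card = d := by
      rw [hfilter, Finset.card_erase_of_mem hmem, hcard]
      omega
    have h1 := ih x z hxz_bey hcz
    have h2 : ((Finset.range n).filter (fun j => psiN z n j ≠ psiN y n j)).card ≤ 24 := by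
      cases hxi : x i
      · cases hyi : y i
        · exfalso; rw [hxi, hyi] at hnei; exact hnei rfl
        · have := edge_bound y z n i hin hyi (by rw [hzi, hxi]) (fun j hj => (hzj j hj).symm) hn
          rw [ne_filter_comm]
          exact this
      · cases hyi : y i
        · exact edge_bound z y n i hin (by rw [hzi, hxi]) hyi hzj hn
        · exfalso; rw [hxi, hyi] at hnei; exact hnei rfl
    have htri : ((Finset.range n).filter (fun j => psiN x n j ≠ psiN y n j)).card ≤
        ((Finset.range n).filter (fun j => psiN x n j ≠ psiN z n j)).card +
        ((Finset.range n).filter (fun j => psiN z n j ≠ psiN y n j)).card := by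
      apply le_trans (Finset.card_le_card (show _ ⊆ ((Finset.range n).filter
          (fun j => psiN x n j ≠ psiN z n j)) ∪ ((Finset.range n).filter
          (fun j => psiN z n j ≠ psiN y n j)) from ?_)) (Finset.card_union_le _ _)
      intro j hj
      rw [Finset.mem_filter, Finset.mem_range] at hj
      rw [Finset.mem_union, Finset.mem_filter, Finset.mem_filter, Finset.mem_range]
      by_cases hc : psiN x n j = psiN z n j
      · right
        refine ⟨hj.1, ?_⟩
        rw [← hc]
        exact hj.2
      · left
        exact ⟨hj.1, hc⟩
    omega

section finbridge

variable {n : ℕ}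

/-- extend a function on `Fin n` by `false` -/
def extF (x : Fin n → Bool) : ℕ → Bool := fun j => if h : j < n then x ⟨j, h⟩ else false

lemma extF_lt (x : Fin n → Bool) (i : Fin n) : extF x i.val = x i := by
  simp [extF, i.isLt]

/-- the bijection on `Fin n → Bool` -/
def psiF (x : Fin n → Bool) : Fin n → Bool := fun i => psiN (extF x) n i.val
def phiF (y : Fin n → Bool) : Fin n → Bool := fun i => phiN (extF y) n i.val

lemma psiN_high (x : ℕ → Bool) (j : ℕ) (hj : n ≤ j) : psiN x n j = x j := by
  unfold psiN
  apply chi_not_mem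
  intro hc
  have := Us_lt x n j hc
  omega

lemma phiN_high (x : ℕ → Bool) (j : ℕ) (hj : n ≤ j) : phiN x n j = x j := by
  unfold phiN
  apply chi_not_mem
  intro hc
  have := Us_lt x n j hc
  omega

lemma extF_psiF (x : Fin n → Bool) : extF (psiF x) = psiN (extF x) n := by
  funext j
  by_cases hj : j < n
  · show extF (psiF x) j = _
    unfold extF
    rw [dif_pos hj]
    rfl
  · have h1 : extF (psiF x) j = false := dif_neg hj
    have h2 : extF x j = false := dif_neg hj
    rw [h1, psiN_high (extF x) j (by omega), h2]

lemma extF_phiF (y : Fin n → Bool) : extF (phiF y) = phiN (extF y) n := by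
  funext j
  by_cases hj : j < n
  · show extF (phiF y) j = _
    unfold extF
    rw [dif_pos hj]
    rfl
  · have h1 : extF (phiF y) j = false := dif_neg hj
    have h2 : extF y j = false := dif_neg hj
    rw [h1, phiN_high (extF y) j (by omega), h2]

lemma phiF_psiF (hn : n % 2 = 1) (x : Fin n → Bool) : phiF (psiF x) = x := by
  funext i
  show phiN (extF (psiF x)) n i.val = x i
  rw [extF_psiF, phiN_psiN (extF x) n hn, extF_lt]

lemma psiF_phiF (hn : n % 2 = 1) (y : Fin n → Bool) : psiF (phiF y) = y := by
  funext i
  show psiN (extF (phiF y)) n i.val = y i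
  rw [extF_phiF, psiN_phiN (extF y) n hn, extF_lt]

lemma card_fin_bridge (p : Bool → Bool → Prop) [∀ a b, Decidable (p a b)]
    (x y : Fin n → Bool) :
    (Finset.univ.filter (fun i : Fin n => p (x i) (y i))).card
      = ((Finset.range n).filter (fun j => p (extF x j) (extF y j))).card := by
  apply Finset.card_bij (fun (i : Fin n) _ => i.val)
  · intro i hi
    rw [Finset.mem_filter] at hi
    rw [Finset.mem_filter, Finset.mem_range]
    exact ⟨i.isLt, by rw [extF_lt, extF_lt]; exact hi.2⟩
  · intro a _ b _ h
    exact Fin.val_injective h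
  · intro j hj
    rw [Finset.mem_filter, Finset.mem_range] at hj
    refine ⟨⟨j, hj.1⟩, ?_, rfl⟩
    rw [Finset.mem_filter]
    refine ⟨Finset.mem_univ _, ?_⟩
    have h1 : extF x j = x ⟨j, hj.1⟩ := by simp [extF, hj.1]
    have h2 : extF y j = y ⟨j, hj.1⟩ := by simp [extF, hj.1]
    rw [← h1, ← h2]
    exact hj.2

lemma cnt_fin_bridge (x : Fin n → Bool) :
    (Finset.univ.filter (fun i : Fin n => x i = true)).card = cnt1 (extF x) n := by
  unfold cnt1
  exact card_fin_bridge (fun a _ => a = true) x x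

end finbridge

end MXL



/-- There is an absolute constant `C` such that for every odd `n` there is a
`C`-Lipschitz bijection from `Majority` to `XOR`. -/
theorem majority_to_xor_lipschitz :
    ∃ C : ℕ, ∀ n : ℕ, Odd n →
      ∃ ψ : (Fin n → Bool) → (Fin n → Bool),
        Function.Bijective ψ ∧
        (∀ z : Fin n → Bool, majority z = xorFun (ψ z)) ∧
        (∀ x y : Fin n → Bool, hammingDist (ψ x) (ψ y) ≤ C * hammingDist x y) := by
  refine ⟨24, ?_⟩
  intro n hodd
  have hn : n % 2 = 1 := Nat.odd_iff.mp hodd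
  refine ⟨MXL.psiF, ?_, ?_, ?_⟩
  · exact Function.bijective_iff_has_inverse.mpr
      ⟨MXL.phiF, MXL.phiF_psiF hn, MXL.psiF_phiF hn⟩
  · intro z
    unfold majority xorFun
    rw [MXL.cnt_fin_bridge z, MXL.cnt_fin_bridge (MXL.psiF z), MXL.extF_psiF]
    exact decide_eq_decide.mpr (MXL.parity_psiN (MXL.extF z) n hn)
  · intro a b
    have h1 : hammingDist (MXL.psiF a) (MXL.psiF b)
        = (Finset.univ.filter (fun i => MXL.psiF a i ≠ MXL.psiF b i)).card := rfl
    have h2 : hammingDist a b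
        = (Finset.univ.filter (fun i => a i ≠ b i)).card := rfl
    rw [h1, h2, MXL.card_fin_bridge (fun u v => u ≠ v) (MXL.psiF a) (MXL.psiF b),
      MXL.card_fin_bridge (fun u v => u ≠ v) a b]
    have hbey : ∀ j, n ≤ j → MXL.extF a j = MXL.extF b j := by
      intro j hj
      have h3 : MXL.extF a j = false := dif_neg (by omega)
      have h4 : MXL.extF b j = false := dif_neg (by omega)
      rw [h3, h4]
    have := MXL.psiN_lip n hn ((Finset.range n).filter
        (fun j => MXL.extF a j ≠ MXL.extF b j)).card (MXL.extF a) (MXL.extF b) hbey rfl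
    calc ((Finset.range n).filter
        (fun j => MXL.extF (MXL.psiF a) j ≠ MXL.extF (MXL.psiF b) j)).card
        = ((Finset.range n).filter
          (fun j => MXL.psiN (MXL.extF a) n j ≠ MXL.psiN (MXL.extF b) n j)).card := by
          rw [MXL.extF_psiF, MXL.extF_psiF]
      _ ≤ 24 * ((Finset.range n).filter (fun j => MXL.extF a j ≠ MXL.extF b j)).card := this
end

section
/- There exists an absolute constant c > 0 such that for every odd integer n, every bijection φ : {0,1}^n → {0,1}^n that is a mapping from XOR to Majority (i.e., XOR(z) = Majority(φ(z)) for every z), and every coordinate i ∈ {1, …, n}, the average stretch in direction i satisfies (1/2^n) · Σ_{x ∈ {0,1}^n} dist(φ(x), φ(x + e_i)) ≥ c·√n. -/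
namespace XorMajAux

open Finset

/-- Hamming weight. -/
def wt {n : ℕ} (x : Fin n → Bool) : ℕ := (Finset.univ.filter (fun i => x i = true)).card

lemma wt_le_wt_add_dist {n : ℕ} (y z : Fin n → Bool) :
    wt y ≤ wt z + hammingDist y z := by
  have hsub : (Finset.univ.filter (fun i => y i = true)) ⊆
      (Finset.univ.filter (fun i => z i = true)) ∪ (Finset.univ.filter (fun i => y i ≠ z i)) := by
    intro j hj
    simp only [mem_filter, mem_univ, true_and] at hj
    by_cases hz : z j = true
    · exact Finset.mem_union_left _ (by simp [hz])
    · exact Finset.mem_union_right _ (by simp [hj, hz])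
  calc wt y ≤ _ := Finset.card_le_card hsub
    _ ≤ _ := Finset.card_union_le _ _

lemma filter_update_true {n : ℕ} (x : Fin n → Bool) (i : Fin n) (h : x i = true) :
    (Finset.univ.filter (fun j => (Function.update x i (!(x i))) j = true)) =
      (Finset.univ.filter (fun j => x j = true)).erase i := by
  ext j
  simp only [mem_filter, mem_univ, true_and, mem_erase, Function.update]
  rcases eq_or_ne j i with rfl | hj
  · simp [h]
  · simp [hj]

lemma filter_update_false {n : ℕ} (x : Fin n → Bool) (i : Fin n) (h : x i = false) :
    (Finset.univ.filter (fun j => (Function.update x i (!(x i))) j = true)) =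
      insert i (Finset.univ.filter (fun j => x j = true)) := by
  ext j
  simp only [mem_filter, mem_univ, true_and, mem_insert, Function.update]
  rcases eq_or_ne j i with rfl | hj
  · simp [h]
  · simp [hj]

lemma xorFun_update_ne {n : ℕ} (x : Fin n → Bool) (i : Fin n) :
    xorFun (Function.update x i (!(x i))) ≠ xorFun x := by
  unfold xorFun
  rcases Bool.eq_false_or_eq_true (x i) with hx | hx
  · rw [filter_update_true x i hx]
    have hmem : i ∈ Finset.univ.filter (fun j => x j = true) := by simp [hx]
    rw [Finset.card_erase_of_mem hmem]
    have hpos : 0 < (Finset.univ.filter (fun j => x j = true)).card :=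
      Finset.card_pos.mpr ⟨i, hmem⟩
    simp only [ne_eq, decide_eq_decide]
    omega
  · rw [filter_update_false x i hx,
      Finset.card_insert_of_notMem (by simp [hx])]
    simp only [ne_eq, decide_eq_decide]
    omega

lemma card_wt_eq {n k : ℕ} :
    (Finset.univ.filter (fun y : Fin n → Bool => wt y = k)).card = n.choose k := by
  rw [show n.choose k = (Finset.powersetCard k (Finset.univ : Finset (Fin n))).card by
    rw [Finset.card_powersetCard, Finset.card_univ, Fintype.card_fin]]
  refine Finset.card_bij' (fun y _ => Finset.univ.filter (fun i => y i = true))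
    (fun s _ => fun i => decide (i ∈ s)) ?_ ?_ ?_ ?_
  · intro y hy
    simp only [mem_filter, mem_univ, true_and] at hy
    simp only [Finset.mem_powersetCard]
    exact ⟨Finset.subset_univ _, hy⟩
  · intro s hs
    simp only [Finset.mem_powersetCard] at hs
    simp only [mem_filter, mem_univ, true_and]; unfold wt
    rw [show (Finset.univ.filter (fun i => decide (i ∈ s) = true)) = s by ext j; simp]
    exact hs.2
  · intro y hy
    funext j
    simp
  · intro s hs
    ext j
    simp

lemma sum_wt_eq {n : ℕ} (F : ℕ → ℝ) :
    ∑ y : Fin n → Bool, F (wt y) =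
      ∑ k ∈ Finset.range (n + 1), (n.choose k : ℝ) * F k := by
  rw [← Finset.sum_fiberwise_of_maps_to (t := Finset.range (n+1)) (g := wt)
      (fun y _ => by
        simp only [Finset.mem_range]
        have : wt y ≤ n := by
          calc wt y ≤ (Finset.univ : Finset (Fin n)).card := Finset.card_filter_le _ _
            _ = n := by simp
        omega)
      (fun y => F (wt y))]
  refine Finset.sum_congr rfl fun k _ => ?_
  rw [show ∑ y ∈ Finset.univ.filter (fun y : Fin n → Bool => wt y = k), F (wt y)
      = ∑ y ∈ Finset.univ.filter (fun y : Fin n → Bool => wt y = k), F k from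
    Finset.sum_congr rfl (fun y hy => by
      simp only [Finset.mem_filter] at hy; rw [hy.2])]
  rw [Finset.sum_const, card_wt_eq, nsmul_eq_mul]

lemma telescope {N : ℕ} : ∀ j ≤ N,
    ∑ k ∈ Finset.range (j + 1), ((N+1).choose k : ℝ) * ((N:ℝ) + 1 - 2 * k)
      = (N + 1) * (N.choose j : ℝ) := by
  intro j hj
  induction j with
  | zero => simp
  | succ j ih =>
    rw [Finset.sum_range_succ, ih (by omega)]
    have h1 : ((N+1).choose (j+1) : ℝ) = (N.choose j : ℝ) + (N.choose (j+1) : ℝ) := by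
      rw [Nat.choose_succ_succ]; push_cast; ring
    have h3 : (N.choose (j+1) : ℝ) * (j+1) = (N.choose j : ℝ) * ((N:ℝ) - j) := by
      have := Nat.choose_succ_right_eq N j
      have hcast : ((N.choose (j+1) * (j+1) : ℕ) : ℝ) = ((N.choose j * (N - j) : ℕ) : ℝ) := by
        exact_mod_cast congrArg Nat.cast this
      push_cast [Nat.cast_sub (show j ≤ N by omega)] at hcast
      linarith [hcast]
    push_cast
    linear_combination ((N:ℝ) - 1 - 2*j) * h1 - 2 * h3

lemma central_binom_lower : ∀ m : ℕ, 1 ≤ m →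
    (4 : ℝ) ^ m ≤ 2 * Real.sqrt m * (Nat.centralBinom m : ℝ) := by
  intro m hm
  induction m with
  | zero => omega
  | succ m ih =>
    rcases Nat.lt_or_ge m 1 with h1 | h1
    · interval_cases m
      simp [Nat.centralBinom]
      norm_num [Real.sqrt_one, Nat.choose]
    · have IH := ih h1
      have hrel : ((m:ℝ) + 1) * (Nat.centralBinom (m+1) : ℝ)
          = 2 * (2 * m + 1) * (Nat.centralBinom m : ℝ) := by
        exact_mod_cast congrArg Nat.cast (Nat.succ_mul_centralBinom_succ m)
      have hs1 : Real.sqrt m ^ 2 = m := Real.sq_sqrt (by positivity)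
      have hs2 : Real.sqrt (m+1) ^ 2 = (m:ℝ)+1 := Real.sq_sqrt (by positivity)
      have hs1n : 0 ≤ Real.sqrt m := Real.sqrt_nonneg _
      have hs2n : 0 ≤ Real.sqrt (m+1) := Real.sqrt_nonneg _
      have key : 2 * Real.sqrt m * ((m:ℝ)+1) ≤ (2*(m:ℝ)+1) * Real.sqrt (m+1) := by
        have := (pow_le_pow_iff_left₀ (a := 2 * Real.sqrt m * ((m:ℝ)+1))
          (b := (2*(m:ℝ)+1) * Real.sqrt (m+1)) (n := 2)
          (by positivity) (by positivity) (by norm_num)).mp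
        apply this
        have e1 : (2 * Real.sqrt m * ((m:ℝ)+1))^2 = 4*(m:ℝ)*((m:ℝ)+1)^2 := by
          rw [mul_pow, mul_pow, hs1]; ring
        have e2 : ((2*(m:ℝ)+1) * Real.sqrt ((m:ℝ)+1))^2 = (2*(m:ℝ)+1)^2*((m:ℝ)+1) := by
          rw [mul_pow, hs2]
        rw [e1, e2]
        nlinarith [sq_nonneg ((m:ℝ)+1)]
      have hB : (0:ℝ) ≤ (Nat.centralBinom m : ℝ) := by positivity
      have hmul : (0:ℝ) < (m:ℝ) + 1 := by positivity
      rw [← mul_le_mul_iff_of_pos_right hmul]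
      push_cast
      calc (4:ℝ)^(m+1) * ((m:ℝ)+1) = (4 * ((m:ℝ)+1)) * 4^m := by ring
        _ ≤ (4 * ((m:ℝ)+1)) * (2 * Real.sqrt m * (Nat.centralBinom m : ℝ)) := by
            apply mul_le_mul_of_nonneg_left IH (by positivity)
        _ = (2 * Real.sqrt m * ((m:ℝ)+1)) * (4 * (Nat.centralBinom m : ℝ)) := by ring
        _ ≤ ((2*(m:ℝ)+1) * Real.sqrt (m+1)) * (4 * (Nat.centralBinom m : ℝ)) := by
            apply mul_le_mul_of_nonneg_right key (by positivity)
        _ = 2 * Real.sqrt ((m:ℝ)+1) * (2 * (2*(m:ℝ)+1) * (Nat.centralBinom m : ℝ)) := by ring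
        _ = 2 * Real.sqrt ((m:ℝ)+1) * (((m:ℝ)+1) * (Nat.centralBinom (m+1) : ℝ)) := by
            rw [hrel]
        _ = 2 * Real.sqrt ((m:ℝ)+1) * (Nat.centralBinom (m+1) : ℝ) * ((m:ℝ)+1) := by ring

lemma reflect_sum (m : ℕ) :
    ∑ k ∈ Finset.range (2*m + 2), ((2*m+1).choose k : ℝ) * |((2*m+1 : ℕ) : ℝ) - 2 * k|
      = 2 * ((2*m+1 : ℕ) : ℝ) * (Nat.centralBinom m : ℝ) := by
  have hsplit : Finset.range (2*m+2) = Finset.Ico 0 (m+1) ∪ Finset.Ico (m+1) (2*m+2) := by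
    rw [Finset.Ico_union_Ico_eq_Ico (by omega) (by omega), Finset.range_eq_Ico]
  have hdisj : Disjoint (Finset.Ico 0 (m+1)) (Finset.Ico (m+1) (2*m+2)) :=
    Finset.Ico_disjoint_Ico_consecutive 0 (m+1) (2*m+2)
  rw [hsplit, Finset.sum_union hdisj]
  have hrefl : ∑ k ∈ Finset.Ico (m+1) (2*m+2), ((2*m+1).choose k : ℝ) * |((2*m+1 : ℕ) : ℝ) - 2 * k|
      = ∑ k ∈ Finset.Ico 0 (m+1), ((2*m+1).choose (2*m+1 - k) : ℝ) * |((2*m+1 : ℕ) : ℝ) - 2 * ((2*m+1 - k : ℕ) : ℝ)| := by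
    rw [Finset.sum_Ico_reflect (fun k => ((2*m+1).choose k : ℝ) * |((2*m+1 : ℕ):ℝ) - 2 * k|) 0
      (show m+1 ≤ 2*m+1+1 by omega)]
    congr 1
    rw [show 2*m+1+1-(m+1) = m+1 by omega, show 2*m+1+1-0 = 2*m+2 by omega]
  rw [hrefl]
  have hcongr : ∀ k ∈ Finset.Ico 0 (m+1),
      ((2*m+1).choose (2*m+1 - k) : ℝ) * |((2*m+1 : ℕ) : ℝ) - 2 * ((2*m+1 - k : ℕ) : ℝ)|
        = ((2*m+1).choose k : ℝ) * |((2*m+1 : ℕ) : ℝ) - 2 * k| := by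
    intro k hk
    simp only [Finset.mem_Ico] at hk
    have hkn : k ≤ 2*m+1 := by omega
    rw [Nat.choose_symm hkn, Nat.cast_sub hkn]
    congr 1
    rw [abs_sub_comm]
    congr 1
    push_cast
    ring
  rw [Finset.sum_congr rfl hcongr, ← two_mul]
  have habs : ∀ k ∈ Finset.Ico 0 (m+1),
      ((2*m+1).choose k : ℝ) * |((2*m+1 : ℕ) : ℝ) - 2 * k|
        = ((2*m+1).choose k : ℝ) * (((2*m:ℕ):ℝ) + 1 - 2 * k) := by
    intro k hk
    simp only [Finset.mem_Ico] at hk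
    have h1 : ((2*m+1:ℕ):ℝ) - 2*k = ((2*m:ℕ):ℝ) + 1 - 2*k := by push_cast; ring
    have h2 : (k:ℝ) ≤ m := by exact_mod_cast Nat.lt_succ_iff.mp hk.2
    rw [h1, abs_of_nonneg (by push_cast; linarith)]
  rw [Finset.sum_congr rfl habs, ← Finset.range_eq_Ico,
    telescope (N := 2*m) m (by omega), Nat.centralBinom]
  push_cast
  ring

lemma abs_wt_le_dist {n : ℕ} {y z : Fin n → Bool} (h : majority y ≠ majority z) :
    |(wt y : ℝ) - (n:ℝ)/2| ≤ (hammingDist y z : ℝ) := by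
  unfold majority at h
  simp only [ne_eq, decide_eq_decide] at h
  have hyz := wt_le_wt_add_dist y z
  have hzy := wt_le_wt_add_dist z y
  rw [hammingDist_comm z y] at hzy
  have hdn : (0:ℝ) ≤ (hammingDist y z : ℝ) := by positivity
  rw [show (Finset.univ.filter (fun i => y i = true)).card = wt y from rfl,
    show (Finset.univ.filter (fun i => z i = true)).card = wt z from rfl] at h
  by_cases h1 : n < 2 * wt y
  · have h2 : ¬ n < 2 * wt z := fun h2 => h (iff_of_true h1 h2)
    have c1 : (n:ℝ) < 2 * wt y := by exact_mod_cast h1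
    have c2 : 2 * (wt z : ℝ) ≤ n := by exact_mod_cast Nat.not_lt.mp h2
    have c3 : (wt y : ℝ) ≤ wt z + hammingDist y z := by exact_mod_cast hyz
    rw [abs_le]
    constructor <;> linarith
  · have h2 : n < 2 * wt z := by
      by_contra h2
      exact h (iff_of_false h1 h2)
    have c1 : 2 * (wt y : ℝ) ≤ n := by exact_mod_cast Nat.not_lt.mp h1
    have c2 : (n:ℝ) < 2 * wt z := by exact_mod_cast h2
    have c3 : (wt z : ℝ) ≤ wt y + hammingDist y z := by exact_mod_cast hzy
    rw [abs_le]
    constructor <;> linarith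

end XorMajAux

open XorMajAux in
/-- There is an absolute constant `c > 0` such that for every odd `n`, every bijection
`φ` from `XOR` to `Majority`, and every direction `i`, the average stretch of `φ` in
direction `i` is at least `c·√n`. -/
theorem xor_to_majority_directional_stretch :
    ∃ c : ℝ, 0 < c ∧ ∀ n : ℕ, Odd n →
      ∀ φ : (Fin n → Bool) → (Fin n → Bool), Function.Bijective φ →
      (∀ z : Fin n → Bool, xorFun z = majority (φ z)) →
      ∀ i : Fin n,
        c * Real.sqrt n ≤
          (∑ x : Fin n → Bool,
            (hammingDist (φ x) (φ (Function.update x i (!(x i)))) : ℝ)) / 2 ^ n := by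
  refine ⟨1/4, by norm_num, ?_⟩
  intro n hodd φ hbij hφ i
  obtain ⟨m, hm⟩ := hodd
  have hmaj : ∀ x : Fin n → Bool,
      majority (φ x) ≠ majority (φ (Function.update x i (!(x i)))) := by
    intro x
    rw [← hφ x, ← hφ (Function.update x i (!(x i)))]
    exact fun hc => xorFun_update_ne x i hc.symm
  -- pointwise lower bound
  have hptw : ∀ x : Fin n → Bool,
      |(wt (φ x) : ℝ) - (n:ℝ)/2| ≤
        (hammingDist (φ x) (φ (Function.update x i (!(x i)))) : ℝ) :=
    fun x => abs_wt_le_dist (hmaj x)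
  have hsum1 : ∑ x : Fin n → Bool, |(wt (φ x) : ℝ) - (n:ℝ)/2|
      ≤ ∑ x : Fin n → Bool,
        (hammingDist (φ x) (φ (Function.update x i (!(x i)))) : ℝ) :=
    Finset.sum_le_sum fun x _ => hptw x
  have hsum2 : ∑ x : Fin n → Bool, |(wt (φ x) : ℝ) - (n:ℝ)/2|
      = ∑ y : Fin n → Bool, |(wt y : ℝ) - (n:ℝ)/2| :=
    hbij.sum_comp (fun y => |(wt y : ℝ) - (n:ℝ)/2|)
  have hsum3 : ∑ y : Fin n → Bool, |(wt y : ℝ) - (n:ℝ)/2|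
      = ∑ k ∈ Finset.range (n+1), (n.choose k : ℝ) * |(k : ℝ) - (n:ℝ)/2| :=
    sum_wt_eq (fun k => |(k : ℝ) - (n:ℝ)/2|)
  have habs : ∀ k : ℕ, |(k : ℝ) - (n:ℝ)/2| = |((n:ℕ):ℝ) - 2*k| / 2 := by
    intro k
    rw [show ((n:ℕ):ℝ) - 2*k = 2 * ((n:ℝ)/2 - k) by push_cast; ring, abs_mul,
      abs_of_nonneg (by norm_num : (0:ℝ) ≤ 2), abs_sub_comm]
    ring
  have hsum4 : ∑ k ∈ Finset.range (n+1), (n.choose k : ℝ) * |(k : ℝ) - (n:ℝ)/2|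
      = (n : ℝ) * (Nat.centralBinom m : ℝ) := by
    subst hm
    rw [show 2*m+1+1 = 2*m+2 from rfl]
    calc ∑ k ∈ Finset.range (2*m+2), ((2*m+1).choose k : ℝ) * |(k : ℝ) - ((2*m+1:ℕ):ℝ)/2|
        = ∑ k ∈ Finset.range (2*m+2), ((2*m+1).choose k : ℝ) * (|((2*m+1:ℕ):ℝ) - 2*k| / 2) := by
          refine Finset.sum_congr rfl fun k _ => ?_
          rw [habs k]
      _ = (∑ k ∈ Finset.range (2*m+2), ((2*m+1).choose k : ℝ) * |((2*m+1:ℕ):ℝ) - 2*k|) / 2 := by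
          rw [Finset.sum_div]
          exact Finset.sum_congr rfl fun k _ => by ring
      _ = ((2*m+1:ℕ):ℝ) * (Nat.centralBinom m : ℝ) := by rw [reflect_sum m]; ring
  have hS : (n : ℝ) * (Nat.centralBinom m : ℝ)
      ≤ ∑ x : Fin n → Bool,
        (hammingDist (φ x) (φ (Function.update x i (!(x i)))) : ℝ) := by
    rw [← hsum4, ← hsum3, ← hsum2]; exact hsum1
  rw [le_div_iff₀ (by positivity : (0:ℝ) < 2^n)]
  -- goal : 1/4 * √n * 2^n ≤ ∑ ...
  rcases Nat.eq_zero_or_pos m with hm0 | hm1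
  · -- n = 1
    subst hm0
    norm_num at hm
    subst hm
    have hone : ∀ x : Fin 1 → Bool,
        (1:ℝ) ≤ (hammingDist (φ x) (φ (Function.update x i (!(x i)))) : ℝ) := by
      intro x
      have hne : φ x ≠ φ (Function.update x i (!(x i))) := by
        intro hc
        exact hmaj x (by rw [hc])
      have : 1 ≤ hammingDist (φ x) (φ (Function.update x i (!(x i)))) :=
        Nat.one_le_iff_ne_zero.mpr (hammingDist_ne_zero.mpr hne)
      exact_mod_cast this
    have h2 : (2:ℝ) ≤ ∑ x : Fin 1 → Bool,
        (hammingDist (φ x) (φ (Function.update x i (!(x i)))) : ℝ) := by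
      calc (2:ℝ) = ∑ _x : Fin 1 → Bool, (1:ℝ) := by simp [Finset.card_univ]
        _ ≤ _ := Finset.sum_le_sum fun x _ => hone x
    calc 1/4 * Real.sqrt ((1:ℕ):ℝ) * 2^(1:ℕ) ≤ 2 := by
          rw [Nat.cast_one, Real.sqrt_one]; norm_num
      _ ≤ _ := h2
  · -- m ≥ 1
    have hcb := central_binom_lower m hm1
    have hsq : Real.sqrt n * Real.sqrt m ≤ (n:ℝ) := by
      rw [← Real.sqrt_mul (by positivity) (m:ℝ)]
      have h1 : (n:ℝ) * m ≤ (n:ℝ) * n := by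
        have : (m:ℝ) ≤ n := by exact_mod_cast (by omega : m ≤ n)
        nlinarith [show (0:ℝ) ≤ (n:ℝ) by positivity]
      calc Real.sqrt ((n:ℝ) * m) ≤ Real.sqrt ((n:ℝ) * n) := Real.sqrt_le_sqrt h1
        _ = n := by rw [Real.sqrt_mul_self (by positivity)]
    have hpow : (2:ℝ)^n = 2 * 4^m := by
      subst hm
      rw [pow_succ, pow_mul]
      norm_num
      ring
    have hBn : (0:ℝ) ≤ (Nat.centralBinom m : ℝ) := by positivity
    have hsn : (0:ℝ) ≤ Real.sqrt n := Real.sqrt_nonneg _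
    calc 1/4 * Real.sqrt n * 2^n = 1/2 * Real.sqrt n * 4^m := by rw [hpow]; ring
      _ ≤ 1/2 * Real.sqrt n * (2 * Real.sqrt m * (Nat.centralBinom m : ℝ)) := by
          apply mul_le_mul_of_nonneg_left hcb (by positivity)
      _ = (Real.sqrt n * Real.sqrt m) * (Nat.centralBinom m : ℝ) := by ring
      _ ≤ (n:ℝ) * (Nat.centralBinom m : ℝ) := mul_le_mul_of_nonneg_right hsq hBn
      _ ≤ _ := hS
end
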